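/- arXiv:2604.12499 — 13 statements merged into one kernel-verified Lean document; each statement's English description precedes it below -/
import Mathlib

section
/- The q²−1 points Q_i = (ω^i·u, ω^{(q+1)i}·v), i = 1,…,q²−1, are pairwise distinct, and every Q_i = (x,y) lies on both the Hermitian curve and the curve 𝒞_τ, i.e. it satisfies y^q + y = x^{q+1} and y = τ·x^{q+1}. -/
private lemma mod_inj_aux (n i j : ℕ) (hi : 1 ≤ i) (hi' : i ≤ n) (hj : 1 ≤ j)
    (hj' : j ≤ n) (h : i % n = j % n) : i = j := by
  rcases eq_or_lt_of_le hi' with rfl | hi2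
  · rcases eq_or_lt_of_le hj' with rfl | hj2
    · rfl
    · rw [Nat.mod_self, Nat.mod_eq_of_lt hj2] at h; omega
  · rcases eq_or_lt_of_le hj' with rfl | hj2
    · rw [Nat.mod_self, Nat.mod_eq_of_lt hi2] at h; omega
    · rwa [Nat.mod_eq_of_lt hi2, Nat.mod_eq_of_lt hj2] at h

/-- The `q² − 1` points `Q_i = (ω^i·u, ω^{(q+1)i}·v)`, `i = 1, …, q²−1`, are
pairwise distinct, and every `Q_i = (x, y)` lies on both the Hermitian curve `Y^q + Y = X^{q+1}`
and the curve `𝒞_τ : Y = τ·X^{q+1}`. -/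
theorem stmt_0 (q : ℕ) (hq : IsPrimePow q)
    (F : Type*) [Field F] [Fintype F] (hF : Fintype.card F = q ^ 2)
    (ω : Fˣ) (hω : ∀ x : Fˣ, x ∈ Subgroup.zpowers ω)
    (u v : F) (hu : u ≠ 0) (huv : v ^ q + v = u ^ (q + 1))
    (τ : F) (hτ : τ = v * (u ^ (q + 1))⁻¹) :
    (∀ i ∈ Finset.Icc 1 (q ^ 2 - 1), ∀ j ∈ Finset.Icc 1 (q ^ 2 - 1),
        (((ω : F) ^ i * u, (ω : F) ^ ((q + 1) * i) * v) : F × F) =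
          ((ω : F) ^ j * u, (ω : F) ^ ((q + 1) * j) * v) → i = j) ∧
    ∀ i ∈ Finset.Icc 1 (q ^ 2 - 1),
      ((ω : F) ^ ((q + 1) * i) * v) ^ q + (ω : F) ^ ((q + 1) * i) * v
          = ((ω : F) ^ i * u) ^ (q + 1) ∧
        (ω : F) ^ ((q + 1) * i) * v = τ * ((ω : F) ^ i * u) ^ (q + 1) := by
  classical
  have hq2 : 2 ≤ q := hq.two_le
  have hq21 : 1 ≤ q ^ 2 := Nat.one_le_pow _ _ (by omega)
  have hcard : Fintype.card Fˣ = q ^ 2 - 1 := by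
    rw [Fintype.card_units, hF]
  have hord : orderOf ω = q ^ 2 - 1 := by
    rw [orderOf_eq_card_of_forall_mem_zpowers hω, Nat.card_eq_fintype_card, hcard]
  have hone : (ω : F) ^ (q ^ 2 - 1) = 1 := by
    have h := pow_orderOf_eq_one ω
    rw [hord] at h
    simpa using congrArg Units.val h
  constructor
  · intro i hi j hj h
    simp only [Finset.mem_Icc] at hi hj
    have h1 : (ω : F) ^ i * u = (ω : F) ^ j * u := congrArg Prod.fst h
    have h2 : (ω : F) ^ i = (ω : F) ^ j := mul_right_cancel₀ hu h1
    have h3 : ω ^ i = ω ^ j := by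
      apply Units.ext
      push_cast
      exact h2
    rw [pow_eq_pow_iff_modEq, hord] at h3
    exact mod_inj_aux (q ^ 2 - 1) i j hi.1 hi.2 hj.1 hj.2 h3
  · intro i hi
    have key : (ω : F) ^ ((q + 1) * i * q) = (ω : F) ^ ((q + 1) * i) := by
      have e : (q + 1) * i * q = (q + 1) * i + (q ^ 2 - 1) * i := by
        zify [hq21]; ring
      have h5 : (ω : F) ^ ((q ^ 2 - 1) * i) = 1 := by
        rw [pow_mul, hone, one_pow]
      rw [e, pow_add, h5, mul_one]
    have h1 : ((ω : F) ^ ((q + 1) * i) * v) ^ q = (ω : F) ^ ((q + 1) * i) * v ^ q := by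
      rw [mul_pow, ← pow_mul, key]
    have hrhs : ((ω : F) ^ i * u) ^ (q + 1) = (ω : F) ^ ((q + 1) * i) * u ^ (q + 1) := by
      rw [mul_pow, ← pow_mul, mul_comm i (q + 1)]
    constructor
    · rw [h1, hrhs]
      linear_combination ((ω : F) ^ ((q + 1) * i)) * huv
    · have hu' : u ^ (q + 1) ≠ 0 := pow_ne_zero _ hu
      rw [hτ, hrhs]
      field_simp
end

section
/- Let K be an algebraic closure of 𝔽_{q²}. Then the set of points (x,y) ∈ K² with x ≠ 0 satisfying both y^q + y = x^{q+1} and y = τ·x^{q+1} is exactly the set {Q_1, …, Q_{q²−1}}; in particular, all such common points are 𝔽_{q²}-rational and there are exactly q²−1 of them. -/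
/-- Over an algebraic closure `K` of `𝔽_{q²}`, the common points `(x, y)` with
`x ≠ 0` of the Hermitian curve `Y^q + Y = X^{q+1}` and of `𝒞_τ : Y = τ·X^{q+1}` are exactly
the points `Q_1, …, Q_{q²−1}`; in particular all of them are `𝔽_{q²}`-rational and there are
exactly `q² − 1` of them. -/
theorem stmt_1 (q : ℕ) (hq : IsPrimePow q)
    (F : Type*) [Field F] [Fintype F] (hF : Fintype.card F = q ^ 2)
    (ω : Fˣ) (hω : ∀ x : Fˣ, x ∈ Subgroup.zpowers ω)
    (u v : F) (hu : u ≠ 0) (huv : v ^ q + v = u ^ (q + 1))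
    (τ : F) (hτ : τ = v * (u ^ (q + 1))⁻¹)
    (K : Type*) [Field K] [Algebra F K] [IsAlgClosure F K] :
    {P : K × K | P.1 ≠ 0 ∧ P.2 ^ q + P.2 = P.1 ^ (q + 1) ∧
        P.2 = algebraMap F K τ * P.1 ^ (q + 1)} =
      (fun i : ℕ =>
          ((algebraMap F K ((ω : F) ^ i * u),
            algebraMap F K ((ω : F) ^ ((q + 1) * i) * v)) : K × K)) ''
        Set.Icc 1 (q ^ 2 - 1) ∧
    Set.ncard {P : K × K | P.1 ≠ 0 ∧ P.2 ^ q + P.2 = P.1 ^ (q + 1) ∧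
        P.2 = algebraMap F K τ * P.1 ^ (q + 1)} = q ^ 2 - 1 := by
  classical
  set φ := algebraMap F K with hφ
  have hφinj : Function.Injective φ := (algebraMap F K).injective
  have hq2 : 2 ≤ q := hq.two_le
  set n : ℕ := q ^ 2 - 1 with hn
  have hq2' : 2 ≤ q * q := by nlinarith
  have hsq : q ^ 2 = q * q := sq q
  have hnpos : 0 < n := by omega
  have hexp : (q + 1) * q = n + (q + 1) := by
    have : (q + 1) * q = q * q + q := by ring
    omega
  -- order of ω
  have hcardU : Nat.card Fˣ = n := by
    rw [Nat.card_eq_fintype_card, Fintype.card_units, hF]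
  have hord : orderOf ω = n := by
    rw [← hcardU]; exact orderOf_eq_card_of_forall_mem_zpowers hω
  -- nonvanishing facts
  have huu : u ^ (q + 1) ≠ 0 := pow_ne_zero _ hu
  have hv : v ≠ 0 := by
    intro h
    rw [h, zero_pow (by omega : q ≠ 0), add_zero] at huv
    exact huu huv.symm
  have hvq : v ^ q = u ^ (q + 1) - v := eq_sub_of_add_eq huv
  -- every nonzero element of F has a^n = 1
  have hpow1 : ∀ a : F, a ≠ 0 → a ^ n = 1 := by
    intro a ha
    have := FiniteField.pow_card_sub_one_eq_one a ha
    rwa [hF] at this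
  -- key Frobenius-type fact: (b^(q+1))^q = b^(q+1) for b ≠ 0
  have hfrob : ∀ b : F, b ≠ 0 → (b ^ (q + 1)) ^ q = b ^ (q + 1) := by
    intro b hb
    rw [← pow_mul, hexp, pow_add, hpow1 b hb, one_mul]
  -- every n-th root of unity in K comes from Fˣ
  have hroot : ∀ z : K, z ^ n = 1 → ∃ a : Fˣ, φ a = z := by
    intro z hz
    set A : Finset K := Finset.univ.image (fun a : Fˣ => φ a) with hA
    have hAinj : Function.Injective (fun a : Fˣ => φ a) :=
      fun a b h => Units.ext (hφinj h)
    have hAcard : A.card = n := by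
      rw [hA, Finset.card_image_of_injective _ hAinj, Finset.card_univ,
        ← Nat.card_eq_fintype_card, hcardU]
    set T : Finset K := (Polynomial.nthRoots n (1 : K)).toFinset with hT
    have hAT : A ⊆ T := by
      intro w hw
      rw [hA, Finset.mem_image] at hw
      obtain ⟨a, _, rfl⟩ := hw
      rw [hT, Multiset.mem_toFinset, Polynomial.mem_nthRoots hnpos,
        ← map_pow, hpow1 (a : F) a.ne_zero, map_one]
    have hTcard : T.card ≤ A.card := by
      rw [hAcard]
      exact le_trans (Multiset.toFinset_card_le _) (Polynomial.card_nthRoots n 1)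
    have hTA : A = T := Finset.eq_of_subset_of_card_le hAT hTcard
    have hzT : z ∈ T := by
      rw [hT, Multiset.mem_toFinset, Polynomial.mem_nthRoots hnpos]; exact hz
    rw [← hTA, hA, Finset.mem_image] at hzT
    obtain ⟨a, _, ha⟩ := hzT
    exact ⟨a, ha⟩
  -- every unit is ω^i for some i in Icc 1 n
  have hgen : ∀ a : Fˣ, ∃ i ∈ Set.Icc 1 n, ω ^ i = a := by
    intro a
    obtain ⟨m, hm0⟩ := (mem_powers_iff_mem_zpowers).mpr (hω a)
    have hm : ω ^ m = a := hm0
    have hmod : ω ^ (m % n) = ω ^ m := by rw [← hord]; exact pow_mod_orderOf ω m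
    by_cases h0 : m % n = 0
    · refine ⟨n, Set.mem_Icc.mpr ⟨hnpos, le_refl _⟩, ?_⟩
      have ha1 : a = 1 := by rw [← hm, ← hmod, h0, pow_zero]
      rw [ha1, ← hord]; exact pow_orderOf_eq_one ω
    · exact ⟨m % n, Set.mem_Icc.mpr ⟨Nat.one_le_iff_ne_zero.mpr h0,
        le_of_lt (Nat.mod_lt _ hnpos)⟩, by rw [hmod, hm]⟩
  have hτv : τ * u ^ (q + 1) = v := by
    rw [hτ]; field_simp
  -- the Q_i identity for the second coordinate
  have hQ : ∀ i : ℕ, τ * ((ω : F) ^ i * u) ^ (q + 1) = (ω : F) ^ ((q + 1) * i) * v := by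
    intro i
    rw [hτ, mul_pow, ← pow_mul, mul_comm i (q + 1)]
    field_simp
  -- the Hermitian identity for the second coordinate
  have hH : ∀ i : ℕ, ((ω : F) ^ ((q + 1) * i) * v) ^ q + (ω : F) ^ ((q + 1) * i) * v
      = ((ω : F) ^ i * u) ^ (q + 1) := by
    intro i
    have hc : ((ω : F) ^ i) ≠ 0 := pow_ne_zero _ (Units.ne_zero ω)
    have h1 : (ω : F) ^ ((q + 1) * i) = ((ω : F) ^ i) ^ (q + 1) := by
      rw [← pow_mul, mul_comm]
    rw [h1, mul_pow, mul_pow, hfrob _ hc, ← mul_add, huv]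
  -- the set equality
  have hset : {P : K × K | P.1 ≠ 0 ∧ P.2 ^ q + P.2 = P.1 ^ (q + 1) ∧
        P.2 = algebraMap F K τ * P.1 ^ (q + 1)} =
      (fun i : ℕ =>
          ((algebraMap F K ((ω : F) ^ i * u),
            algebraMap F K ((ω : F) ^ ((q + 1) * i) * v)) : K × K)) ''
        Set.Icc 1 (q ^ 2 - 1) := by
    ext ⟨x, y⟩
    simp only [Set.mem_setOf_eq, Set.mem_image, Prod.mk.injEq]
    constructor
    · rintro ⟨hx, h1, h2⟩
      -- derive x^n = (φ u)^n
      set a : K := φ (u ^ (q + 1)) with ha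
      set c : K := φ τ with hc
      set t : K := x ^ (q + 1) with ht
      have hun : (φ u) ≠ 0 := fun h => hu (hφinj (by rw [h, map_zero]))
      have hvK : (φ v) ≠ 0 := fun h => hv (hφinj (by rw [h, map_zero]))
      have hca : c * a = φ v := by rw [hc, ha, ← map_mul, hτv]
      have hcq : c ^ q * a ^ q = a - c * a := by
        rw [← mul_pow, hca, ← map_pow, hvq, map_sub, ← hca, ha]
      have eK : (c * t) ^ q + c * t = t := by
        rw [← h2]; exact h1
      have key : (a - c * a) * (a * t ^ q - t * a ^ q) = 0 := by
        linear_combination (a ^ (q + 1)) * eK - (t ^ q * a) * hcq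
      have hACne : a - c * a ≠ 0 := by
        rw [← hcq, ← mul_pow, hca]
        exact pow_ne_zero _ hvK
      have key2 : a * t ^ q = t * a ^ q :=
        sub_eq_zero.mp ((mul_eq_zero.mp key).resolve_left hACne)
      have key3 : (φ u) ^ (q + 1) * x ^ ((q + 1) * q) = x ^ (q + 1) * (φ u) ^ ((q + 1) * q) := by
        rw [pow_mul x, pow_mul (φ u), ← ht, ← map_pow, ← ha]
        exact key2
      have key4 : x ^ n = (φ u) ^ n := by
        rw [hexp, pow_add, pow_add] at key3
        have hne : x ^ (q + 1) * (φ u) ^ (q + 1) ≠ 0 :=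
          mul_ne_zero (pow_ne_zero _ hx) (pow_ne_zero _ hun)
        apply mul_right_cancel₀ hne
        linear_combination key3
      have hz : (x * (φ u)⁻¹) ^ n = 1 := by
        rw [mul_pow, key4, inv_pow, mul_inv_cancel₀ (pow_ne_zero _ hun)]
      obtain ⟨a0, ha0⟩ := hroot _ hz
      obtain ⟨i, hi, hωi⟩ := hgen a0
      have hxi : x = φ ((ω : F) ^ i * u) := by
        have hωF : φ ((ω : F) ^ i) = x * (φ u)⁻¹ := by
          rw [← ha0, ← hωi]; norm_cast
        rw [map_mul, hωF]
        field_simp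
      refine ⟨i, hi, hxi.symm, ?_⟩
      have htφ : t = φ ((ω : F) ^ i * u) ^ (q + 1) := by rw [ht, hxi]
      rw [h2, ← hQ i, map_mul, map_pow, ← htφ]
    · rintro ⟨i, hi, hx, hy⟩
      have hx0 : (ω : F) ^ i * u ≠ 0 := mul_ne_zero (pow_ne_zero _ (Units.ne_zero ω)) hu
      refine ⟨?_, ?_, ?_⟩
      · rw [← hx]
        exact fun h => hx0 (hφinj (by rw [h, map_zero]))
      · rw [← hx, ← hy, ← map_pow, ← map_pow, ← map_add, hH i]
      · rw [← hx, ← hy, ← map_pow, ← map_mul, hQ i]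
  refine ⟨hset, ?_⟩
  rw [hset]
  have hinj : Set.InjOn (fun i : ℕ =>
      ((algebraMap F K ((ω : F) ^ i * u),
        algebraMap F K ((ω : F) ^ ((q + 1) * i) * v)) : K × K)) (Set.Icc 1 (q ^ 2 - 1)) := by
    intro i hi j hj hij
    have h1 : φ ((ω : F) ^ i * u) = φ ((ω : F) ^ j * u) := congrArg Prod.fst hij
    have h2 : (ω : F) ^ i = (ω : F) ^ j :=
      mul_right_cancel₀ hu (hφinj h1)
    have h3 : ω ^ i = ω ^ j := Units.ext (by push_cast; exact h2)
    have h4 : i % n = j % n := by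
      have := pow_eq_pow_iff_modEq.mp h3
      rwa [hord] at this
    obtain ⟨hi1, hi2⟩ := Set.mem_Icc.mp hi
    obtain ⟨hj1, hj2⟩ := Set.mem_Icc.mp hj
    have hi2' : i ≤ n := by omega
    have hj2' : j ≤ n := by omega
    rcases Nat.lt_or_ge i n with hilt | hige
    · rcases Nat.lt_or_ge j n with hjlt | hjge
      · rwa [Nat.mod_eq_of_lt hilt, Nat.mod_eq_of_lt hjlt] at h4
      · have hje : j = n := le_antisymm hj2' hjge
        rw [Nat.mod_eq_of_lt hilt, hje, Nat.mod_self] at h4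
        omega
    · have hie : i = n := le_antisymm hi2' hige
      rcases Nat.lt_or_ge j n with hjlt | hjge
      · rw [Nat.mod_eq_of_lt hjlt, hie, Nat.mod_self] at h4
        omega
      · have hje : j = n := le_antisymm hj2' hjge
        rw [hie, hje]
  rw [Set.ncard_image_of_injOn hinj, ← Finset.coe_Icc, Set.ncard_coe_finset, Nat.card_Icc]
  omega
end

section
/- Let 2 ≤ m ≤ q−1. The 𝔽_{q²}-linear evaluation map Φ, sending a pair (g, ε) — where g ∈ 𝔽_{q²}[X,Y] has total degree at most m−2 and ε ∈ 𝔽_{q²} — to the vector in 𝔽_{q²}^{q²−1} whose j-th coordinate (j = 1,…,q²−1) is (η_j·g(ξ_j, η_j) + ε·ξ_j^m)·ξ_j^{−m} with (ξ_j, η_j) = Q_j, is injective. Consequently its image, the functional AG code C_𝓛(𝙳,𝙶), is an 𝔽_{q²}-linear code of length q²−1 and dimension m(m−1)/2 + 1. -/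
/-- The evaluation vector of the function `f = (y·g(x,y) + ε·x^m)/x^m` at the `q² − 1`
points `Q_j = (ω^j·u, ω^{(q+1)j}·v)`, `j = 1, …, q²−1`. -/
noncomputable def evalVec (q m : ℕ) {F : Type*} [Field F] (ω u v : F)
    (g : MvPolynomial (Fin 2) F) (ε : F) : Fin (q ^ 2 - 1) → F :=
  fun j =>
    (ω ^ ((q + 1) * (j.val + 1)) * v *
        MvPolynomial.eval ![ω ^ (j.val + 1) * u, ω ^ ((q + 1) * (j.val + 1)) * v] g +
      ε * (ω ^ (j.val + 1) * u) ^ m) * ((ω ^ (j.val + 1) * u) ^ m)⁻¹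



open Polynomial in
private lemma keyA (q : ℕ) (hq3 : 3 ≤ q) {F : Type*} [Field F] [Fintype F]
    (hF : Fintype.card F = q ^ 2) (u v : F) (hu : u ≠ 0) (hv : v ≠ 0)
    (m : ℕ) (hm : 2 ≤ m) (hm' : m ≤ q - 1)
    (h : MvPolynomial (Fin 2) F) (hh : h.totalDegree ≤ m - 2) (δ : F)
    (H : ∀ s : F, s ≠ 0 →
      s ^ (q + 1) * v * MvPolynomial.eval ![s * u, s ^ (q + 1) * v] h + δ * (s * u) ^ m = 0) :
    h = 0 ∧ δ = 0 := by
  classical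
  set e : (Fin 2 →₀ ℕ) → ℕ := fun d => d 0 + (q + 1) * d 1 with he
  have hsum : ∀ d ∈ h.support, d 0 + d 1 ≤ m - 2 := by
    intro d hd
    have h1 := MvPolynomial.le_totalDegree hd
    have h2 : (d.sum fun _ e => e) = d 0 + d 1 := by
      rw [Finsupp.sum_fintype _ _ (fun _ => rfl), Fin.sum_univ_two]
    omega
  set Q : F[X] := (∑ d ∈ h.support,
      C (MvPolynomial.coeff d h * u ^ d 0 * v ^ (d 1 + 1)) * X ^ (e d + (q + 1))) +
      C (δ * u ^ m) * X ^ m with hQdef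
  have heval : ∀ s : F, Q.eval s =
      s ^ (q + 1) * v * MvPolynomial.eval ![s * u, s ^ (q + 1) * v] h + δ * (s * u) ^ m := by
    intro s
    rw [MvPolynomial.eval_eq']
    simp only [hQdef, eval_add, eval_mul, eval_pow, eval_C, eval_X, eval_finset_sum]
    rw [Finset.mul_sum]
    congr 1
    · apply Finset.sum_congr rfl
      intro d _
      have hp : (∏ i : Fin 2, (![s * u, s ^ (q + 1) * v] : Fin 2 → F) i ^ d i)
          = (s * u) ^ d 0 * (s ^ (q + 1) * v) ^ d 1 := by
        rw [Fin.prod_univ_two]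
        simp
      rw [hp, show e d + (q + 1) = d 0 + (q + 1) * d 1 + (q + 1) from rfl,
        pow_add s (d 0 + (q + 1) * d 1) (q + 1), pow_add s (d 0) ((q + 1) * d 1),
        pow_mul s (q + 1) (d 1)]
      ring
    · ring
  have hQ0 : ∀ s : F, Q.eval s = 0 := by
    intro s
    rcases eq_or_ne s 0 with rfl | hs
    · rw [heval]
      have h1 : q + 1 ≠ 0 := by omega
      have h2 : m ≠ 0 := by omega
      simp [zero_pow, h1, h2]
    · rw [heval]; exact H s hs
  have hdeg : Q.natDegree < Fintype.card F := by
    rw [hF]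
    have hb : (q + 1) * (m - 1) < q ^ 2 := by
      have h1 : m - 1 ≤ q - 2 := by omega
      calc (q + 1) * (m - 1) ≤ (q + 1) * (q - 2) := Nat.mul_le_mul_left _ h1
        _ < q ^ 2 := by
            obtain ⟨k, rfl⟩ : ∃ k, q = k + 3 := ⟨q - 3, by omega⟩
            have h2 : k + 3 - 2 = k + 1 := by omega
            rw [h2]; nlinarith
    have hQle : Q.natDegree ≤ (q + 1) * (m - 1) := by
      apply (Polynomial.natDegree_add_le _ _).trans
      apply max_le
      · apply Polynomial.natDegree_sum_le_of_forall_le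
        intro d hd
        apply (Polynomial.natDegree_C_mul_le _ _).trans
        rw [Polynomial.natDegree_X_pow]
        have hdd := hsum d hd
        have h3 : 0 < q + 1 := by omega
        calc e d + (q + 1) = d 0 + (q + 1) * d 1 + (q + 1) := rfl
          _ ≤ (q + 1) * d 0 + (q + 1) * d 1 + (q + 1) := by
              have := Nat.le_mul_of_pos_left (d 0) h3; omega
          _ = (q + 1) * (d 0 + d 1 + 1) := by ring
          _ ≤ (q + 1) * (m - 1) := Nat.mul_le_mul_left _ (by omega)
      · apply (Polynomial.natDegree_C_mul_le _ _).trans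
        rw [Polynomial.natDegree_X_pow]
        have : 1 ≤ m - 1 := by omega
        calc m ≤ q + 1 := by omega
          _ = (q + 1) * 1 := by ring
          _ ≤ (q + 1) * (m - 1) := Nat.mul_le_mul_left _ this
    omega
  have hQ : Q = 0 :=
    Polynomial.eq_zero_of_natDegree_lt_card_of_eval_eq_zero Q Function.injective_id
      (fun x => hQ0 x) hdeg
  have hmlt : m < q + 1 := by omega
  have hδ : δ = 0 := by
    have hcm : Q.coeff m = δ * u ^ m := by
      simp only [hQdef, coeff_add, finset_sum_coeff, coeff_C_mul, coeff_X_pow]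
      rw [Finset.sum_eq_zero (fun d _ => by
        have h1 : q + 1 ≤ e d + (q + 1) := Nat.le_add_left _ _
        rw [if_neg (show ¬ m = e d + (q + 1) by omega), mul_zero]), zero_add]
      simp
    rw [hQ, Polynomial.coeff_zero] at hcm
    have := pow_ne_zero m hu
    rcases mul_eq_zero.mp hcm.symm with h' | h'
    · exact h'
    · exact absurd h' this
  refine ⟨?_, hδ⟩
  have hedinj : ∀ d ∈ h.support, ∀ d₀ ∈ h.support, e d = e d₀ → d = d₀ := by
    intro d hd d₀ hd₀ hcon
    have hb1 : d 0 < q + 1 := by have := hsum d hd; omega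
    have hb2 : d₀ 0 < q + 1 := by have := hsum d₀ hd₀; omega
    have h0 : d 0 = d₀ 0 := by
      have := congrArg (· % (q + 1)) hcon
      simpa [he, Nat.add_mul_mod_self_left, Nat.mod_eq_of_lt hb1,
        Nat.mod_eq_of_lt hb2] using this
    have h1 : d 1 = d₀ 1 := by
      have hcon' : (q + 1) * d 1 = (q + 1) * d₀ 1 := by
        simp only [he] at hcon; omega
      exact Nat.eq_of_mul_eq_mul_left (by omega) hcon'
    ext i
    fin_cases i
    · exact h0
    · exact h1
  have key : ∀ d₀, MvPolynomial.coeff d₀ h = 0 := by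
    intro d₀
    by_cases hd₀ : d₀ ∈ h.support
    · have h1 : q + 1 ≤ e d₀ + (q + 1) := Nat.le_add_left _ _
      have hc : Q.coeff (e d₀ + (q + 1)) =
          MvPolynomial.coeff d₀ h * u ^ d₀ 0 * v ^ (d₀ 1 + 1) := by
        simp only [hQdef, coeff_add, finset_sum_coeff, coeff_C_mul, coeff_X_pow]
        rw [Finset.sum_eq_single_of_mem d₀ hd₀ (fun d hd hne => by
            rw [if_neg (fun hcon => hne (hedinj d hd d₀ hd₀ (by omega))), mul_zero]),
          if_neg (show ¬ e d₀ + (q + 1) = m by omega), mul_zero, add_zero, if_pos rfl, mul_one]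
      rw [hQ, Polynomial.coeff_zero] at hc
      have hx1 := pow_ne_zero (d₀ 0) hu
      have hx2 := pow_ne_zero (d₀ 1 + 1) hv
      rcases mul_eq_zero.mp hc.symm with h' | h'
      · rcases mul_eq_zero.mp h' with h'' | h''
        · exact h''
        · exact absurd h'' hx1
      · exact absurd h' hx2
    · exact MvPolynomial.notMem_support_iff.mp hd₀
  ext d
  simp [key]

private lemma keyGen (q : ℕ) (hq3 : 3 ≤ q) {F : Type*} [Field F] [Fintype F]
    (hF : Fintype.card F = q ^ 2) (ω : Fˣ) (hω : ∀ x : Fˣ, x ∈ Subgroup.zpowers ω)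
    (s : F) (hs : s ≠ 0) : ∃ j : Fin (q ^ 2 - 1), (ω : F) ^ (j.val + 1) = s := by
  have hN : Nat.card Fˣ = q ^ 2 - 1 := by
    rw [Nat.card_units, Nat.card_eq_fintype_card, hF]
  have hNpos : 0 < q ^ 2 - 1 := by
    have h9 : 9 ≤ q ^ 2 := by nlinarith
    omega
  obtain ⟨n, hn⟩ : ∃ n : ℕ, ω ^ n = Units.mk0 s hs := by
    have := hω (Units.mk0 s hs)
    rwa [← mem_powers_iff_mem_zpowers, Submonoid.mem_powers_iff] at this
  have hord : orderOf ω ∣ q ^ 2 - 1 := hN ▸ orderOf_dvd_natCard ω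
  refine ⟨⟨(n + (q ^ 2 - 1) - 1) % (q ^ 2 - 1), Nat.mod_lt _ hNpos⟩, ?_⟩
  have hmod : ((n + (q ^ 2 - 1) - 1) % (q ^ 2 - 1) + 1) ≡ n [MOD q ^ 2 - 1] := by
    calc ((n + (q ^ 2 - 1) - 1) % (q ^ 2 - 1) + 1)
        ≡ (n + (q ^ 2 - 1) - 1) + 1 [MOD q ^ 2 - 1] :=
          Nat.ModEq.add_right 1 (Nat.mod_modEq _ _)
      _ = n + (q ^ 2 - 1) := by omega
      _ ≡ n + 0 [MOD q ^ 2 - 1] := Nat.ModEq.add_left n (Nat.modEq_zero_iff_dvd.mpr dvd_rfl)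
      _ = n := by omega
  have hpow : ω ^ ((n + (q ^ 2 - 1) - 1) % (q ^ 2 - 1) + 1) = ω ^ n := by
    rw [pow_eq_pow_iff_modEq]
    exact hmod.of_dvd hord
  have : ((ω ^ ((n + (q ^ 2 - 1) - 1) % (q ^ 2 - 1) + 1) : Fˣ) : F) = s := by
    rw [hpow, hn]; rfl
  simpa using this

private noncomputable def Dset (n : ℕ) : Finset (Fin 2 →₀ ℕ) :=
  ((Finset.range (n + 1)).biUnion fun a =>
    (Finset.range (n + 1 - a)).image fun b => (a, b)).image
    fun p => Finsupp.equivFunOnFinite.symm ![p.1, p.2]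

private lemma mem_Dset (n : ℕ) (d : Fin 2 →₀ ℕ) :
    d ∈ Dset n ↔ d 0 + d 1 ≤ n := by
  constructor
  · rintro hd
    simp only [Dset, Finset.mem_image, Finset.mem_biUnion, Finset.mem_range] at hd
    obtain ⟨p, hp, rfl⟩ := hd
    obtain ⟨a, ha, b, hb, rfl⟩ := hp
    simp only [Finset.mem_range] at hb ⊢
    have h0 : (Finsupp.equivFunOnFinite.symm ![a, b]) 0 = a := rfl
    have h1 : (Finsupp.equivFunOnFinite.symm ![a, b]) 1 = b := rfl
    rw [h0, h1]
    omega
  · intro hd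
    refine Finset.mem_image.mpr ⟨(d 0, d 1), Finset.mem_biUnion.mpr
      ⟨d 0, Finset.mem_range.mpr (by omega), Finset.mem_image.mpr
        ⟨d 1, Finset.mem_range.mpr (by omega), rfl⟩⟩, ?_⟩
    have hfn : (![d 0, d 1] : Fin 2 → ℕ) = ⇑d := by
      funext i; fin_cases i <;> rfl
    rw [hfn, Finsupp.equivFunOnFinite_symm_coe]

private lemma card_Dset (n : ℕ) : (Dset n).card = (n + 1) * (n + 2) / 2 := by
  rw [Dset, Finset.card_image_of_injective _ (fun p p' hpp => by
    have hfg := Finsupp.equivFunOnFinite.symm.injective hpp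
    have h0 := congrFun hfg 0
    have h1 := congrFun hfg 1
    simp only [Matrix.cons_val_zero, Matrix.cons_val_one, Matrix.head_cons] at h0 h1
    exact Prod.ext h0 h1)]
  rw [Finset.card_biUnion (fun a _ a' _ haa => by
    simp only [Finset.disjoint_left, Finset.mem_image]
    rintro x ⟨b, _, rfl⟩ ⟨b', _, hx⟩
    exact haa (congrArg Prod.fst hx).symm)]
  have hc : ∀ a ∈ Finset.range (n + 1),
      ((Finset.range (n + 1 - a)).image fun b => (a, b)).card = n + 1 - a := by
    intro a _
    rw [Finset.card_image_of_injective _ (fun b b' hbb => congrArg Prod.snd hbb),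
      Finset.card_range]
  rw [Finset.sum_congr rfl hc]
  have hstep : ∑ a ∈ Finset.range (n + 1), (n + 1 - a) = ∑ i ∈ Finset.range (n + 2), i := by
    calc ∑ a ∈ Finset.range (n + 1), (n + 1 - a)
        = ∑ a ∈ Finset.range (n + 1), ((fun j => j + 1) (n + 1 - 1 - a)) := by
          apply Finset.sum_congr rfl
          intro a ha
          simp only [Finset.mem_range] at ha
          simp only []
          omega
      _ = ∑ a ∈ Finset.range (n + 1), (a + 1) :=
          Finset.sum_range_reflect (fun j => j + 1) (n + 1)
      _ = ∑ i ∈ Finset.range (n + 2), i := by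
          rw [Finset.sum_range_succ' (fun i => i) (n + 1)]
          simp
  rw [hstep, Finset.sum_range_id]
  rw [show n + 2 - 1 = n + 1 from rfl, Nat.mul_comm]

/-- For `2 ≤ m ≤ q − 1`, the evaluation map sending a pair `(g, ε)` — with
`g ∈ 𝔽_{q²}[X,Y]` of total degree at most `m − 2` and `ε ∈ 𝔽_{q²}` — to the vector of values
`(η_j·g(ξ_j, η_j) + ε·ξ_j^m)·ξ_j^{−m}` at the points `Q_j = (ξ_j, η_j)` is injective;
consequently its image, the functional AG code `C_𝓛(𝙳,𝙶)`, is an `𝔽_{q²}`-linear code of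
length `q² − 1` and dimension `m(m−1)/2 + 1` (i.e. it has `(q²)^(m(m−1)/2 + 1)` codewords). -/
theorem stmt_2 (q : ℕ) (hq : IsPrimePow q) (hq3 : 3 ≤ q)
    (F : Type*) [Field F] [Fintype F] (hF : Fintype.card F = q ^ 2)
    (ω : Fˣ) (hω : ∀ x : Fˣ, x ∈ Subgroup.zpowers ω)
    (u v : F) (hu : u ≠ 0) (huv : v ^ q + v = u ^ (q + 1))
    (m : ℕ) (hm : 2 ≤ m) (hm' : m ≤ q - 1) :
    (∀ g₁ g₂ : MvPolynomial (Fin 2) F, g₁.totalDegree ≤ m - 2 → g₂.totalDegree ≤ m - 2 →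
      ∀ ε₁ ε₂ : F,
        evalVec q m (ω : F) u v g₁ ε₁ = evalVec q m (ω : F) u v g₂ ε₂ →
          g₁ = g₂ ∧ ε₁ = ε₂) ∧
    Set.ncard {c : Fin (q ^ 2 - 1) → F |
        ∃ (g : MvPolynomial (Fin 2) F) (ε : F),
          g.totalDegree ≤ m - 2 ∧ c = evalVec q m (ω : F) u v g ε} =
      (q ^ 2) ^ (m * (m - 1) / 2 + 1) := by
  classical
  have hv : v ≠ 0 := by
    intro hv0
    rw [hv0] at huv
    have hq0 : q ≠ 0 := by omega
    simp [zero_pow hq0] at huv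
    exact pow_ne_zero (q + 1) hu huv.symm
  have part1 : ∀ g₁ g₂ : MvPolynomial (Fin 2) F, g₁.totalDegree ≤ m - 2 →
      g₂.totalDegree ≤ m - 2 → ∀ ε₁ ε₂ : F,
        evalVec q m (ω : F) u v g₁ ε₁ = evalVec q m (ω : F) u v g₂ ε₂ →
          g₁ = g₂ ∧ ε₁ = ε₂ := by
    intro g₁ g₂ hg₁ hg₂ ε₁ ε₂ hEq
    have hK := keyA q hq3 hF u v hu hv m hm hm' (g₁ - g₂)
      ((MvPolynomial.totalDegree_sub g₁ g₂).trans (max_le hg₁ hg₂)) (ε₁ - ε₂) ?_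
    · exact ⟨sub_eq_zero.mp hK.1, sub_eq_zero.mp hK.2⟩
    · intro s hs
      obtain ⟨j, hj⟩ := keyGen q hq3 hF ω hω s hs
      have hE := congrFun hEq j
      simp only [evalVec] at hE
      have hω2 : (ω : F) ^ ((q + 1) * (j.val + 1)) = s ^ (q + 1) := by
        rw [mul_comm, pow_mul, hj]
      rw [hj, hω2] at hE
      have hξ : ((s * u) ^ m)⁻¹ ≠ 0 := inv_ne_zero (pow_ne_zero _ (mul_ne_zero hs hu))
      have hE2 := mul_right_cancel₀ hξ hE
      rw [map_sub]
      linear_combination hE2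
  refine ⟨part1, ?_⟩
  set n := m - 2 with hn
  set f : MvPolynomial (Fin 2) F × F → (Fin (q ^ 2 - 1) → F) :=
    fun p => evalVec q m (ω : F) u v p.1 p.2 with hf
  set T : Set (MvPolynomial (Fin 2) F × F) := {p | p.1.totalDegree ≤ m - 2} with hT
  have hSeq : {c : Fin (q ^ 2 - 1) → F | ∃ (g : MvPolynomial (Fin 2) F) (ε : F),
      g.totalDegree ≤ m - 2 ∧ c = evalVec q m (ω : F) u v g ε} = f '' T := by
    ext c
    constructor
    · rintro ⟨g, ε, hg, rfl⟩; exact ⟨(g, ε), hg, rfl⟩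
    · rintro ⟨⟨g, ε⟩, hg, rfl⟩; exact ⟨g, ε, hg, rfl⟩
  have hinjOn : Set.InjOn f T := by
    rintro ⟨g₁, ε₁⟩ h₁ ⟨g₂, ε₂⟩ h₂ heq
    obtain ⟨hg, hε⟩ := part1 g₁ g₂ h₁ h₂ ε₁ ε₂ heq
    exact Prod.ext hg hε
  rw [hSeq, Set.ncard_image_of_injOn hinjOn]
  have hdsum : ∀ d : Fin 2 →₀ ℕ, (d.sum fun _ e => e) = d 0 + d 1 := by
    intro d
    rw [Finsupp.sum_fintype _ _ (fun _ => rfl), Fin.sum_univ_two]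
  let E : ↥T ≃ ((↥(Dset n) → F) × F) :=
  { toFun := fun p => (fun d => MvPolynomial.coeff d.1 p.1.1, p.1.2)
    invFun := fun x => ⟨(∑ d ∈ (Dset n).attach, (MvPolynomial.monomial d.1 (x.1 d)), x.2), by
      simp only [hT, Set.mem_setOf_eq]
      refine (MvPolynomial.totalDegree_finset_sum _ _).trans ?_
      refine Finset.sup_le fun d _ => ?_
      refine (MvPolynomial.totalDegree_monomial_le _ _).trans ?_
      have hd := (mem_Dset n d.1).mp d.2
      have h3 : ((d.1 : Fin 2 →₀ ℕ).sum fun _ => id) = d.1 0 + d.1 1 := hdsum d.1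
      rw [h3]
      omega⟩
    left_inv := fun p => by
      apply Subtype.ext
      apply Prod.ext
      · show (∑ d ∈ (Dset n).attach,
            MvPolynomial.monomial d.1 (MvPolynomial.coeff d.1 p.1.1)) = p.1.1
        rw [Finset.sum_attach (Dset n)
          (fun d => MvPolynomial.monomial d (MvPolynomial.coeff d p.1.1))]
        have hsub : p.1.1.support ⊆ Dset n := by
          intro d hd
          rw [mem_Dset]
          have h1 := MvPolynomial.le_totalDegree hd
          have h2 := p.2
          rw [hdsum d] at h1
          simp only [hT, Set.mem_setOf_eq] at h2
          omega
        calc ∑ d ∈ Dset n, MvPolynomial.monomial d (MvPolynomial.coeff d p.1.1)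
            = ∑ d ∈ p.1.1.support, MvPolynomial.monomial d (MvPolynomial.coeff d p.1.1) :=
              (Finset.sum_subset hsub (fun d _ hd => by
                rw [MvPolynomial.notMem_support_iff.mp hd, map_zero])).symm
          _ = p.1.1 := MvPolynomial.support_sum_monomial_coeff p.1.1
      · rfl
    right_inv := fun x => by
      apply Prod.ext
      · funext d
        show MvPolynomial.coeff d.1 (∑ d' ∈ (Dset n).attach,
          MvPolynomial.monomial d'.1 (x.1 d')) = x.1 d
        rw [MvPolynomial.coeff_sum]
        rw [Finset.sum_eq_single_of_mem d (Finset.mem_attach _ d) (fun d' _ hne => by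
          rw [MvPolynomial.coeff_monomial, if_neg (fun hcon => hne (Subtype.ext hcon))])]
        rw [MvPolynomial.coeff_monomial, if_pos rfl]
      · rfl }
  have hTcard : T.ncard = Nat.card ((↥(Dset n) → F) × F) := by
    rw [← Nat.card_coe_set_eq]
    exact Nat.card_congr E
  rw [hTcard, Nat.card_eq_fintype_card, Fintype.card_prod, Fintype.card_fun,
    Fintype.card_coe, hF, card_Dset]
  have harith : (n + 1) * (n + 2) / 2 = m * (m - 1) / 2 := by
    have h1 : n + 1 = m - 1 := by omega
    have h2 : n + 2 = m := by omega
    rw [h1, h2, Nat.mul_comm]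
  rw [harith, ← pow_succ]
end

section
/- Let 2 ≤ m ≤ q−1 and let τ ∈ 𝔽_{q²} with τ ≠ 0. Let g ∈ 𝔽_{q²}[X,Y] have total degree at most m−2 and let ε ∈ 𝔽_{q²}, with (g, ε) ≠ (0, 0). Then the number of x ∈ 𝔽_{q²} with x ≠ 0 and τ·x^{q+1}·g(x, τ·x^{q+1}) + ε·x^m = 0 is at most q(m−1)−1. Consequently every nonzero codeword of the functional AG code C_𝓛(𝙳,𝙶) has Hamming weight at least q²−1−(q(m−1)−1), i.e. the minimum distance exceeds the Goppa designed minimum distance q²−1−m(q−1) by at least q+1−m. -/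
open Polynomial

-- sum representation of aeval ![X, C τ * X^n]
lemma aux_sum {F : Type*} [CommRing F] (τ : F) (n : ℕ) (p : MvPolynomial (Fin 2) F) :
    (MvPolynomial.aeval ![Polynomial.X, Polynomial.C τ * Polynomial.X ^ n] p : F[X])
    = ∑ d ∈ p.support, Polynomial.C (p.coeff d * τ ^ d 1) * Polynomial.X ^ (d 0 + n * d 1) := by
  rw [MvPolynomial.aeval_def, MvPolynomial.eval₂_eq']
  refine Finset.sum_congr rfl fun d _ => ?_
  rw [Fin.prod_univ_two]
  simp only [Matrix.cons_val_zero, Matrix.cons_val_one, Matrix.head_cons,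
    Polynomial.algebraMap_eq, mul_pow, ← Polynomial.C_pow, ← pow_mul, map_mul, pow_add]
  ring

lemma aux_deg {F : Type*} [CommRing F] [Nontrivial F] (τ : F) (n : ℕ) (hn : 1 ≤ n) (p : MvPolynomial (Fin 2) F) :
    (MvPolynomial.aeval ![Polynomial.X, Polynomial.C τ * Polynomial.X ^ n] p : F[X]).natDegree
      ≤ n * p.totalDegree := by
  rw [aux_sum]
  refine Polynomial.natDegree_sum_le_of_forall_le _ _ fun d hd => ?_
  refine le_trans (Polynomial.natDegree_C_mul_le _ _) ?_
  rw [Polynomial.natDegree_X_pow]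
  have h1 : d 0 + d 1 ≤ p.totalDegree := by
    refine le_trans (le_of_eq ?_) (MvPolynomial.le_totalDegree hd)
    rw [Finsupp.sum_fintype _ _ (fun i => rfl), Fin.sum_univ_two]
  calc d 0 + n * d 1 ≤ n * (d 0 + d 1) := by nlinarith
    _ ≤ n * p.totalDegree := Nat.mul_le_mul_left n h1

lemma aux_coeff {F : Type*} [CommRing F] (τ : F) (n : ℕ) (hn : 0 < n)
    (p : MvPolynomial (Fin 2) F) (hd : ∀ d ∈ p.support, d 0 < n)
    (d₀ : Fin 2 →₀ ℕ) (h₀ : d₀ ∈ p.support) :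
    (MvPolynomial.aeval ![Polynomial.X, Polynomial.C τ * Polynomial.X ^ n] p : F[X]).coeff
      (d₀ 0 + n * d₀ 1) = p.coeff d₀ * τ ^ d₀ 1 := by
  rw [aux_sum, Polynomial.finset_sum_coeff]
  rw [Finset.sum_eq_single d₀]
  · rw [Polynomial.coeff_C_mul, Polynomial.coeff_X_pow, if_pos rfl, mul_one]
  · intro d hdmem hdne
    rw [Polynomial.coeff_C_mul, Polynomial.coeff_X_pow]
    have key : ¬ (d 0 + n * d 1 = d₀ 0 + n * d₀ 1) := by
      intro h
      have h0 : d 0 = d₀ 0 := by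
        have e1 : d 0 = (d 0 + n * d 1) % n := by
          rw [Nat.add_mul_mod_self_left, Nat.mod_eq_of_lt (hd d hdmem)]
        have e2 : d₀ 0 = (d₀ 0 + n * d₀ 1) % n := by
          rw [Nat.add_mul_mod_self_left, Nat.mod_eq_of_lt (hd d₀ h₀)]
        rw [e1, e2, h]
      have h1 : d 1 = d₀ 1 := by
        have := h
        rw [h0] at this
        have := Nat.add_left_cancel this
        exact Nat.eq_of_mul_eq_mul_left hn this
      refine hdne ?_
      ext i
      fin_cases i
      · exact h0
      · exact h1
    rw [if_neg (fun h => key h.symm), mul_zero]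
  · intro h
    exact absurd h₀ h

lemma aux_eval {F : Type*} [CommRing F] (τ : F) (n : ℕ) (p : MvPolynomial (Fin 2) F) (x : F) :
    (MvPolynomial.aeval ![Polynomial.X, Polynomial.C τ * Polynomial.X ^ n] p : F[X]).eval x
      = MvPolynomial.eval ![x, τ * x ^ n] p := by
  rw [aux_sum, Polynomial.eval_finset_sum, MvPolynomial.eval_eq']
  refine Finset.sum_congr rfl fun d _ => ?_
  rw [Fin.prod_univ_two]
  simp only [Matrix.cons_val_zero, Matrix.cons_val_one, Matrix.head_cons,
    Polynomial.eval_mul, Polynomial.eval_C, Polynomial.eval_pow, Polynomial.eval_X,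
    mul_pow, ← pow_mul, pow_add]
  ring

/-- For `2 ≤ m ≤ q − 1`, `τ ≠ 0`, `g` of total degree at most `m − 2`,
`ε ∈ 𝔽_{q²}` with `(g, ε) ≠ (0, 0)`, the number of `x ∈ 𝔽_{q²}`, `x ≠ 0`, with
`τ·x^{q+1}·g(x, τ·x^{q+1}) + ε·x^m = 0` is at most `q(m−1) − 1`. Consequently every nonzero
codeword of `C_𝓛(𝙳,𝙶)` has Hamming weight at least `q² − 1 − (q(m−1) − 1)`. -/
theorem stmt_3 (q : ℕ) (hq : IsPrimePow q) (hq3 : 3 ≤ q)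
    (F : Type*) [Field F] [Fintype F] [DecidableEq F] (hF : Fintype.card F = q ^ 2)
    (τ : F) (hτ : τ ≠ 0)
    (m : ℕ) (hm : 2 ≤ m) (hm' : m ≤ q - 1)
    (g : MvPolynomial (Fin 2) F) (hg : g.totalDegree ≤ m - 2) (ε : F)
    (hne : ¬(g = 0 ∧ ε = 0)) :
    (Finset.univ.filter fun x : F => x ≠ 0 ∧
        τ * x ^ (q + 1) * MvPolynomial.eval ![x, τ * x ^ (q + 1)] g + ε * x ^ m = 0).card
      ≤ q * (m - 1) - 1 ∧
    q ^ 2 - 1 - (q * (m - 1) - 1) ≤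
      (Finset.univ.filter fun x : F => x ≠ 0 ∧
        τ * x ^ (q + 1) * MvPolynomial.eval ![x, τ * x ^ (q + 1)] g + ε * x ^ m ≠ 0).card := by
  classical
  set B : F[X] :=
    MvPolynomial.aeval ![Polynomial.X, Polynomial.C τ * Polynomial.X ^ (q + 1)] g with hB
  have hdegB : B.natDegree ≤ (q + 1) * (m - 2) :=
    le_trans (aux_deg τ (q + 1) (by omega) g) (Nat.mul_le_mul_left _ hg)
  have hBeval : ∀ x : F, B.eval x = MvPolynomial.eval ![x, τ * x ^ (q + 1)] g :=
    fun x => aux_eval τ (q + 1) g x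
  obtain ⟨a, rfl⟩ : ∃ a, m = a + 2 := ⟨m - 2, by omega⟩
  have haq : a + 3 ≤ q := by omega
  have hma : a + 2 - 2 = a := by omega
  have hma' : a + 2 - 1 = a + 1 := by omega
  rw [hma] at hg hdegB
  -- key degree arithmetic
  have harith : (q + 1) * a ≤ q * (a + 1) - 1 := by
    have e1 : (q + 1) * a = q * a + a := by ring
    have e2 : q * (a + 1) = q * a + q := by ring
    rw [e1, e2]
    generalize q * a = t
    omega
  obtain ⟨v, hv0, hvd, hvroot⟩ : ∃ v : F[X], v ≠ 0 ∧ v.natDegree ≤ q * (a + 2 - 1) - 1 ∧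
      ∀ x : F, x ≠ 0 →
        τ * x ^ (q + 1) * MvPolynomial.eval ![x, τ * x ^ (q + 1)] g + ε * x ^ (a + 2) = 0 →
        v.eval x = 0 := by
    rw [hma']
    by_cases hε : ε = 0
    · have hgne : g ≠ 0 := fun h => hne ⟨h, hε⟩
      subst hε
      refine ⟨B, ?_, ?_, ?_⟩
      · -- B ≠ 0
        obtain ⟨d₀, hd₀⟩ := MvPolynomial.ne_zero_iff.1 hgne
        have h₀ : d₀ ∈ g.support := MvPolynomial.mem_support_iff.2 hd₀
        have hdlt : ∀ d ∈ g.support, d 0 < q + 1 := by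
          intro d hd
          have h1 := MvPolynomial.le_totalDegree hd
          rw [Finsupp.sum_fintype _ _ (fun i => rfl), Fin.sum_univ_two] at h1
          omega
        intro hv
        have hc := aux_coeff τ (q + 1) (by omega) g hdlt d₀ h₀
        rw [← hB, hv, Polynomial.coeff_zero] at hc
        exact (mul_ne_zero hd₀ (pow_ne_zero _ hτ)) hc.symm
      · calc B.natDegree ≤ (q + 1) * a := hdegB
          _ ≤ q * (a + 1) - 1 := harith
      · intro x hx hcond
        rw [zero_mul, add_zero] at hcond
        rw [hBeval x]
        rcases mul_eq_zero.1 hcond with h | h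
        · exact absurd h (mul_ne_zero hτ (pow_ne_zero _ hx))
        · exact h
    · set k : ℕ := q + 1 - (a + 2) with hk
      have hk0 : 0 < k := by omega
      refine ⟨Polynomial.C τ * Polynomial.X ^ k * B + Polynomial.C ε, ?_, ?_, ?_⟩
      · intro hv
        apply hε
        have hc : (Polynomial.C τ * Polynomial.X ^ k * B + Polynomial.C ε).coeff 0 = ε := by
          rw [Polynomial.coeff_add, Polynomial.coeff_C_zero, mul_assoc,
            mul_comm (Polynomial.X ^ k) B, ← mul_assoc, mul_assoc,
            Polynomial.coeff_C_mul, Polynomial.coeff_mul_X_pow', if_neg (by omega), mul_zero,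
            zero_add]
        rw [hv, Polynomial.coeff_zero] at hc
        exact hc.symm
      · refine le_trans (Polynomial.natDegree_add_le _ _) ?_
        rw [Polynomial.natDegree_C, max_le_iff]
        refine ⟨le_trans (Polynomial.natDegree_mul_le) ?_, by omega⟩
        have h1 : (Polynomial.C τ * Polynomial.X ^ k : F[X]).natDegree ≤ k :=
          le_trans (Polynomial.natDegree_C_mul_le _ _) (by rw [Polynomial.natDegree_X_pow])
        have h2 : k + (q + 1) * a ≤ q * (a + 1) - 1 := by
          have e1 : (q + 1) * a = q * a + a := by ring
          have e2 : q * (a + 1) = q * a + q := by ring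
          rw [e1, e2, hk]
          generalize q * a = t
          omega
        calc (Polynomial.C τ * Polynomial.X ^ k : F[X]).natDegree + B.natDegree
            ≤ k + (q + 1) * a := Nat.add_le_add h1 hdegB
          _ ≤ q * (a + 1) - 1 := h2
      · intro x hx hcond
        have hsplit : x ^ (q + 1) = x ^ (a + 2) * x ^ k := by
          rw [← pow_add]
          congr 1
          omega
        have hmul : x ^ (a + 2) *
            (τ * x ^ k * MvPolynomial.eval ![x, τ * x ^ (q + 1)] g + ε) = 0 := by
          rw [← hcond, hsplit]; ring
        have h2 : τ * x ^ k * MvPolynomial.eval ![x, τ * x ^ (q + 1)] g + ε = 0 := by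
          rcases mul_eq_zero.1 hmul with h | h
          · exact absurd h (pow_ne_zero _ hx)
          · exact h
        rw [Polynomial.eval_add, Polynomial.eval_mul, Polynomial.eval_mul, Polynomial.eval_C,
          Polynomial.eval_pow, Polynomial.eval_X, Polynomial.eval_C, hBeval]
        exact h2
  -- counting
  have hZle : (Finset.univ.filter fun x : F => x ≠ 0 ∧
      τ * x ^ (q + 1) * MvPolynomial.eval ![x, τ * x ^ (q + 1)] g + ε * x ^ (a + 2) = 0).card
      ≤ q * (a + 2 - 1) - 1 := by
    have hsub : (Finset.univ.filter fun x : F => x ≠ 0 ∧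
        τ * x ^ (q + 1) * MvPolynomial.eval ![x, τ * x ^ (q + 1)] g + ε * x ^ (a + 2) = 0)
        ⊆ v.roots.toFinset := by
      intro x hx
      rw [Finset.mem_filter] at hx
      rw [Multiset.mem_toFinset, Polynomial.mem_roots']
      exact ⟨hv0, hvroot x hx.2.1 hx.2.2⟩
    calc _ ≤ v.roots.toFinset.card := Finset.card_le_card hsub
      _ ≤ Multiset.card v.roots := v.roots.toFinset_card_le
      _ ≤ v.natDegree := v.card_roots'
      _ ≤ q * (a + 2 - 1) - 1 := hvd
  refine ⟨hZle, ?_⟩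
  have hall : (Finset.univ.filter fun x : F => x ≠ 0).card = q ^ 2 - 1 := by
    rw [Finset.filter_ne' Finset.univ 0, Finset.card_erase_of_mem (Finset.mem_univ 0),
      Finset.card_univ, hF]
  have hsplit2 : (Finset.univ.filter fun x : F => x ≠ 0 ∧
      τ * x ^ (q + 1) * MvPolynomial.eval ![x, τ * x ^ (q + 1)] g + ε * x ^ (a + 2) = 0).card +
      (Finset.univ.filter fun x : F => x ≠ 0 ∧
      τ * x ^ (q + 1) * MvPolynomial.eval ![x, τ * x ^ (q + 1)] g + ε * x ^ (a + 2) ≠ 0).card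
      = q ^ 2 - 1 := by
    rw [← hall]
    rw [show (Finset.univ.filter fun x : F => x ≠ 0 ∧
        τ * x ^ (q + 1) * MvPolynomial.eval ![x, τ * x ^ (q + 1)] g + ε * x ^ (a + 2) = 0) =
        ((Finset.univ.filter fun x : F => x ≠ 0).filter fun x =>
        τ * x ^ (q + 1) * MvPolynomial.eval ![x, τ * x ^ (q + 1)] g + ε * x ^ (a + 2) = 0) from
        by rw [Finset.filter_filter]]
    rw [show (Finset.univ.filter fun x : F => x ≠ 0 ∧
        τ * x ^ (q + 1) * MvPolynomial.eval ![x, τ * x ^ (q + 1)] g + ε * x ^ (a + 2) ≠ 0) =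
        ((Finset.univ.filter fun x : F => x ≠ 0).filter fun x =>
        ¬(τ * x ^ (q + 1) * MvPolynomial.eval ![x, τ * x ^ (q + 1)] g + ε * x ^ (a + 2) = 0)) from
        by rw [Finset.filter_filter]]
    exact Finset.card_filter_add_card_filter_not _
  calc q ^ 2 - 1 - (q * (a + 2 - 1) - 1)
      ≤ q ^ 2 - 1 - (Finset.univ.filter fun x : F => x ≠ 0 ∧
        τ * x ^ (q + 1) * MvPolynomial.eval ![x, τ * x ^ (q + 1)] g + ε * x ^ (a + 2) = 0).card :=
        Nat.sub_le_sub_left hZle _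
    _ = _ := by rw [← hsplit2, Nat.add_sub_cancel_left]
end

section
/- Let 2 ≤ m ≤ q−1 and let τ ∈ 𝔽_{q²} satisfy τ^q + τ = 1. For any m−2 pairwise distinct elements c_1,…,c_{m−2} ∈ 𝔽_q with all c_i ≠ 0, the nonzero pair (g, ε) with ε = 0 and g = ∏_{i=1}^{m−2}(Y − τ·c_i) satisfies: the number of x ∈ 𝔽_{q²}, x ≠ 0, with τ·x^{q+1}·g(x, τ·x^{q+1}) + ε·x^m = 0 is exactly (m−2)(q+1). Consequently the minimum distance of the functional AG code C_𝓛(𝙳,𝙶) is at most q²−1−(m−2)(q+1). -/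
/-!
Since `c ≠ 0`, `τ ≠ 0` and `ε = 0`, a point `x ≠ 0` is a zero of the codeword exactly when
`x ^ (q + 1) = c i` for some `i`. Each `c i` is a nonzero element of `𝔽_q`, so `c i ^ (q - 1) = 1`;
as `𝔽_{q²}ˣ` is cyclic of order `(q - 1)(q + 1)`, `c i` is then a `(q + 1)`-st power, and since
`𝔽_{q²}` contains a primitive `(q + 1)`-st root of unity it has exactly `q + 1` such roots.
The fibres over distinct `c i` are disjoint, giving `(m - 2)(q + 1)` zeros.
-/

open Finset

theorem IsCyclic.exists_orderOf_eq_of_dvd {G : Type*} [Group G] [IsCyclic G] [Finite G] {n : ℕ}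
    (hn : n ∣ Nat.card G) : ∃ g : G, orderOf g = n := by
  obtain ⟨g, hg⟩ := IsCyclic.exists_ofOrder_eq_natCard (α := G)
  exact ⟨g ^ (Nat.card G / n), hg ▸ orderOf_pow_orderOf_div (hg ▸ Nat.card_pos.ne') (hg ▸ hn)⟩

theorem IsCyclic.exists_pow_eq_of_pow_eq_one {G : Type*} [CommGroup G] [IsCyclic G] [Finite G]
    {a b : ℕ} (hG : Nat.card G = a * b) {c : G} (hc : c ^ a = 1) : ∃ x : G, x ^ b = c := by
  have hb : b ≠ 0 := by rintro rfl; exact Nat.card_pos.ne' (by simpa using hG)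
  have hle : (powMonoidHom b : G →* G).range ≤ (powMonoidHom a).ker := by
    rintro _ ⟨x, rfl⟩
    simp [← pow_mul, mul_comm b a, ← hG, pow_card_eq_one']
  have hcard :
      Nat.card (powMonoidHom a : G →* G).ker ≤ Nat.card (powMonoidHom b : G →* G).range := by
    rw [IsCyclic.card_powMonoidHom_ker, IsCyclic.card_powMonoidHom_range, hG,
      Nat.gcd_eq_right (dvd_mul_right a b), Nat.gcd_eq_right (dvd_mul_left b a),
      Nat.mul_div_cancel _ (Nat.pos_of_ne_zero hb)]
  obtain ⟨x, hx⟩ := (Subgroup.eq_of_le_of_card_ge hle hcard).ge (MonoidHom.mem_ker.mpr hc)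
  exact ⟨x, hx⟩

theorem IsPrimitiveRoot.card_filter_pow_eq {R : Type*} [CommRing R] [IsDomain R] [Fintype R]
    [DecidableEq R] {n : ℕ} (hn : 0 < n) {ζ : R} (hζ : IsPrimitiveRoot ζ n) {c : R} (hc : c ≠ 0)
    (hex : ∃ x : R, x ^ n = c) : #{x : R | x ^ n = c} = n := by
  have hroots : (Polynomial.nthRoots n c).toFinset = ({x : R | x ^ n = c} : Finset R) := by
    ext x
    simp [Polynomial.mem_nthRoots hn]
  rw [← hroots, Multiset.toFinset_card_of_nodup (hζ.nthRoots_nodup hc), hζ.card_nthRoots,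
    if_pos hex]

namespace FiniteField

variable {F : Type*} [Field F] [Fintype F]

theorem exists_isPrimitiveRoot_of_dvd {n : ℕ} (hn : n ∣ Fintype.card F - 1) :
    ∃ ζ : F, IsPrimitiveRoot ζ n := by
  classical
  rw [← Fintype.card_units, ← Nat.card_eq_fintype_card] at hn
  obtain ⟨g, hg⟩ := IsCyclic.exists_orderOf_eq_of_dvd hn
  exact ⟨g, IsPrimitiveRoot.coe_units_iff.mpr (hg ▸ IsPrimitiveRoot.orderOf g)⟩

theorem exists_pow_eq_of_pow_eq_one {a b : ℕ} (hF : Fintype.card F - 1 = a * b) {c : F}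
    (hc0 : c ≠ 0) (hc : c ^ a = 1) : ∃ x : F, x ^ b = c := by
  classical
  rw [← Fintype.card_units, ← Nat.card_eq_fintype_card] at hF
  obtain ⟨x, hx⟩ := IsCyclic.exists_pow_eq_of_pow_eq_one hF (c := Units.mk0 c hc0) (Units.ext hc)
  exact ⟨x, by simpa using congrArg Units.val hx⟩

theorem card_filter_pow_succ_eq [DecidableEq F] {q : ℕ} (hF : Fintype.card F = q ^ 2) {c : F}
    (hc0 : c ≠ 0) (hcq : c ^ q = c) :
    #{x : F | x ^ (q + 1) = c} = q + 1 := by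
  have hq : q ≠ 0 := by rintro rfl; simp at hF
  have hsplit : Fintype.card F - 1 = (q - 1) * (q + 1) := by
    rw [hF, mul_comm, ← one_pow 2, Nat.sq_sub_sq, one_pow]
  have hc : c ^ (q - 1) = 1 := mul_right_cancel₀ hc0 (by rw [pow_sub_one_mul hq, hcq, one_mul])
  obtain ⟨ζ, hζ⟩ := exists_isPrimitiveRoot_of_dvd (Dvd.intro_left _ hsplit.symm)
  exact hζ.card_filter_pow_eq (by omega) hc0 (exists_pow_eq_of_pow_eq_one hsplit hc0 hc)

end FiniteField

theorem card_filter_prod_pow_sub_eq_zero {R ι : Type*} [CommRing R] [IsDomain R] [Fintype R]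
    [DecidableEq R] [Fintype ι] {n : ℕ} {c : ι → R} (hc : Function.Injective c)
    (hfib : ∀ i, #{x : R | x ^ n = c i} = n) :
    #{x : R | ∏ i, (x ^ n - c i) = 0} = Fintype.card ι * n := by
  have hunion : ({x : R | ∏ i, (x ^ n - c i) = 0} : Finset R) =
      univ.biUnion fun i => {x : R | x ^ n = c i} := by
    ext x
    simp [prod_eq_zero_iff, sub_eq_zero]
  rw [hunion, card_biUnion, sum_congr rfl fun i _ => hfib i, sum_const, card_univ, smul_eq_mul]
  intro i _ j _ hij
  exact disjoint_filter.mpr fun x _ hi hj => hij (hc (hi.symm.trans hj))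

theorem card_filter_ne_zero_and_not {α : Type*} [Fintype α] [DecidableEq α] [Zero α]
    (p : α → Prop) [DecidablePred p] :
    #{x : α | x ≠ 0 ∧ ¬p x} = Fintype.card α - 1 - #{x : α | x ≠ 0 ∧ p x} := by
  have hsum := card_filter_add_card_filter_not (s := univ.filter (· ≠ (0 : α))) p
  rw [filter_filter, filter_filter, filter_ne', card_erase_of_mem (mem_univ 0), card_univ] at hsum
  omega

theorem MvPolynomial.eval_prod_X_sub_C {R σ ι : Type*} [CommRing R] [Fintype ι] (f : σ → R)
    (j : σ) (a : ι → R) :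
    eval f (∏ i, (X j - C (a i))) = ∏ i, (f j - a i) := by
  simp [map_prod]

theorem stmt_4_general (q : ℕ)
    (F : Type*) [Field F] [Fintype F] [DecidableEq F] (hF : Fintype.card F = q ^ 2)
    (τ : F) (hτ : τ ^ q + τ = 1)
    (m : ℕ)
    (c : Fin (m - 2) → F) (hcinj : Function.Injective c)
    (hc0 : ∀ i, c i ≠ 0) (hcq : ∀ i, c i ^ q = c i) :
    (∏ i, (MvPolynomial.X (1 : Fin 2) - MvPolynomial.C (τ * c i)) : MvPolynomial (Fin 2) F)
        ≠ 0 ∧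
    (Finset.univ.filter fun x : F => x ≠ 0 ∧
        τ * x ^ (q + 1) *
            MvPolynomial.eval ![x, τ * x ^ (q + 1)]
              (∏ i, (MvPolynomial.X (1 : Fin 2) - MvPolynomial.C (τ * c i))) +
          0 * x ^ m = 0).card = (m - 2) * (q + 1) ∧
    (Finset.univ.filter fun x : F => x ≠ 0 ∧
        τ * x ^ (q + 1) *
            MvPolynomial.eval ![x, τ * x ^ (q + 1)]
              (∏ i, (MvPolynomial.X (1 : Fin 2) - MvPolynomial.C (τ * c i))) +
          0 * x ^ m ≠ 0).card = q ^ 2 - 1 - (m - 2) * (q + 1) := by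
  set g : MvPolynomial (Fin 2) F := ∏ i, (MvPolynomial.X 1 - MvPolynomial.C (τ * c i)) with hg
  have hq0 : q ≠ 0 := by rintro rfl; simp at hF
  have hτ0 : τ ≠ 0 := by rintro rfl; simp [hq0] at hτ
  have hzero (x : F) : (x ≠ 0 ∧ τ * x ^ (q + 1) * MvPolynomial.eval ![x, τ * x ^ (q + 1)] g +
      0 * x ^ m = 0) ↔ ∏ i, (x ^ (q + 1) - c i) = 0 := by
    simp only [hg, MvPolynomial.eval_prod_X_sub_C, Matrix.cons_val_one, Matrix.cons_val_zero,
      ← mul_sub, prod_mul_distrib, prod_const, zero_mul, add_zero]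
    constructor
    · rintro ⟨hx, h⟩
      simpa [hτ0, hx] using h
    · intro h
      refine ⟨fun hx => ?_, by simp [h]⟩
      obtain ⟨i, -, hi⟩ := prod_eq_zero_iff.mp (hx ▸ h)
      exact hc0 i (by simpa using hi)
  have hcount : #{x : F | x ≠ 0 ∧ τ * x ^ (q + 1) * MvPolynomial.eval ![x, τ * x ^ (q + 1)] g +
      0 * x ^ m = 0} = (m - 2) * (q + 1) := by
    rw [filter_congr fun x _ => hzero x, card_filter_prod_pow_sub_eq_zero hcinj
      fun i => FiniteField.card_filter_pow_succ_eq hF (hc0 i) (hcq i), Fintype.card_fin]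
  refine ⟨prod_ne_zero_iff.mpr fun _ _ => (MonomialOrder.monic_X_sub_C .lex 1 _).ne_zero,
    hcount, ?_⟩
  rw [card_filter_ne_zero_and_not, hF, hcount]

/-- Let `2 ≤ m ≤ q − 1` and `τ^q + τ = 1`. For pairwise distinct nonzero
`c_1, …, c_{m−2} ∈ 𝔽_q`, the nonzero pair `(g, ε)` with `ε = 0` and
`g = ∏ (Y − τ·c_i)` satisfies: the number of `x ∈ 𝔽_{q²}`, `x ≠ 0`, with
`τ·x^{q+1}·g(x, τ·x^{q+1}) + ε·x^m = 0` is exactly `(m−2)(q+1)`. Consequently the minimum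
distance of `C_𝓛(𝙳,𝙶)` is at most `q² − 1 − (m−2)(q+1)`: the corresponding codeword has
exactly `q² − 1 − (m−2)(q+1)` nonzero coordinates. -/
theorem stmt_4 (q : ℕ) (hq : IsPrimePow q) (hq3 : 3 ≤ q)
    (F : Type*) [Field F] [Fintype F] [DecidableEq F] (hF : Fintype.card F = q ^ 2)
    (τ : F) (hτ : τ ^ q + τ = 1)
    (m : ℕ) (hm : 2 ≤ m) (hm' : m ≤ q - 1)
    (c : Fin (m - 2) → F) (hcinj : Function.Injective c)
    (hc0 : ∀ i, c i ≠ 0) (hcq : ∀ i, c i ^ q = c i) :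
    (∏ i, (MvPolynomial.X (1 : Fin 2) - MvPolynomial.C (τ * c i)) : MvPolynomial (Fin 2) F)
        ≠ 0 ∧
    (Finset.univ.filter fun x : F => x ≠ 0 ∧
        τ * x ^ (q + 1) *
            MvPolynomial.eval ![x, τ * x ^ (q + 1)]
              (∏ i, (MvPolynomial.X (1 : Fin 2) - MvPolynomial.C (τ * c i))) +
          0 * x ^ m = 0).card = (m - 2) * (q + 1) ∧
    (Finset.univ.filter fun x : F => x ≠ 0 ∧
        τ * x ^ (q + 1) *
            MvPolynomial.eval ![x, τ * x ^ (q + 1)]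
              (∏ i, (MvPolynomial.X (1 : Fin 2) - MvPolynomial.C (τ * c i))) +
          0 * x ^ m ≠ 0).card = q ^ 2 - 1 - (m - 2) * (q + 1) :=
  stmt_4_general q F hF τ hτ m c hcinj hc0 hcq
end

section
/- Let 2 ≤ m ≤ q−1. Let C ⊆ 𝔽_{q²}^{ℤ/(q²−1)ℤ} be the set of all vectors (c_j)_{j ∈ ℤ/(q²−1)ℤ} of the form c_j = (η_j·g(ξ_j, η_j) + ε·ξ_j^m)·ξ_j^{−m}, where (ξ_j, η_j) = (ω^j·u, ω^{(q+1)j}·v), g ∈ 𝔽_{q²}[X,Y] has total degree at most m−2, and ε ∈ 𝔽_{q²}. Then C is a cyclic code: whenever (c_j)_j ∈ C, the cyclically shifted vector (c_{j+1})_j also belongs to C. -/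
/-- For `2 ≤ m ≤ q − 1`, the set `C ⊆ 𝔽_{q²}^{ℤ/(q²−1)ℤ}` of all vectors
`(c_j)_j` with `c_j = (η_j·g(ξ_j, η_j) + ε·ξ_j^m)·ξ_j^{−m}`, where
`(ξ_j, η_j) = (ω^j·u, ω^{(q+1)j}·v)`, `g` has total degree at most `m − 2` and `ε ∈ 𝔽_{q²}`,
is a cyclic code: it is invariant under the cyclic shift `(c_j)_j ↦ (c_{j+1})_j`. -/
theorem stmt_5 (q : ℕ) (hq : IsPrimePow q) (hq3 : 3 ≤ q)
    (F : Type*) [Field F] [Fintype F] (hF : Fintype.card F = q ^ 2)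
    (ω : Fˣ) (hω : ∀ x : Fˣ, x ∈ Subgroup.zpowers ω)
    (u v : F) (hu : u ≠ 0) (huv : v ^ q + v = u ^ (q + 1))
    (m : ℕ) (hm : 2 ≤ m) (hm' : m ≤ q - 1)
    (Code : Set (ZMod (q ^ 2 - 1) → F))
    (hCode : Code = {c | ∃ (g : MvPolynomial (Fin 2) F) (ε : F),
        g.totalDegree ≤ m - 2 ∧
        ∀ j : ZMod (q ^ 2 - 1),
          c j = ((ω : F) ^ ((q + 1) * j.val) * v *
              MvPolynomial.eval
                ![(ω : F) ^ j.val * u, (ω : F) ^ ((q + 1) * j.val) * v] g +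
            ε * ((ω : F) ^ j.val * u) ^ m) * (((ω : F) ^ j.val * u) ^ m)⁻¹}) :
    ∀ c ∈ Code, (fun j => c (j + 1)) ∈ Code := by
  subst hCode
  rintro c ⟨g, ε, hdeg, hc⟩
  set W : F := (ω : F) with hWdef
  have hW : W ≠ 0 := Units.ne_zero ω
  have h9 : 9 ≤ q ^ 2 := by nlinarith
  have hn2 : 2 ≤ q ^ 2 - 1 := by omega
  haveI : NeZero (q ^ 2 - 1) := ⟨by omega⟩
  haveI : Fact (1 < q ^ 2 - 1) := ⟨by omega⟩
  -- ω has order dividing q² - 1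
  have hordU : ω ^ (q ^ 2 - 1) = 1 := by
    have h : ω ^ Nat.card Fˣ = 1 := pow_card_eq_one'
    rwa [Nat.card_units, Nat.card_eq_fintype_card, hF] at h
  have hord : W ^ (q ^ 2 - 1) = 1 := by
    rw [hWdef, ← Units.val_pow_eq_pow_val, hordU, Units.val_one]
  -- shifting the exponent
  have hval : ∀ (a : F), a ^ (q ^ 2 - 1) = 1 → ∀ j : ZMod (q ^ 2 - 1),
      a ^ ((j + 1).val) = a ^ j.val * a := by
    intro a ha j
    rw [ZMod.val_add, ZMod.val_one _, ← pow_eq_pow_mod _ ha, pow_succ]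
  -- the scaled polynomial
  set g' : MvPolynomial (Fin 2) F :=
    ∑ d ∈ g.support, MvPolynomial.monomial d
      (g.coeff d * (W ^ (q + 1 - m) * W ^ (d 0) * W ^ ((q + 1) * (d 1)))) with hg'
  have hdeg' : g'.totalDegree ≤ m - 2 := by
    apply MvPolynomial.totalDegree_finsetSum_le
    intro d hd
    refine (MvPolynomial.totalDegree_monomial_le _ _).trans ?_
    exact le_trans (MvPolynomial.le_totalDegree hd) hdeg
  have key : ∀ a b : F, MvPolynomial.eval ![a, b] g' =
      W ^ (q + 1 - m) * MvPolynomial.eval ![W * a, W ^ (q + 1) * b] g := by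
    intro a b
    rw [hg', map_sum, MvPolynomial.eval_eq', Finset.mul_sum]
    refine Finset.sum_congr rfl fun d _ => ?_
    rw [MvPolynomial.eval_monomial, Finsupp.prod_pow, Fin.prod_univ_two,
      Fin.prod_univ_two]
    simp only [Matrix.cons_val_zero, Matrix.cons_val_one, Matrix.head_cons]
    rw [mul_pow, mul_pow, ← pow_mul]
    ring
  refine ⟨g', ε, hdeg', fun j => ?_⟩
  simp only [hc]
  have h1 : W ^ ((j + 1).val) * u = W * (W ^ j.val * u) := by
    rw [hval W hord j]; ring
  have h2 : W ^ ((q + 1) * (j + 1).val) * v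
      = W ^ (q + 1) * (W ^ ((q + 1) * j.val) * v) := by
    rw [pow_mul, hval (W ^ (q + 1)) (by rw [← pow_mul, mul_comm, pow_mul, hord, one_pow]) j,
      ← pow_mul]
    ring
  rw [h1, h2, key (W ^ j.val * u) (W ^ ((q + 1) * j.val) * v)]
  set E : F := MvPolynomial.eval
    ![W * (W ^ j.val * u), W ^ (q + 1) * (W ^ ((q + 1) * j.val) * v)] g with hE
  set A : F := W ^ j.val * u with hA
  have hAne : A ≠ 0 := mul_ne_zero (pow_ne_zero _ hW) hu
  have hexp : W ^ (q + 1) = W ^ (q + 1 - m) * W ^ m := by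
    rw [← pow_add]
    congr 1
    omega
  rw [hexp]
  field_simp
  ring
end

section
/- Let q ≥ 3 and let τ ∈ 𝔽_{q²} satisfy τ^q + τ = 1. For (a, ε) ∈ 𝔽_{q²}² with (a, ε) ≠ (0, 0), let N(a, ε) be the number of x ∈ 𝔽_{q²}, x ≠ 0, with a·τ·x^{q+1} + ε·x² = 0. Then: (i) N(a, ε) ∈ {0, q−1}; (ii) the number of pairs (a, ε) ≠ (0,0) with N(a, ε) = q−1 equals (q+1)(q²−1); (iii) the number of pairs (a, ε) ≠ (0,0) with N(a, ε) = 0 equals q(q−1)(q²−1). Equivalently, the code C_𝓛(𝙳,𝙶) for m = 2 is a [q²−1, 2]_{q²} two-weight cyclic code with nonzero weights q²−q and q²−1, occurring (q+1)(q²−1) and q(q−1)(q²−1) times respectively. -/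
/-!
For `x ≠ 0` the equation `a τ x^{q+1} + ε x² = 0` reads `x^{q-1} = -ε/(aτ)`. Since `𝔽_{q²}ˣ` is
cyclic of order `(q-1)(q+1)`, the `(q-1)`-th power map has image the `(q+1)`-th roots of unity and
fibres of size `q-1`; hence `N(a, ε)` is `q-1` or `0` according as `(-ε/(aτ))^{q+1} = 1` or not
(junk division makes this uniform when `a = 0` or `ε = 0`). For each `a ≠ 0` the map
`ε ↦ -ε/(aτ)` is a bijection, which counts the pairs with `N = q-1`.
-/

open Finset

theorem IsCyclic.card_filter_pow_eq {G : Type*} [CommGroup G] [Fintype G] [IsCyclic G]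
    [DecidableEq G] {k m : ℕ} (hG : Fintype.card G = k * m) (c : G) :
    #{x | x ^ k = c} = if c ^ m = 1 then k else 0 := by
  have hk : 0 < k := Nat.pos_of_mul_pos_right (hG ▸ Fintype.card_pos)
  have hG' : Nat.card G = k * m := Nat.card_eq_fintype_card.trans hG
  have hker : Nat.card (powMonoidHom k : G →* G).ker = k := by
    rw [IsCyclic.card_powMonoidHom_ker, hG', Nat.gcd_mul_right_left]
  have hrange : (powMonoidHom k : G →* G).range = (powMonoidHom m).ker := by
    refine Subgroup.eq_of_le_of_card_ge ?_ ?_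
    · rintro _ ⟨x, rfl⟩
      simp only [MonoidHom.mem_ker, powMonoidHom_apply, ← pow_mul, ← hG', pow_card_eq_one']
    · rw [IsCyclic.card_powMonoidHom_range, IsCyclic.card_powMonoidHom_ker, hG',
        Nat.gcd_mul_left_left, Nat.gcd_mul_right_left, Nat.mul_div_cancel_left _ hk]
  split_ifs with hc
  · obtain ⟨a, rfl⟩ : c ∈ (powMonoidHom k : G →* G).range := hrange ▸ hc
    rw [← Fintype.card_subtype, ← Nat.card_eq_fintype_card]
    have hfiber : {x | x ^ k = powMonoidHom k a} = powMonoidHom k ⁻¹' {powMonoidHom k a} := rfl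
    rw [← Set.coe_ofPred, hfiber, Nat.card_congr ((powMonoidHom k).fiberEquivKer a), hker]
  · rw [card_eq_zero, filter_eq_empty_iff]
    rintro x - rfl
    exact hc (show x ^ k ∈ (powMonoidHom m).ker from hrange ▸ ⟨x, rfl⟩)

theorem FiniteField.card_filter_ne_zero_pow_eq {F : Type*} [Field F] [Fintype F] [DecidableEq F]
    {k m : ℕ} (hF : Fintype.card Fˣ = k * m) (c : F) :
    #{x : F | x ≠ 0 ∧ x ^ k = c} = if c ^ m = 1 then k else 0 := by
  by_cases hc : c = 0
  · have hm : m ≠ 0 := by rintro rfl; simp at hF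
    rw [if_neg (by simp [hc, hm]), card_eq_zero, filter_eq_empty_iff]
    rintro x - ⟨hx, rfl⟩
    exact hx (pow_eq_zero_iff'.mp hc).1
  · have hunits : ({x : F | x ≠ 0 ∧ x ^ k = c} : Finset F) =
        ({v : Fˣ | v ^ k = Units.mk0 c hc} : Finset Fˣ).map ⟨Units.val, Units.val_injective⟩ := by
      ext x
      simp only [mem_filter, mem_univ, true_and, mem_map, Function.Embedding.coeFn_mk,
        Units.ext_iff, Units.val_pow_eq_pow_val, Units.val_mk0]
      exact ⟨fun ⟨hx, h⟩ => ⟨Units.mk0 x hx, h, rfl⟩, fun ⟨v, h, hv⟩ => hv ▸ ⟨v.ne_zero, h⟩⟩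
    rw [hunits, card_map, IsCyclic.card_filter_pow_eq hF]
    simp [Units.ext_iff]

theorem FiniteField.card_filter_pow_eq_one {F : Type*} [Field F] [Fintype F] [DecidableEq F]
    {k m : ℕ} (hF : Fintype.card Fˣ = k * m) : #{x : F | x ^ k = 1} = k := by
  have hk : k ≠ 0 := by rintro rfl; simp at hF
  calc #{x : F | x ^ k = 1}
      _ = #{x : F | x ≠ 0 ∧ x ^ k = 1} := congrArg Finset.card <| filter_congr fun x _ =>
        ⟨fun h => ⟨by rintro rfl; simp [hk] at h, h⟩, And.right⟩
      _ = k := by rw [card_filter_ne_zero_pow_eq hF, one_pow, if_pos rfl]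

theorem FiniteField.card_filter_mul_pow_add_mul_sq_eq_zero {F : Type*} [Field F] [Fintype F]
    [DecidableEq F] {k m : ℕ} (hF : Fintype.card Fˣ = k * m) {b ε : F} (hbε : (b, ε) ≠ (0, 0)) :
    #{x : F | x ≠ 0 ∧ b * x ^ (k + 2) + ε * x ^ 2 = 0} = if (-ε / b) ^ m = 1 then k else 0 := by
  rw [← card_filter_ne_zero_pow_eq hF]
  refine congrArg Finset.card (filter_congr fun x _ => and_congr_right fun hx => ?_)
  rw [show b * x ^ (k + 2) + ε * x ^ 2 = (b * x ^ k + ε) * x ^ 2 by ring, mul_eq_zero,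
    or_iff_left (pow_ne_zero 2 hx)]
  by_cases hb : b = 0
  · have hε : ε ≠ 0 := fun hε => hbε (by rw [hb, hε])
    simp [hb, hε, hx]
  · rw [eq_div_iff hb]
    constructor <;> intro h <;> linear_combination h

theorem card_filter_prod_neg_div_mul {F : Type*} [Field F] [Fintype F] [DecidableEq F] {b : F}
    (hb : b ≠ 0) (P : F → Prop) [DecidablePred P] (hP : ¬P 0) :
    #{p : F × F | P (-p.2 / (p.1 * b))} = (Fintype.card F - 1) * #{c | P c} := by
  have hfiber (a : F) : #{ε | P (-ε / (a * b))} = if a ≠ 0 then #{c | P c} else 0 := by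
    split_ifs with ha
    · refine card_equiv (Equiv.mulLeft₀ _ (neg_ne_zero.mpr (inv_ne_zero (mul_ne_zero ha hb))))
        fun ε => ?_
      simp [div_eq_inv_mul]
    · simp [not_not.mp ha, hP]
  rw [card_filter, Fintype.sum_prod_type]
  simp only [← card_filter, hfiber]
  rw [← sum_filter, sum_const, filter_ne', card_erase_of_mem (mem_univ _), card_univ,
    smul_eq_mul]

theorem two_le_of_card_eq_sq {α : Type*} [Fintype α] [Nontrivial α] {q : ℕ}
    (h : Fintype.card α = q ^ 2) : 2 ≤ q := by
  have : 1 < q ^ 2 := h ▸ Fintype.one_lt_card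
  nlinarith

def zeroCount {F : Type*} [Field F] [Fintype F] [DecidableEq F] (q : ℕ) (τ : F) (a ε : F) : ℕ :=
  #{x : F | x ≠ 0 ∧ a * τ * x ^ (q + 1) + ε * x ^ 2 = 0}

section zeroCount

variable {F : Type*} [Field F] [Fintype F] [DecidableEq F] {q : ℕ} {τ : F}

theorem card_units_eq_of_card_eq_sq (hF : Fintype.card F = q ^ 2) :
    Fintype.card Fˣ = (q - 1) * (q + 1) := by
  have hq := two_le_of_card_eq_sq hF
  rw [Fintype.card_units, hF]
  zify [show 1 ≤ q ^ 2 by nlinarith, show 1 ≤ q by omega]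
  ring

theorem zeroCount_eq_ite (hF : Fintype.card F = q ^ 2) (hτ : τ ≠ 0) {a ε : F}
    (h : (a, ε) ≠ (0, 0)) :
    zeroCount q τ a ε = if (-ε / (a * τ)) ^ (q + 1) = 1 then q - 1 else 0 := by
  have hq := two_le_of_card_eq_sq hF
  have := FiniteField.card_filter_mul_pow_add_mul_sq_eq_zero (card_units_eq_of_card_eq_sq hF)
    (b := a * τ) (ε := ε) (by simpa [hτ] using h)
  rwa [show q - 1 + 2 = q + 1 by omega] at this

theorem zeroCount_eq_zero_or (hF : Fintype.card F = q ^ 2) (hτ : τ ≠ 0) {a ε : F}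
    (h : (a, ε) ≠ (0, 0)) : zeroCount q τ a ε = 0 ∨ zeroCount q τ a ε = q - 1 := by
  rw [zeroCount_eq_ite hF hτ h]
  split_ifs <;> simp

theorem card_filter_zeroCount_eq_sub_one (hF : Fintype.card F = q ^ 2) (hτ : τ ≠ 0) :
    #{p : F × F | p ≠ (0, 0) ∧ zeroCount q τ p.1 p.2 = q - 1} = (q + 1) * (q ^ 2 - 1) := by
  have hq := two_le_of_card_eq_sq hF
  have hne_zero (p : F × F) (h : (-p.2 / (p.1 * τ)) ^ (q + 1) = 1) : p ≠ (0, 0) := by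
    rintro rfl
    simp at h
  have hfilter : ({p : F × F | p ≠ (0, 0) ∧ zeroCount q τ p.1 p.2 = q - 1} : Finset (F × F)) =
      ({p : F × F | (-p.2 / (p.1 * τ)) ^ (q + 1) = 1} : Finset (F × F)) := by
    refine filter_congr fun p _ => ⟨fun ⟨hp, hNp⟩ => ?_, fun h => ⟨hne_zero p h, ?_⟩⟩
    · rw [zeroCount_eq_ite hF hτ hp] at hNp
      split_ifs at hNp with h
      · exact h
      · omega
    · rw [zeroCount_eq_ite hF hτ (hne_zero p h), if_pos h]
  rw [hfilter, card_filter_prod_neg_div_mul hτ (· ^ (q + 1) = 1) (by simp),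
    FiniteField.card_filter_pow_eq_one ((card_units_eq_of_card_eq_sq hF).trans (mul_comm _ _)),
    hF, mul_comm]

theorem card_filter_zeroCount_eq_zero (hF : Fintype.card F = q ^ 2) (hτ : τ ≠ 0) :
    #{p : F × F | p ≠ (0, 0) ∧ zeroCount q τ p.1 p.2 = 0} = q * (q - 1) * (q ^ 2 - 1) := by
  have hq := two_le_of_card_eq_sq hF
  have hsplit := card_filter_add_card_filter_not (s := ({p : F × F | p ≠ (0, 0)} : Finset _))
    (fun p => zeroCount q τ p.1 p.2 = q - 1)
  have hcompl : ({p : F × F | p ≠ (0, 0) ∧ ¬zeroCount q τ p.1 p.2 = q - 1} : Finset (F × F)) =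
      ({p : F × F | p ≠ (0, 0) ∧ zeroCount q τ p.1 p.2 = 0} : Finset (F × F)) :=
    filter_congr fun p _ => and_congr_right fun hp => by
      rcases zeroCount_eq_zero_or hF hτ hp with h | h <;> omega
  rw [filter_filter, filter_filter, card_filter_zeroCount_eq_sub_one hF hτ, hcompl, filter_ne',
    card_erase_of_mem (mem_univ _), card_univ, Fintype.card_prod, hF] at hsplit
  have harith : (q + 1) * (q ^ 2 - 1) + q * (q - 1) * (q ^ 2 - 1) = q ^ 2 * q ^ 2 - 1 := by
    have h1 : 1 ≤ q ^ 2 := by nlinarith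
    zify [h1, show 1 ≤ q by omega, show 1 ≤ q ^ 2 * q ^ 2 by nlinarith]
    ring
  omega

end zeroCount

theorem stmt_6_general (q : ℕ)
    (F : Type*) [Field F] [Fintype F] [DecidableEq F] (hF : Fintype.card F = q ^ 2)
    (τ : F) (hτ : τ ^ q + τ = 1)
    (N : F → F → ℕ)
    (hN : ∀ a ε : F, N a ε =
      (Finset.univ.filter fun x : F => x ≠ 0 ∧ a * τ * x ^ (q + 1) + ε * x ^ 2 = 0).card) :
    (∀ a ε : F, (a, ε) ≠ (0, 0) → N a ε = 0 ∨ N a ε = q - 1) ∧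
    (Finset.univ.filter fun p : F × F => p ≠ (0, 0) ∧ N p.1 p.2 = q - 1).card
      = (q + 1) * (q ^ 2 - 1) ∧
    (Finset.univ.filter fun p : F × F => p ≠ (0, 0) ∧ N p.1 p.2 = 0).card
      = q * (q - 1) * (q ^ 2 - 1) := by
  have hτ0 : τ ≠ 0 := by
    rintro rfl
    simp [zero_pow (by have := two_le_of_card_eq_sq hF; omega : q ≠ 0)] at hτ
  obtain rfl : N = zeroCount q τ := funext₂ hN
  exact ⟨fun a ε => zeroCount_eq_zero_or hF hτ0, card_filter_zeroCount_eq_sub_one hF hτ0,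
    card_filter_zeroCount_eq_zero hF hτ0⟩

/-- Let `q ≥ 3` and `τ^q + τ = 1`. For `(a, ε) ≠ (0, 0)` let `N(a, ε)` be the
number of `x ∈ 𝔽_{q²}`, `x ≠ 0`, with `a·τ·x^{q+1} + ε·x² = 0`. Then (i) `N(a,ε) ∈ {0, q−1}`;
(ii) the number of pairs `(a, ε) ≠ (0,0)` with `N = q−1` equals `(q+1)(q²−1)`;
(iii) the number of pairs `(a, ε) ≠ (0,0)` with `N = 0` equals `q(q−1)(q²−1)`.
Equivalently, the `m = 2` code `C_𝓛(𝙳,𝙶)` is a `[q²−1, 2]_{q²}` two-weight cyclic code with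
nonzero weights `q²−q` and `q²−1`, occurring `(q+1)(q²−1)` and `q(q−1)(q²−1)` times. -/
theorem stmt_6 (q : ℕ) (hq : IsPrimePow q) (hq3 : 3 ≤ q)
    (F : Type*) [Field F] [Fintype F] [DecidableEq F] (hF : Fintype.card F = q ^ 2)
    (τ : F) (hτ : τ ^ q + τ = 1)
    (N : F → F → ℕ)
    (hN : ∀ a ε : F, N a ε =
      (Finset.univ.filter fun x : F => x ≠ 0 ∧ a * τ * x ^ (q + 1) + ε * x ^ 2 = 0).card) :
    (∀ a ε : F, (a, ε) ≠ (0, 0) → N a ε = 0 ∨ N a ε = q - 1) ∧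
    (Finset.univ.filter fun p : F × F => p ≠ (0, 0) ∧ N p.1 p.2 = q - 1).card
      = (q + 1) * (q ^ 2 - 1) ∧
    (Finset.univ.filter fun p : F × F => p ≠ (0, 0) ∧ N p.1 p.2 = 0).card
      = q * (q - 1) * (q ^ 2 - 1) :=
  stmt_6_general q F hF τ hτ N hN
end

section
/- Let q ≥ 4 and let τ ∈ 𝔽_{q²} satisfy τ^q + τ = 1. For every (b₀, b₁, b₂, ε) ∈ 𝔽_{q²}⁴ with (b₀, b₁, b₂, ε) ≠ (0, 0, 0, 0), the number N(b₀,b₁,b₂,ε) of x ∈ 𝔽_{q²}, x ≠ 0, with τ·x^{q+1}·(b₀ + b₁·x + b₂·τ·x^{q+1}) + ε·x³ = 0 is at most q+1. Consequently every nonzero codeword of the m = 3 code C_𝓛(𝙳,𝙶) has weight at least q²−q−2. -/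
open Polynomial

lemma stmt7_card_le_natDegree {F : Type*} [Field F] [DecidableEq F]
    (p : Polynomial F) (hp : p ≠ 0) (S : Finset F)
    (h : ∀ x ∈ S, p.eval x = 0) : S.card ≤ p.natDegree := by
  have hsub : S ⊆ p.roots.toFinset := by
    intro x hx
    rw [Multiset.mem_toFinset, Polynomial.mem_roots']
    exact ⟨hp, h x hx⟩
  calc S.card ≤ p.roots.toFinset.card := Finset.card_le_card hsub
    _ ≤ Multiset.card p.roots := p.roots.toFinset_card_le
    _ ≤ p.natDegree := p.card_roots'

/-- Let `q ≥ 4` and `τ^q + τ = 1`. For every `(b₀, b₁, b₂, ε) ≠ (0,0,0,0)`,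
the number `N(b₀,b₁,b₂,ε)` of `x ∈ 𝔽_{q²}`, `x ≠ 0`, with
`τ·x^{q+1}·(b₀ + b₁·x + b₂·τ·x^{q+1}) + ε·x³ = 0` is at most `q + 1`. Consequently every
nonzero codeword of the `m = 3` code `C_𝓛(𝙳,𝙶)` has weight `q² − 1 − N ≥ q² − q − 2`. -/
theorem stmt_7 (q : ℕ) (hq : IsPrimePow q) (hq4 : 4 ≤ q)
    (F : Type*) [Field F] [Fintype F] [DecidableEq F] (hF : Fintype.card F = q ^ 2)
    (τ : F) (hτ : τ ^ q + τ = 1)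
    (N : F → F → F → F → ℕ)
    (hN : ∀ b₀ b₁ b₂ ε : F, N b₀ b₁ b₂ ε =
      (Finset.univ.filter fun x : F => x ≠ 0 ∧
        τ * x ^ (q + 1) * (b₀ + b₁ * x + b₂ * τ * x ^ (q + 1)) + ε * x ^ 3 = 0).card) :
    ∀ b₀ b₁ b₂ ε : F, (b₀, b₁, b₂, ε) ≠ (0, 0, 0, 0) →
      N b₀ b₁ b₂ ε ≤ q + 1 ∧ q ^ 2 - q - 2 ≤ q ^ 2 - 1 - N b₀ b₁ b₂ ε := by
  -- basic facts about τ
  have hq0 : q ≠ 0 := by omega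
  have hτ0 : τ ≠ 0 := by
    intro h; rw [h, zero_pow hq0, zero_add] at hτ
    exact one_ne_zero hτ.symm
  have hτ1 : (1 : F) - τ ≠ 0 := by
    intro h
    have hτe : τ = 1 := by linear_combination -h
    rw [hτe, one_pow] at hτ
    exact one_ne_zero (by linear_combination hτ)
  have hτq : τ ^ q = 1 - τ := eq_sub_of_add_eq hτ
  -- characteristic and Frobenius
  obtain ⟨p, k, hp, hk, hpk⟩ := hq
  have hpp : p.Prime := Nat.prime_iff.mpr hp
  haveI hfp : Fact p.Prime := ⟨hpp⟩
  have hcharF : CharP F p := by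
    obtain ⟨n, hrp, hcard⟩ := FiniteField.card F (ringChar F)
    have hpr : p = ringChar F := by
      have hdvd : p ∣ (ringChar F) ^ (n : ℕ) := by
        rw [← hcard, hF, ← hpk, ← pow_mul]
        exact dvd_pow_self p (by positivity)
      exact (Nat.prime_dvd_prime_iff_eq hpp hrp).mp (hpp.dvd_of_dvd_pow hdvd)
    rw [hpr]; exact ringChar.charP F
  haveI := hcharF
  have hadd : ∀ a b : F, (a + b) ^ q = a ^ q + b ^ q := by
    intro a b; rw [← hpk]; exact add_pow_char_pow a b p k
  have hqq : ∀ a : F, (a ^ q) ^ q = a := by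
    intro a
    rw [← pow_mul]
    have h2 : q * q = Fintype.card F := by rw [hF]; ring
    rw [h2]; exact FiniteField.pow_card a
  have hzq : (0 : F) ^ q = 0 := zero_pow hq0
  -- main bound on the cardinality
  have key : ∀ b₀ b₁ b₂ ε : F, (b₀, b₁, b₂, ε) ≠ (0, 0, 0, 0) →
      (Finset.univ.filter fun x : F => x ≠ 0 ∧
        τ * x ^ (q + 1) * (b₀ + b₁ * x + b₂ * τ * x ^ (q + 1)) + ε * x ^ 3 = 0).card ≤ q + 1 := by
    intro b₀ b₁ b₂ ε hne
    by_cases hb₂ : b₂ = 0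
    · -- the easy case: polynomial of degree ≤ q+1 directly
      subst hb₂
      set L₀ : Polynomial F := C (b₁ * τ) * X ^ (q+1) + C (b₀ * τ) * X ^ q + C ε * X ^ 2 with hL₀
      have hLne : L₀ ≠ 0 := by
        intro h
        have hcoeff : ∀ m : ℕ, L₀.coeff m = 0 := by intro m; rw [h]; simp
        have h2 := hcoeff 2
        have hq' := hcoeff q
        have hq1 := hcoeff (q+1)
        rw [hL₀] at h2 hq' hq1
        simp only [coeff_add, coeff_C_mul, coeff_X_pow] at h2 hq' hq1
        rw [if_neg (by omega), if_neg (by omega), if_pos trivial] at h2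
        rw [if_neg (by omega), if_pos trivial, if_neg (by omega)] at hq'
        rw [if_pos trivial, if_neg (by omega), if_neg (by omega)] at hq1
        simp only [mul_one, mul_zero, add_zero, zero_add] at h2 hq' hq1
        have hb₀ : b₀ = 0 := by
          rcases mul_eq_zero.mp hq' with h | h
          · exact h
          · exact absurd h hτ0
        have hb₁ : b₁ = 0 := by
          rcases mul_eq_zero.mp hq1 with h | h
          · exact h
          · exact absurd h hτ0
        exact hne (by rw [hb₀, hb₁, h2])
      have hdeg : L₀.natDegree ≤ q + 1 := by
        rw [hL₀]; compute_degree <;> omega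
      calc (Finset.univ.filter fun x : F => x ≠ 0 ∧
            τ * x ^ (q + 1) * (b₀ + b₁ * x + 0 * τ * x ^ (q + 1)) + ε * x ^ 3 = 0).card
          ≤ L₀.natDegree := by
            apply stmt7_card_le_natDegree L₀ hLne
            intro x hx
            rw [Finset.mem_filter] at hx
            obtain ⟨-, hx0, heq⟩ := hx
            have hev : L₀.eval x = b₁ * τ * x ^ (q+1) + b₀ * τ * x ^ q + ε * x ^ 2 := by
              rw [hL₀]; simp
            have hmul : x * L₀.eval x = 0 := by
              rw [hev]; linear_combination heq
            exact (mul_eq_zero.mp hmul).resolve_left hx0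
        _ ≤ q + 1 := hdeg
    · -- the hard case b₂ ≠ 0
      set E : Polynomial F :=
          C (b₂ ^ (q+1) * τ^2 * (1 - τ)^2) * X ^ (q+1)
        + C (b₂ * τ^2 * b₁ ^ q * (1 - τ)) * X ^ q
        + C (-(ε ^ q * b₁ * τ)) * X ^ (q-1)
        + C (-(ε ^ q * b₀ * τ)) * X ^ (q-2)
        + C (b₂ * τ^2 * b₀ ^ q * (1 - τ) - ε ^ (q+1)) with hE
      have hEne : E ≠ 0 := by
        intro h
        have hcoeff := congrArg (fun p : Polynomial F => p.coeff (q+1)) h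
        rw [hE] at hcoeff
        simp only [coeff_add, coeff_C_mul, coeff_X_pow, coeff_C, coeff_zero] at hcoeff
        rw [if_pos trivial, if_neg (by omega), if_neg (by omega), if_neg (by omega),
          if_neg (by omega)] at hcoeff
        simp only [mul_one, mul_zero, add_zero] at hcoeff
        exact (mul_ne_zero (mul_ne_zero (pow_ne_zero _ hb₂) (pow_ne_zero _ hτ0))
          (pow_ne_zero _ hτ1)) hcoeff
      have hdeg : E.natDegree ≤ q + 1 := by
        rw [hE]; compute_degree <;> omega
      calc (Finset.univ.filter fun x : F => x ≠ 0 ∧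
            τ * x ^ (q + 1) * (b₀ + b₁ * x + b₂ * τ * x ^ (q + 1)) + ε * x ^ 3 = 0).card
          ≤ E.natDegree := by
            apply stmt7_card_le_natDegree E hEne
            intro x hx
            rw [Finset.mem_filter] at hx
            obtain ⟨-, hx0, heq⟩ := hx
            -- derive hL
            have hxL : x * (b₀ * τ * x ^ q + b₁ * τ * x * x ^ q
                + b₂ * (τ * x ^ q) * (τ * x ^ q) * x + ε * (x * x)) = 0 := by
              linear_combination heq
            have hL : b₀ * τ * x ^ q + b₁ * τ * x * x ^ q
                + b₂ * (τ * x ^ q) * (τ * x ^ q) * x + ε * (x * x) = 0 :=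
              (mul_eq_zero.mp hxL).resolve_left hx0
            -- derive hC by taking q-th powers
            have hC0 : (b₀ * τ * x ^ q + b₁ * τ * x * x ^ q
                + b₂ * (τ * x ^ q) * (τ * x ^ q) * x + ε * (x * x)) ^ q = 0 := by
              rw [hL, hzq]
            rw [hadd, hadd, hadd] at hC0
            simp only [mul_pow] at hC0
            rw [hτq] at hC0
            simp only [hqq] at hC0
            -- power identities for the subtracted exponents
            have e3 : x ^ 2 * x ^ (q-1) = x ^ q * x := by
              rw [← pow_add]
              have h23 : 2 + (q - 1) = q + 1 := by omega
              rw [h23, pow_succ]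
            have e4 : x ^ 2 * x ^ (q-2) = x ^ q := by
              rw [← pow_add]
              have h24 : 2 + (q - 2) = q := by omega
              rw [h24]
            have hev : E.eval x =
                b₂ ^ (q+1) * τ^2 * (1 - τ)^2 * x ^ (q+1)
              + b₂ * τ^2 * b₁ ^ q * (1 - τ) * x ^ q
              + (-(ε ^ q * b₁ * τ)) * x ^ (q-1)
              + (-(ε ^ q * b₀ * τ)) * x ^ (q-2)
              + (b₂ * τ^2 * b₀ ^ q * (1 - τ) - ε ^ (q+1)) := by
              rw [hE]; simp
            have hx2 : x ^ 2 * E.eval x = 0 := by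
              rw [hev]
              linear_combination (b₂ * τ^2 * x) * hC0 - ε ^ q * hL
                + (-(ε ^ q * b₁ * τ)) * e3 + (-(ε ^ q * b₀ * τ)) * e4
            have hx2ne : x ^ 2 ≠ 0 := pow_ne_zero _ hx0
            exact (mul_eq_zero.mp hx2).resolve_left hx2ne
        _ ≤ q + 1 := hdeg
  intro b₀ b₁ b₂ ε hne
  have h1 : N b₀ b₁ b₂ ε ≤ q + 1 := by rw [hN]; exact key b₀ b₁ b₂ ε hne
  refine ⟨h1, ?_⟩
  obtain ⟨a, ha⟩ : ∃ a, q ^ 2 = a := ⟨_, rfl⟩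
  rw [ha]
  omega
end

section
/- Let q ≥ 3 be a prime power, let τ ∈ 𝔽_{q²} with τ ≠ 0, and let b₀, b₂ ∈ 𝔽_{q²}. Then the number of x ∈ 𝔽_{q²} satisfying b₂·τ²·x^{2q−1} + b₀·τ·x^{q−2} = 1 is at most 6. -/
open Polynomial

/-- Elimination identity coming from the resultant of the two conjugate curve
equations (computed via Sylvester-matrix cofactors). -/
lemma stmt8_elim {F : Type*} [CommRing F] (c2 c0 d2 d0 x y : F)
    (hA : c2 * x * y ^ 2 + c0 * y - x ^ 2 = 0)
    (hB : d2 * x ^ 2 * y + d0 * x - y ^ 2 = 0) :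
    x * ((-(c2 * d2 ^ 2)) * x ^ 6
        + (1 - c0 * d2 - 2 * c2 * d0 + c2 ^ 2 * d0 ^ 2 - c2 * c0 * d2 * d0) * x ^ 3
        + (-(c0 ^ 2 * d0))) = 0 := by
  linear_combination
    (-x ^ 2 - c0 * y + c0 * d2 * x ^ 2 + c2 * d0 * x ^ 2 - c2 * d2 * x ^ 3 * y
      + c2 * d2 ^ 2 * x ^ 5) * hA
    + (-c0 ^ 2 - c2 * x ^ 3 - c2 * c0 * x * y - c2 * c0 * d2 * x ^ 3 + c2 ^ 2 * d0 * x ^ 3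
      - c2 ^ 2 * d2 * x ^ 4 * y) * hB

/-- Let `q ≥ 3` be a prime power, `τ ∈ 𝔽_{q²}` with `τ ≠ 0`, and
`b₀, b₂ ∈ 𝔽_{q²}`. Then the number of `x ∈ 𝔽_{q²}` satisfying
`b₂·τ²·x^{2q−1} + b₀·τ·x^{q−2} = 1` is at most `6`. -/
theorem stmt_8 (q : ℕ) (hq : IsPrimePow q) (hq3 : 3 ≤ q)
    (F : Type*) [Field F] [Fintype F] [DecidableEq F] (hF : Fintype.card F = q ^ 2)
    (τ : F) (hτ : τ ≠ 0) (b₀ b₂ : F) :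
    (Finset.univ.filter fun x : F =>
        b₂ * τ ^ 2 * x ^ (2 * q - 1) + b₀ * τ * x ^ (q - 2) = 1).card ≤ 6 := by
  classical
  -- Characteristic setup: `q` is a power of the characteristic.
  obtain ⟨pp, k, hpp, hk, hpk⟩ := hq
  haveI : CharP F (ringChar F) := ringChar.charP F
  obtain ⟨n, hrprime, hcard⟩ := FiniteField.card F (ringChar F)
  haveI : Fact (ringChar F).Prime := ⟨hrprime⟩
  have hppprime : pp.Prime := Nat.prime_iff.mpr hpp
  have hrpp : ringChar F = pp := by
    have hdvd : ringChar F ∣ pp ^ (2 * k) := by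
      have he : ringChar F ^ (n : ℕ) = pp ^ (2 * k) := by
        rw [← hcard, hF, ← hpk, ← pow_mul, mul_comm]
      rw [← he]
      exact dvd_pow_self _ n.pos.ne'
    exact (Nat.prime_dvd_prime_iff_eq hrprime hppprime).mp
      (hrprime.dvd_of_dvd_pow hdvd)
  have hqrk : q = ringChar F ^ k := by rw [hrpp, hpk]
  -- Frobenius is additive.
  have frob_add : ∀ u v : F, (u + v) ^ q = u ^ q + v ^ q := by
    intro u v
    rw [hqrk]
    exact add_pow_char_pow u v (ringChar F) k
  -- `x ^ (q^2) = x`.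
  have pow_card : ∀ x : F, x ^ q ^ 2 = x := by
    intro x
    rw [← hF]
    exact FiniteField.pow_card x
  -- Coefficients of the degree-6 eliminant.
  set c2 : F := b₂ * τ ^ 2 with hc2
  set c0 : F := b₀ * τ with hc0
  set d2 : F := b₂ ^ q * τ ^ (2 * q) with hd2
  set d0 : F := b₀ ^ q * τ ^ q with hd0
  set α : F := -(c2 * d2 ^ 2) with hα
  set β : F := 1 - c0 * d2 - 2 * c2 * d0 + c2 ^ 2 * d0 ^ 2 - c2 * c0 * d2 * d0 with hβ
  set γ : F := -(c0 ^ 2 * d0) with hγ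
  set p : F[X] := C α * X ^ 6 + C β * X ^ 3 + C γ with hp
  have hcoeff3 : p.coeff 3 = β := by
    rw [hp]
    simp [coeff_X_pow, coeff_C]
  have hcoeff0 : p.coeff 0 = γ := by
    rw [hp]
    simp [coeff_X_pow, coeff_C]
  -- The eliminant polynomial is nonzero.
  have hpne : p ≠ 0 := by
    by_cases hb0 : b₀ = 0
    · have hβ1 : β = 1 := by
        rw [hβ, hc0, hd0, hb0, zero_mul, zero_pow (by omega : q ≠ 0), zero_mul]
        ring
      intro h
      rw [h, coeff_zero, hβ1] at hcoeff3
      exact one_ne_zero hcoeff3.symm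
    · have hγ0 : γ ≠ 0 := by
        rw [hγ, hc0, hd0]
        refine neg_ne_zero.mpr (mul_ne_zero ?_ ?_)
        · exact pow_ne_zero _ (mul_ne_zero hb0 hτ)
        · exact mul_ne_zero (pow_ne_zero _ hb0) (pow_ne_zero _ hτ)
      intro h
      rw [h, coeff_zero] at hcoeff0
      exact hγ0 hcoeff0.symm
  -- Every solution is a root of `p`.
  have hsub : (Finset.univ.filter fun x : F =>
      c2 * x ^ (2 * q - 1) + c0 * x ^ (q - 2) = 1) ⊆ p.roots.toFinset := by
    intro x hx
    rw [Finset.mem_filter] at hx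
    obtain ⟨-, hxeq⟩ := hx
    have hx0 : x ≠ 0 := by
      intro h
      rw [h, zero_pow (by omega : 2 * q - 1 ≠ 0), zero_pow (by omega : q - 2 ≠ 0)] at hxeq
      simp at hxeq
    set y : F := x ^ q with hy
    -- Equation A: multiply the original equation by x².
    have e1 : x ^ (2 * q - 1) * x ^ 2 = x * y ^ 2 := by
      rw [hy, ← pow_mul, ← pow_add]
      have h2 : x * x ^ (q * 2) = x ^ (q * 2 + 1) := (pow_succ' x (q * 2)).symm
      rw [h2]
      congr 1
      omega
    have e2 : x ^ (q - 2) * x ^ 2 = y := by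
      rw [hy, ← pow_add]
      congr 1
      omega
    have hA : c2 * x * y ^ 2 + c0 * y - x ^ 2 = 0 := by
      calc c2 * x * y ^ 2 + c0 * y - x ^ 2
          = c2 * (x ^ (2 * q - 1) * x ^ 2) + c0 * (x ^ (q - 2) * x ^ 2) - x ^ 2 := by
            rw [e1, e2]; ring
        _ = (c2 * x ^ (2 * q - 1) + c0 * x ^ (q - 2)) * x ^ 2 - x ^ 2 := by ring
        _ = 0 := by rw [hxeq]; ring
    -- Equation B: apply Frobenius to equation A.
    have hyq : y ^ q = x := by
      rw [hy, ← pow_mul, ← pow_two, pow_card]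
    have l1 : (c2 * x * y ^ 2) ^ q = d2 * x ^ 2 * y := by
      rw [hc2, hd2]
      calc (b₂ * τ ^ 2 * x * y ^ 2) ^ q
          = b₂ ^ q * (τ ^ 2) ^ q * x ^ q * (y ^ 2) ^ q := by
            rw [mul_pow, mul_pow, mul_pow]
        _ = b₂ ^ q * τ ^ (2 * q) * y * (y ^ q) ^ 2 := by
            rw [← pow_mul, ← hy, pow_right_comm]
        _ = b₂ ^ q * τ ^ (2 * q) * x ^ 2 * y := by rw [hyq]; ring
    have l2 : (c0 * y) ^ q = d0 * x := by
      rw [hc0, hd0, mul_pow, mul_pow, hyq]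
    have l3 : (x ^ 2) ^ q = y ^ 2 := by
      rw [pow_right_comm, ← hy]
    have hB : d2 * x ^ 2 * y + d0 * x - y ^ 2 = 0 := by
      have hA' : c2 * x * y ^ 2 + c0 * y = x ^ 2 := sub_eq_zero.mp hA
      have h1 : (c2 * x * y ^ 2 + c0 * y) ^ q = (x ^ 2) ^ q := by rw [hA']
      rw [frob_add, l1, l2, l3] at h1
      linear_combination h1
    have key := stmt8_elim c2 c0 d2 d0 x y hA hB
    have hev : α * x ^ 6 + β * x ^ 3 + γ = 0 := by
      rcases mul_eq_zero.mp key with h | h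
      · exact absurd h hx0
      · rw [hα, hβ, hγ]; exact h
    rw [Multiset.mem_toFinset, mem_roots hpne]
    rw [hp]
    simp only [IsRoot, eval_add, eval_mul, eval_C, eval_pow, eval_X]
    exact hev
  calc (Finset.univ.filter fun x : F =>
      c2 * x ^ (2 * q - 1) + c0 * x ^ (q - 2) = 1).card
      ≤ p.roots.toFinset.card := Finset.card_le_card hsub
    _ ≤ Multiset.card p.roots := Multiset.toFinset_card_le _
    _ ≤ p.natDegree := Polynomial.card_roots' p
    _ ≤ 6 := by
        rw [hp]
        compute_degree
end

section
/- Let q > 5 and let τ ∈ 𝔽_{q²} satisfy τ^q + τ = 1. For (b₀, b₁, b₂, ε) ∈ 𝔽_{q²}⁴ with (b₀, b₁, b₂, ε) ≠ (0,0,0,0), one has N(b₀,b₁,b₂,ε) = q+1 (equivalently, the corresponding codeword of the m = 3 code has minimum weight q²−q−2) if and only if ε = 0, b₁ = 0, b₂ ≠ 0, and b₀ = t·τ·b₂ for some t ∈ 𝔽_q with t ≠ 0. Moreover, the number of such tuples (b₀, b₁, b₂, ε) is exactly (q²−1)(q−1). -/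
open Polynomial Finset

lemma card_le_deg {F : Type*} [Field F] [DecidableEq F] (p : F[X]) (hp : p ≠ 0)
    (s : Finset F) (h : ∀ x ∈ s, p.eval x = 0) : s.card ≤ p.natDegree := by
  classical
  have hsub : s ⊆ p.roots.toFinset := fun x hx =>
    Multiset.mem_toFinset.2 (Polynomial.mem_roots'.2 ⟨hp, h x hx⟩)
  calc s.card ≤ p.roots.toFinset.card := Finset.card_le_card hsub
    _ ≤ Multiset.card p.roots := p.roots.toFinset_card_le
    _ ≤ p.natDegree := p.card_roots'

lemma quad_resultant {F : Type*} [Field F] {a b c a' b' c' n : F} (hn : n ≠ 0)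
    (h1 : a*n^2 + b*n + c = 0) (h2 : a'*n^2 + b'*n + c' = 0) :
    (a*c' - a'*c)^2 = (a*b' - a'*b) * (b*c' - b'*c) := by
  have L1 : (a*b' - a'*b)*n + (a*c' - a'*c) = 0 := by linear_combination a*h2 - a'*h1
  have L2' : n*((a*c' - a'*c)*n + (b*c' - b'*c)) = 0 := by linear_combination c'*h1 - c*h2
  have L2 : (a*c' - a'*c)*n + (b*c' - b'*c) = 0 := by
    rcases mul_eq_zero.1 L2' with h | h
    · exact absurd h hn
    · exact h
  linear_combination (a*c' - a'*c) * L1 - (a*b' - a'*b) * L2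

lemma fiber_count {q : ℕ} (hq2 : 2 ≤ q) {F : Type*} [Field F] [Fintype F] [DecidableEq F]
    (hF : Fintype.card F = q^2) :
    ((univ.filter fun t : F => t ≠ 0 ∧ t^q = t).card = q - 1) ∧
    (∀ c : F, c ≠ 0 → c^q = c →
      (univ.filter fun x : F => x ≠ 0 ∧ x^(q+1) = c).card = q + 1) := by
  classical
  have hpc : ∀ x : F, x^(q^2) = x := fun x => by rw [← hF]; exact FiniteField.pow_card x
  have hfix : ∀ x : F, (x^(q+1))^q = x^(q+1) := by
    intro x
    rw [← pow_mul, show (q+1)*q = q^2 + q by ring, pow_add, hpc x, pow_succ]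
    ring
  set T := univ.filter fun t : F => t ≠ 0 ∧ t^q = t with hT
  have hq1 : 0 < q - 1 := by omega
  have hTle : T.card ≤ q - 1 := by
    have hne : (X^(q-1) - C (1:F)) ≠ 0 := X_pow_sub_C_ne_zero hq1 1
    have := card_le_deg (X^(q-1) - C (1:F)) hne T ?_
    · rwa [natDegree_X_pow_sub_C] at this
    · intro t ht
      rw [hT, mem_filter] at ht
      obtain ⟨-, ht0, htq⟩ := ht
      have h1 : t^(q-1) * t = t := by
        rw [← pow_succ, show q - 1 + 1 = q by omega, htq]
      have ht1 : t^(q-1) = 1 := by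
        have h' : t^(q-1)*t = 1*t := by rw [one_mul]; exact h1
        exact mul_right_cancel₀ ht0 h'
      simp [ht1]
  have hmem : ∀ x ∈ univ.filter fun x : F => x ≠ 0, x^(q+1) ∈ T := by
    intro x hx
    rw [mem_filter] at hx
    rw [hT, mem_filter]
    exact ⟨mem_univ _, pow_ne_zero _ hx.2, hfix x⟩
  have hsum := Finset.card_eq_sum_card_fiberwise hmem
  have hcard0 : (univ.filter fun x : F => x ≠ 0).card = q^2 - 1 := by
    rw [Finset.filter_ne' univ (0:F), Finset.card_erase_of_mem (mem_univ _),
      Finset.card_univ, hF]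
  have hfibf : ∀ c : F, ((univ.filter fun x : F => x ≠ 0).filter fun x => x^(q+1) = c)
      = univ.filter fun x : F => x ≠ 0 ∧ x^(q+1) = c := by
    intro c; rw [Finset.filter_filter]
  have hfible : ∀ c : F, (univ.filter fun x : F => x ≠ 0 ∧ x^(q+1) = c).card ≤ q + 1 := by
    intro c
    have hne : (X^(q+1) - C c) ≠ 0 := X_pow_sub_C_ne_zero (by omega) c
    have := card_le_deg (X^(q+1) - C c) hne
      (univ.filter fun x : F => x ≠ 0 ∧ x^(q+1) = c) ?_
    · rwa [natDegree_X_pow_sub_C] at this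
    · intro x hx
      rw [mem_filter] at hx
      simp [hx.2.2]
  rw [hcard0] at hsum
  simp only [hfibf] at hsum
  have hbound : ∑ c ∈ T, (univ.filter fun x : F => x ≠ 0 ∧ x^(q+1) = c).card ≤ T.card * (q+1) := by
    calc ∑ c ∈ T, (univ.filter fun x : F => x ≠ 0 ∧ x^(q+1) = c).card
        ≤ ∑ _c ∈ T, (q+1) := Finset.sum_le_sum (fun c _ => hfible c)
      _ = T.card * (q+1) := by rw [Finset.sum_const, smul_eq_mul]
  have hqsq : (q-1) * (q+1) = q^2 - 1 := by
    obtain ⟨m, rfl⟩ : ∃ m, q = m + 2 := ⟨q - 2, by omega⟩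
    rw [show m+2-1 = m+1 by omega, show (m+1)*(m+2+1) = m*m+4*m+3 by ring,
      show (m+2)^2 = m*m+4*m+4 by ring]
    omega
  have h1 : (q-1)*(q+1) ≤ T.card*(q+1) := by
    calc (q-1)*(q+1) = q^2 - 1 := hqsq
      _ = _ := hsum
      _ ≤ T.card*(q+1) := hbound
  have hTeq : T.card = q - 1 :=
    le_antisymm hTle (Nat.le_of_mul_le_mul_right h1 (by omega))
  refine ⟨hTeq, ?_⟩
  intro c hc0 hcq
  have hcT : c ∈ T := by rw [hT, mem_filter]; exact ⟨mem_univ _, hc0, hcq⟩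
  by_contra hne
  have hlt : (univ.filter fun x : F => x ≠ 0 ∧ x^(q+1) = c).card < q + 1 :=
    lt_of_le_of_ne (hfible c) hne
  have hstrict : ∑ d ∈ T, (univ.filter fun x : F => x ≠ 0 ∧ x^(q+1) = d).card
      < ∑ _d ∈ T, (q+1) :=
    Finset.sum_lt_sum (fun i _ => hfible i) ⟨c, hcT, hlt⟩
  have hfin : q^2 - 1 < q^2 - 1 := by
    calc q^2 - 1 = _ := hsum
      _ < ∑ _d ∈ T, (q+1) := hstrict
      _ = T.card * (q+1) := by rw [Finset.sum_const, smul_eq_mul]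
      _ = (q-1)*(q+1) := by rw [hTeq]
      _ = q^2 - 1 := hqsq
  exact lt_irrefl _ hfin

/-- Let `q > 5` and `τ^q + τ = 1`. For `(b₀, b₁, b₂, ε) ≠ (0,0,0,0)` one has
`N(b₀,b₁,b₂,ε) = q + 1` (i.e. the corresponding codeword of the `m = 3` code has minimum
weight `q² − q − 2`) if and only if `ε = 0`, `b₁ = 0`, `b₂ ≠ 0` and `b₀ = t·τ·b₂` for some
nonzero `t ∈ 𝔽_q`. Moreover, the number of such tuples is exactly `(q²−1)(q−1)`. -/
theorem stmt_10 (q : ℕ) (hq : IsPrimePow q) (hq5 : 5 < q)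
    (F : Type*) [Field F] [Fintype F] [DecidableEq F] (hF : Fintype.card F = q ^ 2)
    (τ : F) (hτ : τ ^ q + τ = 1)
    (N : F → F → F → F → ℕ)
    (hN : ∀ b₀ b₁ b₂ ε : F, N b₀ b₁ b₂ ε =
      (Finset.univ.filter fun x : F => x ≠ 0 ∧
        τ * x ^ (q + 1) * (b₀ + b₁ * x + b₂ * τ * x ^ (q + 1)) + ε * x ^ 3 = 0).card) :
    (∀ b₀ b₁ b₂ ε : F, (b₀, b₁, b₂, ε) ≠ (0, 0, 0, 0) →
      (N b₀ b₁ b₂ ε = q + 1 ↔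
        ε = 0 ∧ b₁ = 0 ∧ b₂ ≠ 0 ∧ ∃ t : F, t ^ q = t ∧ t ≠ 0 ∧ b₀ = t * τ * b₂)) ∧
    (Finset.univ.filter fun p : F × F × F × F =>
        p ≠ (0, 0, 0, 0) ∧ N p.1 p.2.1 p.2.2.1 p.2.2.2 = q + 1).card
      = (q ^ 2 - 1) * (q - 1) := by
  classical
  have hq0 : q ≠ 0 := by omega
  have hq6 : 6 ≤ q := by omega
  obtain ⟨p, k, hp, hk, hpk⟩ := hq
  have hp' : Nat.Prime p := Nat.prime_iff.2 hp
  haveI : Fact (Nat.Prime p) := ⟨hp'⟩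
  haveI hchar : CharP F p := by
    haveI := ringChar.charP F
    obtain ⟨n, hrp, hcard⟩ := FiniteField.card F (ringChar F)
    have hpd : p ∣ (ringChar F)^(n:ℕ) := by
      rw [← hcard, hF, ← hpk, ← pow_mul]
      exact dvd_pow_self p (by omega)
    have hdvd : p ∣ ringChar F := hp'.dvd_of_dvd_pow hpd
    have hpeq : p = ringChar F := (Nat.prime_dvd_prime_iff_eq hp' hrp).1 hdvd
    rw [hpeq]; exact ringChar.charP F
  have hfrob : ∀ a b : F, (a+b)^q = a^q + b^q := by
    intro a b; rw [← hpk]; exact add_pow_char_pow a b p k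
  have hneg : ∀ a : F, (-a)^q = -(a^q) := by
    intro a
    have h := hfrob a (-a)
    rw [add_neg_cancel, zero_pow hq0] at h
    exact eq_neg_of_add_eq_zero_right h.symm
  have hτ0 : τ ≠ 0 := by
    intro h
    rw [h, zero_pow hq0, add_zero] at hτ
    exact zero_ne_one hτ
  have hτq0 : τ^q ≠ 0 := pow_ne_zero _ hτ0
  have hpc : ∀ x : F, x^(q^2) = x := fun x => by rw [← hF]; exact FiniteField.pow_card x
  have hfix : ∀ x : F, (x^(q+1))^q = x^(q+1) := by
    intro x
    rw [← pow_mul, show (q+1)*q = q^2 + q by ring, pow_add, hpc x, pow_succ]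
    ring
  have key := fiber_count (show 2 ≤ q by omega) hF
  have main : ∀ b₀ b₁ b₂ ε : F, (b₀, b₁, b₂, ε) ≠ (0, 0, 0, 0) →
      ((Finset.univ.filter fun x : F => x ≠ 0 ∧
        τ * x ^ (q + 1) * (b₀ + b₁ * x + b₂ * τ * x ^ (q + 1)) + ε * x ^ 3 = 0).card = q + 1 ↔
        ε = 0 ∧ b₁ = 0 ∧ b₂ ≠ 0 ∧ ∃ t : F, t ^ q = t ∧ t ≠ 0 ∧ b₀ = t * τ * b₂) := by
    intro b₀ b₁ b₂ ε hne
    by_cases hε : ε = 0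
    · subst hε
      by_cases hb₁ : b₁ = 0
      · subst hb₁
        by_cases hb₂ : b₂ = 0
        · subst hb₂
          have hb₀ : b₀ ≠ 0 := fun h => hne (by rw [h])
          have hempty : (Finset.univ.filter fun x : F => x ≠ 0 ∧ τ * x ^ (q + 1) * (b₀ + 0 * x + 0 * τ * x ^ (q + 1)) + 0 * x ^ 3 = 0) = ∅ := by
            refine Finset.eq_empty_of_forall_notMem (fun x hx => ?_)
            rw [Finset.mem_filter] at hx
            obtain ⟨-, hx0, hxe⟩ := hx
            have h1 : τ * x ^ (q+1) * b₀ = 0 := by linear_combination hxe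
            rcases mul_eq_zero.1 h1 with h | h
            · rcases mul_eq_zero.1 h with h' | h'
              · exact hτ0 h'
              · exact pow_ne_zero _ hx0 h'
            · exact hb₀ h
          rw [hempty]
          simp only [Finset.card_empty]
          exact iff_of_false (by omega) (by rintro ⟨-, -, h, -⟩; exact h rfl)
        · -- A1b : positive case
          have htb2 : τ * b₂ ≠ 0 := mul_ne_zero hτ0 hb₂
          set c : F := -b₀ / (τ * b₂) with hc
          have hcmul : c * (τ * b₂) = -b₀ := div_mul_cancel₀ _ htb2
          have hs : (Finset.univ.filter fun x : F => x ≠ 0 ∧ τ * x ^ (q + 1) * (b₀ + 0 * x + b₂ * τ * x ^ (q + 1)) + 0 * x ^ 3 = 0)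
              = Finset.univ.filter fun x : F => x ≠ 0 ∧ x ^ (q+1) = c := by
            ext x
            simp only [Finset.mem_filter, Finset.mem_univ, true_and]
            constructor
            · rintro ⟨hx0, hxe⟩
              refine ⟨hx0, ?_⟩
              have h1 : τ * x ^ (q+1) * (b₀ + b₂ * τ * x ^ (q+1)) = 0 := by
                linear_combination hxe
              have h2 : b₀ + b₂ * τ * x ^ (q+1) = 0 := by
                rcases mul_eq_zero.1 h1 with h | h
                · rcases mul_eq_zero.1 h with h' | h'
                  · exact absurd h' hτ0
                  · exact absurd h' (pow_ne_zero _ hx0)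
                · exact h
              have h3 : x ^ (q+1) * (τ * b₂) = c * (τ * b₂) := by
                rw [hcmul]; linear_combination h2
              exact mul_right_cancel₀ htb2 h3
            · rintro ⟨hx0, hxc⟩
              refine ⟨hx0, ?_⟩
              rw [hxc]
              linear_combination (τ * c) * hcmul
          rw [hs]
          by_cases hb₀ : b₀ = 0
          · have hc0 : c = 0 := by rw [hc, hb₀]; simp
            have hempty : (Finset.univ.filter fun x : F => x ≠ 0 ∧ x ^ (q+1) = c) = ∅ := by
              refine Finset.eq_empty_of_forall_notMem (fun x hx => ?_)
              rw [Finset.mem_filter] at hx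
              exact pow_ne_zero (q+1) hx.2.1 (hx.2.2.trans hc0)
            rw [hempty]
            simp only [Finset.card_empty]
            refine iff_of_false (by omega) ?_
            rintro ⟨-, -, -, t, htq, ht0, hteq⟩
            rw [hb₀] at hteq
            rcases mul_eq_zero.1 hteq.symm with h | h
            · rcases mul_eq_zero.1 h with h' | h'
              · exact ht0 h'
              · exact hτ0 h'
            · exact hb₂ h
          · have hc0 : c ≠ 0 := div_ne_zero (neg_ne_zero.2 hb₀) htb2
            by_cases hcq : c ^ q = c
            · rw [key.2 c hc0 hcq]
              constructor
              · intro _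
                refine ⟨rfl, rfl, hb₂, -c, ?_, neg_ne_zero.2 hc0, ?_⟩
                · rw [hneg, hcq]
                · linear_combination hcmul
              · intro _; rfl
            · have hempty : (Finset.univ.filter fun x : F => x ≠ 0 ∧ x ^ (q+1) = c) = ∅ := by
                refine Finset.eq_empty_of_forall_notMem (fun x hx => ?_)
                rw [Finset.mem_filter] at hx
                apply hcq
                rw [← hx.2.2]
                exact hfix x
              rw [hempty]
              simp only [Finset.card_empty]
              refine iff_of_false (by omega) ?_
              rintro ⟨-, -, -, t, htq, ht0, hteq⟩
              apply hcq
              have hct : c = -t := by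
                have h3 : c * (τ*b₂) = (-t) * (τ*b₂) := by
                  rw [hcmul, hteq]; ring
                exact mul_right_cancel₀ htb2 h3
              rw [hct, hneg, htq]
      · -- A2 : ε = 0, b₁ ≠ 0
        by_cases hb₂ : b₂ = 0
        · subst hb₂
          have hcard : (Finset.univ.filter fun x : F => x ≠ 0 ∧ τ * x ^ (q + 1) * (b₀ + b₁ * x + 0 * τ * x ^ (q + 1)) + 0 * x ^ 3 = 0).card ≤ 1 := by
            have hne0 : (C b₁ * X + C b₀ : F[X]) ≠ 0 := by
              intro h
              have h0 : (C b₁ * X + C b₀ : F[X]).coeff 1 = b₁ := by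
                simp only [coeff_add, coeff_C_mul, coeff_X, coeff_C]
                norm_num
              rw [h] at h0
              simp only [coeff_zero] at h0
              exact hb₁ h0.symm
            have hdeg : (C b₁ * X + C b₀ : F[X]).natDegree ≤ 1 := by compute_degree
            refine le_trans (card_le_deg _ hne0 _ ?_) hdeg
            intro x hx
            rw [Finset.mem_filter] at hx
            obtain ⟨-, hx0, hxe⟩ := hx
            have h1 : τ * x ^ (q+1) * (b₀ + b₁ * x) = 0 := by linear_combination hxe
            have h2 : b₀ + b₁ * x = 0 := by
              rcases mul_eq_zero.1 h1 with h | h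
              · rcases mul_eq_zero.1 h with h' | h'
                · exact absurd h' hτ0
                · exact absurd h' (pow_ne_zero _ hx0)
              · exact h
            simp only [eval_add, eval_mul, eval_C, eval_X]
            linear_combination h2
          refine iff_of_false (by omega) (fun h => hb₁ h.2.1)
        · have hcard : (Finset.univ.filter fun x : F => x ≠ 0 ∧ τ * x ^ (q + 1) * (b₀ + b₁ * x + b₂ * τ * x ^ (q + 1)) + 0 * x ^ 3 = 0).card ≤ 2 := by
            have hne0 : (C (τ^q*b₂^q*b₁) * X^2 + C (τ^q*b₂^q*b₀ + b₁^(q+1) - τ*b₂*b₀^q) * X + C (b₁^q*b₀) : F[X]) ≠ 0 := by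
              intro h
              have h0 : (C (τ^q*b₂^q*b₁) * X^2 + C (τ^q*b₂^q*b₀ + b₁^(q+1) - τ*b₂*b₀^q) * X + C (b₁^q*b₀) : F[X]).coeff 2 = τ^q*b₂^q*b₁ := by
                simp only [coeff_add, coeff_C_mul, coeff_X_pow, coeff_X, coeff_C]
                norm_num
              rw [h] at h0
              simp only [coeff_zero] at h0
              exact (mul_ne_zero (mul_ne_zero hτq0 (pow_ne_zero _ hb₂)) hb₁) h0.symm
            have hdeg : (C (τ^q*b₂^q*b₁) * X^2 + C (τ^q*b₂^q*b₀ + b₁^(q+1) - τ*b₂*b₀^q) * X + C (b₁^q*b₀) : F[X]).natDegree ≤ 2 := by compute_degree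
            refine le_trans (card_le_deg _ hne0 _ ?_) hdeg
            intro x hx
            rw [Finset.mem_filter] at hx
            obtain ⟨-, hx0, hxe⟩ := hx
            have hn0 : x^(q+1) ≠ 0 := pow_ne_zero _ hx0
            have hxq : x^q * x = x^(q+1) := (pow_succ x q).symm
            have h1 : τ * x ^ (q+1) * (b₀ + b₁ * x + b₂ * τ * x ^ (q+1)) = 0 := by
              linear_combination hxe
            have hlin : b₀ + b₁ * x + b₂ * τ * x ^ (q+1) = 0 := by
              rcases mul_eq_zero.1 h1 with h | h
              · rcases mul_eq_zero.1 h with h' | h'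
                · exact absurd h' hτ0
                · exact absurd h' hn0
              · exact h
            have hkey : b₀^q + b₁^q*x^q + b₂^q*τ^q*(x^(q+1))^q
                = (b₀ + b₁*x + b₂*τ*x^(q+1))^q := by
              simp only [hfrob, mul_pow]
            have hlinc : b₀^q + b₁^q*x^q + b₂^q*τ^q*(x^(q+1)) = 0 := by
              rw [← hfix x, hkey, hlin]
              exact zero_pow hq0
            have hQ2lin : b₀^q*x + b₁^q*(x^(q+1)) + b₂^q*τ^q*(x^(q+1))*x = 0 := by
              linear_combination x*hlinc + b₁^q*hxq
            simp only [eval_add, eval_sub, eval_mul, eval_pow, eval_C, eval_X]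
            linear_combination (-(b₂*τ))*hQ2lin + (b₁^q + τ^q*b₂^q*x)*hlin
          refine iff_of_false (by omega) (fun h => hb₁ h.2.1)
    · -- B : ε ≠ 0
      by_cases hb₂ : b₂ = 0
      · subst hb₂
        have hcard : (Finset.univ.filter fun x : F => x ≠ 0 ∧ τ * x ^ (q + 1) * (b₀ + b₁ * x + 0 * τ * x ^ (q + 1)) + ε * x ^ 3 = 0).card ≤ q - 1 := by
          have hne0 : (C (τ*b₁) * X^(q-1) + C (τ*b₀) * X^(q-2) + C ε : F[X]) ≠ 0 := by
            intro h
            have h0 : (C (τ*b₁) * X^(q-1) + C (τ*b₀) * X^(q-2) + C ε : F[X]).coeff 0 = ε := by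
              simp only [coeff_add, coeff_C_mul, coeff_X_pow, coeff_C,
                show ((0:ℕ) = q-1) = False by simp; omega, show ((0:ℕ) = q-2) = False by simp; omega]
              norm_num
            rw [h] at h0
            simp only [coeff_zero] at h0
            exact hε h0.symm
          have hdeg : (C (τ*b₁) * X^(q-1) + C (τ*b₀) * X^(q-2) + C ε : F[X]).natDegree ≤ q - 1 := by
            compute_degree <;> omega
          refine le_trans (card_le_deg _ hne0 _ ?_) hdeg
          intro x hx
          rw [Finset.mem_filter] at hx
          obtain ⟨-, hx0, hxe⟩ := hx
          have hp1 : x^(q-1) * x^3 = x^(q+1) * x := by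
            rw [← pow_add, ← pow_succ]
            congr 1
            omega
          have hp2 : x^(q-2) * x^3 = x^(q+1) := by
            rw [← pow_add]
            congr 1
            omega
          have h3 : x^3 * eval x (C (τ*b₁) * X^(q-1) + C (τ*b₀) * X^(q-2) + C ε : F[X]) = 0 := by
            simp only [eval_add, eval_mul, eval_pow, eval_C, eval_X]
            linear_combination hxe + (τ*b₁)*hp1 + (τ*b₀)*hp2
          rcases mul_eq_zero.1 h3 with h | h
          · exact absurd h (pow_ne_zero _ hx0)
          · exact h
        refine iff_of_false (by omega) (fun h => hε h.1)
      · -- B2 : ε ≠ 0, b₂ ≠ 0 : sextic resultant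
        have hcard : (Finset.univ.filter fun x : F => x ≠ 0 ∧ τ * x ^ (q + 1) * (b₀ + b₁ * x + b₂ * τ * x ^ (q + 1)) + ε * x ^ 3 = 0).card ≤ 6 := by
          have hne0 : (C ((τ^2*(τ^q)*b₂*b₀^q - ε^(q+1))^2) * X^3 - (C (τ^2*(τ^q)^2*b₂*b₂^q) * X^3 + C (τ^2*(τ^q)*b₂*b₁^q) * X^2 + C (-(ε^q*τ*b₁)) * X + C (-(ε^q*τ*b₀))) * (C (-(ε*(τ^q)^2*b₂^q)) * X^3 + C (-(ε*(τ^q)*b₁^q)) * X^2 + C (τ*(τ^q)*b₁*b₀^q) * X + C (τ*(τ^q)*b₀^(q+1))) : F[X]) ≠ 0 := by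
            intro h
            have h0 : (C ((τ^2*(τ^q)*b₂*b₀^q - ε^(q+1))^2) * X^3 - (C (τ^2*(τ^q)^2*b₂*b₂^q) * X^3 + C (τ^2*(τ^q)*b₂*b₁^q) * X^2 + C (-(ε^q*τ*b₁)) * X + C (-(ε^q*τ*b₀))) * (C (-(ε*(τ^q)^2*b₂^q)) * X^3 + C (-(ε*(τ^q)*b₁^q)) * X^2 + C (τ*(τ^q)*b₁*b₀^q) * X + C (τ*(τ^q)*b₀^(q+1))) : F[X]).coeff 6
                = -((τ^2*(τ^q)^2*b₂*b₂^q) * (-(ε*(τ^q)^2*b₂^q))) := by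
              rw [show (C (τ^2*(τ^q)^2*b₂*b₂^q) * X^3 + C (τ^2*(τ^q)*b₂*b₁^q) * X^2
                    + C (-(ε^q*τ*b₁)) * X + C (-(ε^q*τ*b₀))) *
                  (C (-(ε*(τ^q)^2*b₂^q)) * X^3 + C (-(ε*(τ^q)*b₁^q)) * X^2
                    + C (τ*(τ^q)*b₁*b₀^q) * X + C (τ*(τ^q)*b₀^(q+1)))
                = C ((τ^2*(τ^q)^2*b₂*b₂^q)*(-(ε*(τ^q)^2*b₂^q)))*X^6
                  + C ((τ^2*(τ^q)^2*b₂*b₂^q)*(-(ε*(τ^q)*b₁^q))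
                    + (τ^2*(τ^q)*b₂*b₁^q)*(-(ε*(τ^q)^2*b₂^q)))*X^5
                  + C ((τ^2*(τ^q)^2*b₂*b₂^q)*(τ*(τ^q)*b₁*b₀^q)
                    + (τ^2*(τ^q)*b₂*b₁^q)*(-(ε*(τ^q)*b₁^q))
                    + (-(ε^q*τ*b₁))*(-(ε*(τ^q)^2*b₂^q)))*X^4
                  + C ((τ^2*(τ^q)^2*b₂*b₂^q)*(τ*(τ^q)*b₀^(q+1))
                    + (τ^2*(τ^q)*b₂*b₁^q)*(τ*(τ^q)*b₁*b₀^q)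
                    + (-(ε^q*τ*b₁))*(-(ε*(τ^q)*b₁^q))
                    + (-(ε^q*τ*b₀))*(-(ε*(τ^q)^2*b₂^q)))*X^3
                  + C ((τ^2*(τ^q)*b₂*b₁^q)*(τ*(τ^q)*b₀^(q+1))
                    + (-(ε^q*τ*b₁))*(τ*(τ^q)*b₁*b₀^q)
                    + (-(ε^q*τ*b₀))*(-(ε*(τ^q)*b₁^q)))*X^2
                  + C ((-(ε^q*τ*b₁))*(τ*(τ^q)*b₀^(q+1))
                    + (-(ε^q*τ*b₀))*(τ*(τ^q)*b₁*b₀^q))*X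
                  + C ((-(ε^q*τ*b₀))*(τ*(τ^q)*b₀^(q+1)))
                from by simp only [map_add, map_mul, map_neg]; ring]
              simp only [coeff_sub, coeff_add, coeff_C_mul, coeff_X_pow, coeff_C, coeff_X]
              norm_num
            rw [h] at h0
            simp only [coeff_zero] at h0
            have hnz : -((τ^2*(τ^q)^2*b₂*b₂^q) * (-(ε*(τ^q)^2*b₂^q))) ≠ 0 := by
              have h1 : b₂^q ≠ 0 := pow_ne_zero _ hb₂
              intro hcontra
              rw [show -((τ^2*(τ^q)^2*b₂*b₂^q) * (-(ε*(τ^q)^2*b₂^q)))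
                = (τ^2*(τ^q)^2*b₂*b₂^q) * (ε*(τ^q)^2*b₂^q) from by ring] at hcontra
              simp [mul_eq_zero, hτ0, hτq0, hb₂, hε, h1] at hcontra
            exact hnz h0.symm
          have hdeg : (C ((τ^2*(τ^q)*b₂*b₀^q - ε^(q+1))^2) * X^3 - (C (τ^2*(τ^q)^2*b₂*b₂^q) * X^3 + C (τ^2*(τ^q)*b₂*b₁^q) * X^2 + C (-(ε^q*τ*b₁)) * X + C (-(ε^q*τ*b₀))) * (C (-(ε*(τ^q)^2*b₂^q)) * X^3 + C (-(ε*(τ^q)*b₁^q)) * X^2 + C (τ*(τ^q)*b₁*b₀^q) * X + C (τ*(τ^q)*b₀^(q+1))) : F[X]).natDegree ≤ 6 := by compute_degree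
          refine le_trans (card_le_deg _ hne0 _ ?_) hdeg
          intro x hx
          rw [Finset.mem_filter] at hx
          obtain ⟨-, hx0, hxe⟩ := hx
          have hn0 : x^(q+1) ≠ 0 := pow_ne_zero _ hx0
          have hxq : x^q * x = x^(q+1) := (pow_succ x q).symm
          have hQ1 : (τ^2*b₂)*(x^(q+1))^2 + (τ*(b₁*x+b₀))*(x^(q+1)) + (ε*x^3) = 0 := by
            linear_combination hxe
          have hkey : τ^q*(x^(q+1))^q*(b₀^q + b₁^q*x^q + b₂^q*τ^q*(x^(q+1))^q) + ε^q*(x^3)^q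
              = (τ * x ^ (q+1) * (b₀ + b₁*x + b₂*τ*x^(q+1)) + ε*x^3)^q := by
            simp only [hfrob, mul_pow]
          have hconj : τ^q*(x^(q+1))*(b₀^q + b₁^q*x^q + b₂^q*τ^q*(x^(q+1))) + ε^q*(x^q)^3 = 0 := by
            have h0 : (τ * x ^ (q+1) * (b₀ + b₁*x + b₂*τ*x^(q+1)) + ε*x^3)^q = 0 := by
              rw [hxe]
              exact zero_pow hq0
            have h1 := hkey.trans h0
            rwa [hfix x, pow_right_comm x 3 q] at h1
          have hQ2' : (x^(q+1)) * ((ε^q)*(x^(q+1))^2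
              + (τ^q*b₁^q*x^2 + (τ^q)^2*b₂^q*x^3)*(x^(q+1)) + (τ^q*b₀^q*x^3)) = 0 := by
            linear_combination x^3 * hconj
              - (ε^q*((x^(q+1))^2 + (x^(q+1))*(x^q*x) + (x^q*x)^2)
                + τ^q*b₁^q*(x^(q+1))*x^2) * hxq
          have hQ2 : (ε^q)*(x^(q+1))^2
              + (τ^q*b₁^q*x^2 + (τ^q)^2*b₂^q*x^3)*(x^(q+1)) + (τ^q*b₀^q*x^3) = 0 := by
            rcases mul_eq_zero.1 hQ2' with h | h
            · exact absurd h hn0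
            · exact h
          have hres := quad_resultant hn0 hQ1 hQ2
          have h3 : x^3 * eval x (C ((τ^2*(τ^q)*b₂*b₀^q - ε^(q+1))^2) * X^3 - (C (τ^2*(τ^q)^2*b₂*b₂^q) * X^3 + C (τ^2*(τ^q)*b₂*b₁^q) * X^2 + C (-(ε^q*τ*b₁)) * X + C (-(ε^q*τ*b₀))) * (C (-(ε*(τ^q)^2*b₂^q)) * X^3 + C (-(ε*(τ^q)*b₁^q)) * X^2 + C (τ*(τ^q)*b₁*b₀^q) * X + C (τ*(τ^q)*b₀^(q+1))) : F[X]) = 0 := by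
            simp only [eval_sub, eval_add, eval_mul, eval_pow, eval_neg, eval_C, eval_X]
            linear_combination hres
          rcases mul_eq_zero.1 h3 with h | h
          · exact absurd h (pow_ne_zero _ hx0)
          · exact h
        refine iff_of_false (by omega) (fun h => hε h.1)
  have hcard0 : (Finset.univ.filter fun x : F => x ≠ 0).card = q^2 - 1 := by
    rw [Finset.filter_ne' Finset.univ (0:F), Finset.card_erase_of_mem (Finset.mem_univ _),
      Finset.card_univ, hF]
  refine ⟨fun b₀ b₁ b₂ ε hne => by rw [hN]; exact main b₀ b₁ b₂ ε hne, ?_⟩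
  have hAeq : (Finset.univ.filter fun pr : F × F × F × F =>
      pr ≠ (0,0,0,0) ∧ N pr.1 pr.2.1 pr.2.2.1 pr.2.2.2 = q + 1)
      = Finset.univ.filter fun pr : F × F × F × F =>
        pr.2.2.2 = 0 ∧ pr.2.1 = 0 ∧ pr.2.2.1 ≠ 0 ∧
          ∃ t : F, t ^ q = t ∧ t ≠ 0 ∧ pr.1 = t * τ * pr.2.2.1 := by
    ext pr
    obtain ⟨b₀, b₁, b₂, ε⟩ := pr
    simp only [Finset.mem_filter, Finset.mem_univ, true_and]
    constructor
    · rintro ⟨hne, hNeq⟩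
      rw [hN] at hNeq
      exact (main b₀ b₁ b₂ ε hne).1 hNeq
    · rintro ⟨hε, hb₁, hb₂, ht⟩
      have hne : (b₀, b₁, b₂, ε) ≠ (0,0,0,0) := by
        intro h
        exact hb₂ (congrArg (fun z : F × F × F × F => z.2.2.1) h)
      refine ⟨hne, ?_⟩
      rw [hN]
      exact (main b₀ b₁ b₂ ε hne).2 ⟨hε, hb₁, hb₂, ht⟩
  rw [hAeq]
  have hTB : (Finset.univ.filter fun pr : F × F × F × F =>
        pr.2.2.2 = 0 ∧ pr.2.1 = 0 ∧ pr.2.2.1 ≠ 0 ∧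
          ∃ t : F, t ^ q = t ∧ t ≠ 0 ∧ pr.1 = t * τ * pr.2.2.1).card
      = ((Finset.univ.filter fun t : F => t ≠ 0 ∧ t ^ q = t) ×ˢ
          (Finset.univ.filter fun b : F => b ≠ 0)).card := by
    refine Finset.card_bij' (fun pr _ => (pr.1 * (τ * pr.2.2.1)⁻¹, pr.2.2.1))
      (fun z _ => (z.1 * τ * z.2, 0, z.2, 0)) ?_ ?_ ?_ ?_
    · rintro ⟨b₀, b₁, b₂, ε⟩ hpr
      simp only [Finset.mem_filter, Finset.mem_univ, true_and] at hpr
      obtain ⟨hε, hb₁, hb₂, t, htq, ht0, hteq⟩ := hpr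
      have htb2 : τ * b₂ ≠ 0 := mul_ne_zero hτ0 hb₂
      have hval : b₀ * (τ * b₂)⁻¹ = t := by
        rw [hteq]
        field_simp
      rw [Finset.mem_product]
      simp only [Finset.mem_filter, Finset.mem_univ, true_and]
      constructor
      · rw [hval]; exact ⟨ht0, htq⟩
      · exact hb₂
    · rintro ⟨t, b⟩ hz
      rw [Finset.mem_product] at hz
      simp only [Finset.mem_filter, Finset.mem_univ, true_and] at hz
      obtain ⟨⟨ht0, htq⟩, hb0⟩ := hz
      exact Finset.mem_filter.2 ⟨Finset.mem_univ _, rfl, rfl, hb0, ⟨t, htq, ht0, rfl⟩⟩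
    · rintro ⟨b₀, b₁, b₂, ε⟩ hpr
      simp only [Finset.mem_filter, Finset.mem_univ, true_and] at hpr
      obtain ⟨hε, hb₁, hb₂, t, htq, ht0, hteq⟩ := hpr
      have htb2 : τ * b₂ ≠ 0 := mul_ne_zero hτ0 hb₂
      subst hε
      subst hb₁
      have h1 : b₀ * (τ * b₂)⁻¹ * τ * b₂ = b₀ := by field_simp
      simp only [h1]
    · rintro ⟨t, b⟩ hz
      rw [Finset.mem_product] at hz
      simp only [Finset.mem_filter, Finset.mem_univ, true_and] at hz
      obtain ⟨⟨ht0, htq⟩, hb0⟩ := hz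
      have h1 : t * τ * b * (τ * b)⁻¹ = t := by field_simp
      simp only [h1]
  rw [hTB, Finset.card_product, key.1, hcard0, Nat.mul_comm]
end

section
/- Suppose γ₀ ≠ 0 and γ₁ ≠ 0. Then the number of pairs (x₁, x₂) ∈ 𝔽_q × 𝔽_q with (x₁, x₂) ≠ (0, 0) satisfying both A(x₁, x₂) = 0 and B(x₁, x₂) = 0 is at most 6. -/
/-!
Adjoin a square root `i` of `s` and put `x = x₁ + x₂ i`, `x̄ = x₁ − x₂ i`, `N = x x̄ = x₁² − s x₂²`.
Then `A + iB = N (b₀ + b₁ x + b₂ N) + x³` and `A − iB` is its conjugate `N (d₀ + d₁ x̄ + d₂ N) + x̄³`.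
For a nonzero solution `N ≠ 0` because `s` is not a square. Substituting `x̄ = N / x` in the conjugate
equation and then eliminating `N` between the two equations leaves a polynomial equation in `x`
alone, of degree `6` with leading coefficient `b₂ d₂² ≠ 0`. Since `(x₁, x₂) ↦ x` is injective,
there are at most `6` solutions.
-/

open Polynomial

section Elimination

variable {K : Type*} [Field K]

noncomputable def eliminantFactor (b₀ b₁ b₂ d₁ d₂ : K) : K[X] :=
  C b₀ + C b₁ * X - C (b₂ * d₁) * X ^ 2 - C (b₂ * d₂) * X ^ 3

noncomputable def eliminant (b₀ b₁ b₂ d₀ d₁ d₂ : K) : K[X] :=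
  C ((b₂ * d₀ - 1) ^ 2) * X ^ 3 +
    C (b₂ * d₀ - 1) * (C d₁ + C d₂ * X) * X ^ 2 * eliminantFactor b₀ b₁ b₂ d₁ d₂ +
    C d₀ * eliminantFactor b₀ b₁ b₂ d₁ d₂ ^ 2

theorem natDegree_eliminant {b₀ b₁ b₂ d₀ d₁ d₂ : K} (hb₂ : b₂ ≠ 0) (hd₂ : d₂ ≠ 0) :
    (eliminant b₀ b₁ b₂ d₀ d₁ d₂).natDegree = 6 := by
  unfold eliminant eliminantFactor
  compute_degree!
  have hlead : -((b₂ * d₀ - 1) * d₂ * (b₂ * d₂)) + d₀ * (b₂ * d₂) ^ 2 = b₂ * d₂ ^ 2 := by ring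
  rw [hlead]
  exact mul_ne_zero hb₂ (pow_ne_zero 2 hd₂)

theorem eliminant_ne_zero {b₀ b₁ b₂ d₀ d₁ d₂ : K} (hb₂ : b₂ ≠ 0) (hd₂ : d₂ ≠ 0) :
    eliminant b₀ b₁ b₂ d₀ d₁ d₂ ≠ 0 := by
  intro h
  simpa [h] using natDegree_eliminant (b₀ := b₀) (b₁ := b₁) (d₀ := d₀) (d₁ := d₁) hb₂ hd₂

theorem eval_eliminant_eq_zero {b₀ b₁ b₂ d₀ d₁ d₂ x y : K} (hxy : x * y ≠ 0)
    (hx : x * y * (b₀ + b₁ * x + b₂ * (x * y)) + x ^ 3 = 0)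
    (hy : x * y * (d₀ + d₁ * y + d₂ * (x * y)) + y ^ 3 = 0) :
    (eliminant b₀ b₁ b₂ d₀ d₁ d₂).eval x = 0 := by
  set N := x * y
  set L := (eliminantFactor b₀ b₁ b₂ d₁ d₂).eval x with hL
  have hx0 : x ≠ 0 := left_ne_zero_of_mul hxy
  -- multiplying by `x³` is the substitution `y = N / x`
  have hNquad : N ^ 2 + (d₁ * x ^ 2 + d₂ * x ^ 3) * N + d₀ * x ^ 3 = 0 := by
    refine (mul_eq_zero.mp ?_).resolve_left hxy
    linear_combination x ^ 3 * hy
  have hNL : N * L = (b₂ * d₀ - 1) * x ^ 3 := by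
    simp only [hL, eliminantFactor, eval_sub, eval_add, eval_mul, eval_C, eval_X, eval_pow]
    linear_combination hx - b₂ * hNquad
  refine (mul_eq_zero.mp ?_).resolve_left (pow_ne_zero 3 hx0)
  simp only [eliminant, eval_add, eval_mul, eval_C, eval_X, eval_pow, ← hL]
  linear_combination
    L ^ 2 * hNquad - ((b₂ * d₀ - 1) * x ^ 3 + N * L + (d₁ * x ^ 2 + d₂ * x ^ 3) * L) * hNL

end Elimination

section Coordinates

variable {R : Type*} [CommRing R]

def coordA (s α₀ β₀ β₁ γ₀ x₁ x₂ : R) : R :=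
  (α₀ + β₀ * x₁ + s * β₁ * x₂ + γ₀ * (x₁ ^ 2 - s * x₂ ^ 2)) * (x₁ ^ 2 - s * x₂ ^ 2) +
    x₁ * (x₁ ^ 2 + 3 * s * x₂ ^ 2)

def coordB (s α₁ β₀ β₁ γ₁ x₁ x₂ : R) : R :=
  (α₁ + β₁ * x₁ + β₀ * x₂ + γ₁ * (x₁ ^ 2 - s * x₂ ^ 2)) * (x₁ ^ 2 - s * x₂ ^ 2) +
    x₂ * (3 * x₁ ^ 2 + s * x₂ ^ 2)

theorem map_coordA {S : Type*} [CommRing S] (φ : R →+* S) (s α₀ β₀ β₁ γ₀ x₁ x₂ : R) :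
    φ (coordA s α₀ β₀ β₁ γ₀ x₁ x₂) = coordA (φ s) (φ α₀) (φ β₀) (φ β₁) (φ γ₀) (φ x₁) (φ x₂) := by
  simp [coordA, map_ofNat]

theorem map_coordB {S : Type*} [CommRing S] (φ : R →+* S) (s α₁ β₀ β₁ γ₁ x₁ x₂ : R) :
    φ (coordB s α₁ β₀ β₁ γ₁ x₁ x₂) = coordB (φ s) (φ α₁) (φ β₀) (φ β₁) (φ γ₁) (φ x₁) (φ x₂) := by
  simp [coordB, map_ofNat]

theorem coordA_add_mul_coordB {i s : R} (hi : i ^ 2 = s) (α₀ α₁ β₀ β₁ γ₀ γ₁ x₁ x₂ : R) :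
    coordA s α₀ β₀ β₁ γ₀ x₁ x₂ + i * coordB s α₁ β₀ β₁ γ₁ x₁ x₂ =
      (x₁ + x₂ * i) * (x₁ - x₂ * i) * ((α₀ + α₁ * i) + (β₀ + β₁ * i) * (x₁ + x₂ * i) +
        (γ₀ + γ₁ * i) * ((x₁ + x₂ * i) * (x₁ - x₂ * i))) + (x₁ + x₂ * i) ^ 3 := by
  subst hi
  simp only [coordA, coordB]
  ring

theorem coordA_sub_mul_coordB {i s : R} (hi : i ^ 2 = s) (α₀ α₁ β₀ β₁ γ₀ γ₁ x₁ x₂ : R) :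
    coordA s α₀ β₀ β₁ γ₀ x₁ x₂ - i * coordB s α₁ β₀ β₁ γ₁ x₁ x₂ =
      (x₁ + x₂ * i) * (x₁ - x₂ * i) * ((α₀ - α₁ * i) + (β₀ - β₁ * i) * (x₁ - x₂ * i) +
        (γ₀ - γ₁ * i) * ((x₁ + x₂ * i) * (x₁ - x₂ * i))) + (x₁ - x₂ * i) ^ 3 := by
  linear_combination coordA_add_mul_coordB (i := -i) (by rw [neg_sq, hi]) α₀ α₁ β₀ β₁ γ₀ γ₁ x₁ x₂

end Coordinates

section Nonsquare

variable {F : Type*} [Field F] {s : F}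

theorem sq_sub_mul_sq_ne_zero (hs : ¬IsSquare s) {x₁ x₂ : F} (hx : (x₁, x₂) ≠ (0, 0)) :
    x₁ ^ 2 - s * x₂ ^ 2 ≠ 0 := by
  intro h
  rcases eq_or_ne x₂ 0 with rfl | hx₂
  · exact hx (Prod.ext (pow_eq_zero_iff two_ne_zero |>.mp (by simpa using h)) rfl)
  · exact hs ⟨x₁ / x₂, by field_simp; linear_combination -h⟩

variable {K : Type*} [Field K] (φ : F →+* K) {i : K}

theorem add_mul_eq_zero_of_not_isSquare (hs : ¬IsSquare s) (hi : i ^ 2 = φ s) {u v : F}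
    (h : φ u + φ v * i = 0) : u = 0 ∧ v = 0 := by
  rcases eq_or_ne v 0 with rfl | hv
  · simpa using h
  · refine absurd ⟨-u / v, φ.injective ?_⟩ hs
    have hvK : φ v ≠ 0 := (map_ne_zero φ).mpr hv
    have hi' : i = -φ u / φ v := by
      field_simp
      linear_combination h
    rw [map_mul, map_div₀, map_neg, ← hi, hi']
    ring

theorem add_mul_injective (hs : ¬IsSquare s) (hi : i ^ 2 = φ s) :
    Function.Injective fun p : F × F => φ p.1 + φ p.2 * i := by
  intro p p' h
  obtain ⟨h₁, h₂⟩ := add_mul_eq_zero_of_not_isSquare φ hs hi (u := p.1 - p'.1) (v := p.2 - p'.2)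
    (by simp only [map_sub]; linear_combination h)
  exact Prod.ext (sub_eq_zero.mp h₁) (sub_eq_zero.mp h₂)

end Nonsquare

theorem eval_eliminant_eq_zero_of_coordA_of_coordB {K : Type*} [Field K] {i s : K}
    (hi : i ^ 2 = s) {α₀ α₁ β₀ β₁ γ₀ γ₁ x₁ x₂ : K} (hx : x₁ ^ 2 - s * x₂ ^ 2 ≠ 0)
    (hA : coordA s α₀ β₀ β₁ γ₀ x₁ x₂ = 0) (hB : coordB s α₁ β₀ β₁ γ₁ x₁ x₂ = 0) :
    (eliminant (α₀ + α₁ * i) (β₀ + β₁ * i) (γ₀ + γ₁ * i)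
      (α₀ - α₁ * i) (β₀ - β₁ * i) (γ₀ - γ₁ * i)).eval (x₁ + x₂ * i) = 0 := by
  have hnorm : (x₁ + x₂ * i) * (x₁ - x₂ * i) = x₁ ^ 2 - s * x₂ ^ 2 := by
    linear_combination -x₂ ^ 2 * hi
  refine eval_eliminant_eq_zero (hnorm ▸ hx) ?_ ?_
  · rw [← coordA_add_mul_coordB hi, hA, hB]; ring
  · rw [← coordA_sub_mul_coordB hi, hA, hB]; ring

theorem stmt_13_general
    (F : Type*) [Field F] [Fintype F] [DecidableEq F]
    (s : F) (hs : ¬IsSquare s)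
    (α₀ α₁ β₀ β₁ γ₀ γ₁ : F) (hγ₀ : γ₀ ≠ 0) :
    (Finset.univ.filter fun p : F × F => p ≠ (0, 0) ∧
        (α₀ + β₀ * p.1 + s * β₁ * p.2 + γ₀ * (p.1 ^ 2 - s * p.2 ^ 2)) *
            (p.1 ^ 2 - s * p.2 ^ 2) + p.1 * (p.1 ^ 2 + 3 * s * p.2 ^ 2) = 0 ∧
        (α₁ + β₁ * p.1 + β₀ * p.2 + γ₁ * (p.1 ^ 2 - s * p.2 ^ 2)) *
            (p.1 ^ 2 - s * p.2 ^ 2) + p.2 * (3 * p.1 ^ 2 + s * p.2 ^ 2) = 0).card ≤ 6 := by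
  classical
  set φ := algebraMap F (AlgebraicClosure F)
  obtain ⟨i, hi⟩ := IsAlgClosed.exists_eq_mul_self (φ s)
  replace hi : i ^ 2 = φ s := by rw [hi, sq]
  have hb₂ : φ γ₀ + φ γ₁ * i ≠ 0 := fun h =>
    hγ₀ (add_mul_eq_zero_of_not_isSquare φ hs hi h).1
  have hd₂ : φ γ₀ - φ γ₁ * i ≠ 0 := fun h =>
    hγ₀ (add_mul_eq_zero_of_not_isSquare φ hs hi (u := γ₀) (v := -γ₁)
      (by rw [map_neg]; linear_combination h)).1
  let P := eliminant (φ α₀ + φ α₁ * i) (φ β₀ + φ β₁ * i) (φ γ₀ + φ γ₁ * i)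
    (φ α₀ - φ α₁ * i) (φ β₀ - φ β₁ * i) (φ γ₀ - φ γ₁ * i)
  calc _ = (Finset.image (fun p : F × F => φ p.1 + φ p.2 * i) _).card :=
        (Finset.card_image_of_injective _ (add_mul_injective φ hs hi)).symm
    _ ≤ P.natDegree := Polynomial.card_le_degree_of_subset_roots fun z hz => ?_
    _ = 6 := natDegree_eliminant hb₂ hd₂
  obtain ⟨p, hp, rfl⟩ := Finset.mem_image.mp hz
  obtain ⟨hp0, hA, hB⟩ := (Finset.mem_filter.mp hp).2
  refine (Polynomial.mem_roots (eliminant_ne_zero hb₂ hd₂)).mpr ?_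
  have hAφ := congrArg φ (show coordA s α₀ β₀ β₁ γ₀ p.1 p.2 = 0 from hA)
  have hBφ := congrArg φ (show coordB s α₁ β₀ β₁ γ₁ p.1 p.2 = 0 from hB)
  rw [map_coordA, map_zero] at hAφ
  rw [map_coordB, map_zero] at hBφ
  refine eval_eliminant_eq_zero_of_coordA_of_coordB hi ?_ hAφ hBφ
  simpa using (map_ne_zero φ).mpr (sq_sub_mul_sq_ne_zero hs hp0)

/-- odd characteristic: Suppose `γ₀ ≠ 0` and `γ₁ ≠ 0`. Then the number of
pairs `(x₁, x₂) ∈ 𝔽_q × 𝔽_q` with `(x₁, x₂) ≠ (0, 0)` satisfying both `A(x₁, x₂) = 0` and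
`B(x₁, x₂) = 0` is at most `6`, where
`A = (α₀ + β₀X₁ + sβ₁X₂ + γ₀(X₁² − sX₂²))(X₁² − sX₂²) + X₁(X₁² + 3sX₂²)` and
`B = (α₁ + β₁X₁ + β₀X₂ + γ₁(X₁² − sX₂²))(X₁² − sX₂²) + X₂(3X₁² + sX₂²)`. -/
theorem stmt_13 (q : ℕ) (hq : IsPrimePow q) (hodd : Odd q)
    (F : Type*) [Field F] [Fintype F] [DecidableEq F] (hF : Fintype.card F = q)
    (s : F) (hs : ¬IsSquare s)
    (α₀ α₁ β₀ β₁ γ₀ γ₁ : F) (hγ₀ : γ₀ ≠ 0) (hγ₁ : γ₁ ≠ 0) :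
    (Finset.univ.filter fun p : F × F => p ≠ (0, 0) ∧
        (α₀ + β₀ * p.1 + s * β₁ * p.2 + γ₀ * (p.1 ^ 2 - s * p.2 ^ 2)) *
            (p.1 ^ 2 - s * p.2 ^ 2) + p.1 * (p.1 ^ 2 + 3 * s * p.2 ^ 2) = 0 ∧
        (α₁ + β₁ * p.1 + β₀ * p.2 + γ₁ * (p.1 ^ 2 - s * p.2 ^ 2)) *
            (p.1 ^ 2 - s * p.2 ^ 2) + p.2 * (3 * p.1 ^ 2 + s * p.2 ^ 2) = 0).card ≤ 6 :=
  stmt_13_general F s hs α₀ α₁ β₀ β₁ γ₀ γ₁ hγ₀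
end

section
/- Suppose α₀ = α₁ = γ₀ = γ₁ = 0. Then the number of pairs (x₁, x₂) ∈ 𝔽_q × 𝔽_q with (x₁, x₂) ≠ (0, 0) satisfying both A(x₁, x₂) = 0 and B(x₁, x₂) = 0 is either 0 or q−1. -/
/-!
Write `z = x₁ + x₂√s` in `F(√s)` and `b = β₀ + β₁√s`. Since `z ^ q = star z`, the pair `(A, B)` is
the coordinate vector of `b z ^ (q + 2) + z ^ 3 = z ^ 2 (z + b · star z)`. For `z ≠ 0` the system
`A = B = 0` is therefore the `F`-linear equation `z + b · star z = 0`, whose solutions form a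
proper subspace of the plane `F(√s)` (`1` and `√s` are not both solutions, as `2 ≠ 0`: in
characteristic `2` every element of `F` would be a square), so the number of nonzero solutions
is `q ^ 0 - 1` or `q ^ 1 - 1`.
-/

open Finset Module

theorem card_filter_ne_zero_mem_eq_zero_or_eq_card_sub_one {K V : Type*} [Field K] [Fintype K]
    [AddCommGroup V] [Module K V] [Fintype V] [DecidableEq V] (hV : finrank K V = 2)
    (W : Submodule K V) [DecidablePred (· ∈ W)] (hW : W ≠ ⊤) :
    #{v | v ≠ 0 ∧ v ∈ W} = 0 ∨ #{v | v ≠ 0 ∧ v ∈ W} = Fintype.card K - 1 := by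
  have : FiniteDimensional K V := Module.finite_of_finrank_eq_succ hV
  have hlt : finrank K W < 2 := hV ▸ Submodule.finrank_lt hW
  have hcard : #{v | v ≠ 0 ∧ v ∈ W} = Fintype.card K ^ finrank K W - 1 := by
    have : ({v | v ≠ 0 ∧ v ∈ W} : Finset V) = ({v | v ∈ W} : Finset V).erase 0 := by
      ext; simp [and_comm]
    rw [this, card_erase_of_mem (by simp), ← Fintype.card_subtype,
      card_eq_pow_finrank (K := K) (V := W)]
  interval_cases finrank K W <;> simp [hcard]

section

variable {F : Type*} [Field F]

/-- The map `z ↦ z + b · star z` on `F(√s) ≅ F × F`, where `b = β₀ + β₁√s`. -/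
def addMulStarMap (s β₀ β₁ : F) : F × F →ₗ[F] F × F :=
  ((1 + β₀) • LinearMap.fst F F F - (s * β₁) • LinearMap.snd F F F).prod
    (β₁ • LinearMap.fst F F F + (1 - β₀) • LinearMap.snd F F F)

theorem mem_ker_addMulStarMap {s β₀ β₁ x y : F} :
    (x, y) ∈ LinearMap.ker (addMulStarMap s β₀ β₁) ↔
      (1 + β₀) * x - s * β₁ * y = 0 ∧ β₁ * x + (1 - β₀) * y = 0 := by
  simp [addMulStarMap]

theorem ker_addMulStarMap_ne_top (s β₀ β₁ : F) (h2 : (2 : F) ≠ 0) :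
    LinearMap.ker (addMulStarMap s β₀ β₁) ≠ ⊤ := by
  intro htop
  have h₁ := mem_ker_addMulStarMap.mp (htop ▸ Submodule.mem_top : ((1, 0) : F × F) ∈ _)
  have h₂ := mem_ker_addMulStarMap.mp (htop ▸ Submodule.mem_top : ((0, 1) : F × F) ∈ _)
  exact h2 (by linear_combination h₁.1 + h₂.2)

theorem cubic_pair_eq_zero_iff_mem_ker_addMulStarMap {s : F} (hs : ¬IsSquare s) (β₀ β₁ : F)
    {x y : F} (hxy : (x, y) ≠ 0) :
    (β₀ * x + s * β₁ * y) * (x ^ 2 - s * y ^ 2) + x * (x ^ 2 + 3 * s * y ^ 2) = 0 ∧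
      (β₁ * x + β₀ * y) * (x ^ 2 - s * y ^ 2) + y * (3 * x ^ 2 + s * y ^ 2) = 0 ↔
    (x, y) ∈ LinearMap.ker (addMulStarMap s β₀ β₁) := by
  have : Fact (∀ r : F, r ^ 2 ≠ s + 0 * r) := ⟨fun r h => hs ⟨r, by linear_combination -h⟩⟩
  let z : QuadraticAlgebra F s 0 := ⟨x, y⟩
  let b : QuadraticAlgebra F s 0 := ⟨β₀, β₁⟩
  have hz : z ≠ 0 := fun h => hxy (by simpa [QuadraticAlgebra.ext_iff, z] using h)
  have hcubic : z ^ 2 * (z + b * star z) =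
      ⟨(β₀ * x + s * β₁ * y) * (x ^ 2 - s * y ^ 2) + x * (x ^ 2 + 3 * s * y ^ 2),
        (β₁ * x + β₀ * y) * (x ^ 2 - s * y ^ 2) + y * (3 * x ^ 2 + s * y ^ 2)⟩ := by
    ext <;> simp [z, b, pow_two] <;> ring
  have hlinear : z + b * star z = ⟨(1 + β₀) * x - s * β₁ * y, β₁ * x + (1 - β₀) * y⟩ := by
    ext <;> simp [z, b] <;> ring
  calc _ ↔ z ^ 2 * (z + b * star z) = 0 := by rw [hcubic, QuadraticAlgebra.ext_iff]; rfl
    _ ↔ z + b * star z = 0 := by simp [hz]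
    _ ↔ _ := by rw [hlinear, QuadraticAlgebra.ext_iff, mem_ker_addMulStarMap]; rfl

end

theorem stmt_15_general (q : ℕ)
    (F : Type*) [Field F] [Fintype F] [DecidableEq F] (hF : Fintype.card F = q)
    (s : F) (hs : ¬IsSquare s)
    (α₀ α₁ β₀ β₁ γ₀ γ₁ : F)
    (hα₀ : α₀ = 0) (hα₁ : α₁ = 0) (hγ₀ : γ₀ = 0) (hγ₁ : γ₁ = 0) :
    (Finset.univ.filter fun p : F × F => p ≠ (0, 0) ∧
        (α₀ + β₀ * p.1 + s * β₁ * p.2 + γ₀ * (p.1 ^ 2 - s * p.2 ^ 2)) *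
            (p.1 ^ 2 - s * p.2 ^ 2) + p.1 * (p.1 ^ 2 + 3 * s * p.2 ^ 2) = 0 ∧
        (α₁ + β₁ * p.1 + β₀ * p.2 + γ₁ * (p.1 ^ 2 - s * p.2 ^ 2)) *
            (p.1 ^ 2 - s * p.2 ^ 2) + p.2 * (3 * p.1 ^ 2 + s * p.2 ^ 2) = 0).card = 0 ∨
    (Finset.univ.filter fun p : F × F => p ≠ (0, 0) ∧
        (α₀ + β₀ * p.1 + s * β₁ * p.2 + γ₀ * (p.1 ^ 2 - s * p.2 ^ 2)) *
            (p.1 ^ 2 - s * p.2 ^ 2) + p.1 * (p.1 ^ 2 + 3 * s * p.2 ^ 2) = 0 ∧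
        (α₁ + β₁ * p.1 + β₀ * p.2 + γ₁ * (p.1 ^ 2 - s * p.2 ^ 2)) *
            (p.1 ^ 2 - s * p.2 ^ 2) + p.2 * (3 * p.1 ^ 2 + s * p.2 ^ 2) = 0).card = q - 1 := by
  classical
  subst hα₀ hα₁ hγ₀ hγ₁ hF
  have h2 : (2 : F) ≠ 0 := Ring.two_ne_zero fun h => hs (FiniteField.isSquare_of_char_two h s)
  have hsolutions : (Finset.univ.filter fun p : F × F => p ≠ (0, 0) ∧
        (0 + β₀ * p.1 + s * β₁ * p.2 + 0 * (p.1 ^ 2 - s * p.2 ^ 2)) *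
            (p.1 ^ 2 - s * p.2 ^ 2) + p.1 * (p.1 ^ 2 + 3 * s * p.2 ^ 2) = 0 ∧
        (0 + β₁ * p.1 + β₀ * p.2 + 0 * (p.1 ^ 2 - s * p.2 ^ 2)) *
            (p.1 ^ 2 - s * p.2 ^ 2) + p.2 * (3 * p.1 ^ 2 + s * p.2 ^ 2) = 0) =
      Finset.univ.filter fun p => p ≠ 0 ∧ p ∈ LinearMap.ker (addMulStarMap s β₀ β₁) := by
    refine filter_congr fun ⟨x, y⟩ _ => ?_
    simp only [zero_add, zero_mul, add_zero, Prod.zero_eq_mk]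
    exact and_congr_right (cubic_pair_eq_zero_iff_mem_ker_addMulStarMap hs β₀ β₁)
  rw [hsolutions]
  exact card_filter_ne_zero_mem_eq_zero_or_eq_card_sub_one (by simp)
    _ (ker_addMulStarMap_ne_top s β₀ β₁ h2)

/-- odd characteristic: Suppose `α₀ = α₁ = γ₀ = γ₁ = 0`. Then the number of
pairs `(x₁, x₂) ∈ 𝔽_q × 𝔽_q` with `(x₁, x₂) ≠ (0, 0)` satisfying both `A(x₁, x₂) = 0` and
`B(x₁, x₂) = 0` is either `0` or `q − 1`, where
`A = (α₀ + β₀X₁ + sβ₁X₂ + γ₀(X₁² − sX₂²))(X₁² − sX₂²) + X₁(X₁² + 3sX₂²)` and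
`B = (α₁ + β₁X₁ + β₀X₂ + γ₁(X₁² − sX₂²))(X₁² − sX₂²) + X₂(3X₁² + sX₂²)`. -/
theorem stmt_15 (q : ℕ) (hq : IsPrimePow q) (hodd : Odd q)
    (F : Type*) [Field F] [Fintype F] [DecidableEq F] (hF : Fintype.card F = q)
    (s : F) (hs : ¬IsSquare s)
    (α₀ α₁ β₀ β₁ γ₀ γ₁ : F)
    (hα₀ : α₀ = 0) (hα₁ : α₁ = 0) (hγ₀ : γ₀ = 0) (hγ₁ : γ₁ = 0) :
    (Finset.univ.filter fun p : F × F => p ≠ (0, 0) ∧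
        (α₀ + β₀ * p.1 + s * β₁ * p.2 + γ₀ * (p.1 ^ 2 - s * p.2 ^ 2)) *
            (p.1 ^ 2 - s * p.2 ^ 2) + p.1 * (p.1 ^ 2 + 3 * s * p.2 ^ 2) = 0 ∧
        (α₁ + β₁ * p.1 + β₀ * p.2 + γ₁ * (p.1 ^ 2 - s * p.2 ^ 2)) *
            (p.1 ^ 2 - s * p.2 ^ 2) + p.2 * (3 * p.1 ^ 2 + s * p.2 ^ 2) = 0).card = 0 ∨
    (Finset.univ.filter fun p : F × F => p ≠ (0, 0) ∧
        (α₀ + β₀ * p.1 + s * β₁ * p.2 + γ₀ * (p.1 ^ 2 - s * p.2 ^ 2)) *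
            (p.1 ^ 2 - s * p.2 ^ 2) + p.1 * (p.1 ^ 2 + 3 * s * p.2 ^ 2) = 0 ∧
        (α₁ + β₁ * p.1 + β₀ * p.2 + γ₁ * (p.1 ^ 2 - s * p.2 ^ 2)) *
            (p.1 ^ 2 - s * p.2 ^ 2) + p.2 * (3 * p.1 ^ 2 + s * p.2 ^ 2) = 0).card = q - 1 :=
  stmt_15_general q F hF s hs α₀ α₁ β₀ β₁ γ₀ γ₁ hα₀ hα₁ hγ₀ hγ₁
end

section
/- Let q ≥ 8 and let τ ∈ 𝔽_{q²} satisfy τ^q + τ = 1. For every (b₀, b₁, b₂, ε) ∈ 𝔽_{q²}⁴ with (b₀, b₁, b₂, ε) ≠ (0,0,0,0), the count N(b₀,b₁,b₂,ε) satisfies N ≤ 6 or N = q−1 or N = q+1. Consequently, every nonzero codeword of the m = 3 code C_𝓛(𝙳,𝙶) has weight equal to q²−q−2, equal to q²−q, or at least q²−7; in particular the third minimum weight of the code is at least q²−7, and the number of pairwise different nonzero weights is at most nine. -/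
/-!
Put `y = x ^ q`. A zero `x ≠ 0` makes `y` a root of a quadratic over `𝔽_{q²}`, and applying
`z ↦ z ^ q` (an involution with `y ↦ x`, `τ ↦ 1 - τ`) gives a second quadratic in `y`.
Eliminating `y` leaves a polynomial in `x` of degree at most `6` (at most `2` when `ε = 0`),
which is nonzero unless the equation collapses to a binomial `a * x ^ (q ± 1) = b`. Since
`q ± 1` divides `q² - 1 = #𝔽_{q²}ˣ`, such a binomial has either no root or exactly `q ± 1`.
-/

open Finset Polynomial

section FiniteField

variable {F : Type*} [Field F] [Fintype F]

theorem exists_isPrimitiveRoot_of_dvd_card_sub_one {d : ℕ} (hd : d ∣ Fintype.card F - 1) :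
    ∃ ζ : F, IsPrimitiveRoot ζ d := by
  classical
  obtain ⟨g, hg⟩ := IsCyclic.exists_ofOrder_eq_natCard (α := Fˣ)
  rw [Nat.card_eq_fintype_card, Fintype.card_units] at hg
  obtain ⟨e, he⟩ := hd
  have he0 : 0 < e := Nat.pos_of_mul_pos_left (he ▸ Nat.sub_pos_of_lt Fintype.one_lt_card)
  have hg' : IsPrimitiveRoot (g : F) (d * e) :=
    IsPrimitiveRoot.coe_units_iff.mpr (he ▸ hg ▸ IsPrimitiveRoot.orderOf g)
  exact ⟨_, by simpa [Nat.mul_div_cancel _ he0] using hg'.pow_of_dvd he0.ne' (dvd_mul_left e d)⟩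

theorem card_filter_mul_pow_eq_zero_or_eq [DecidableEq F] {d : ℕ} (hd : d ∣ Fintype.card F - 1)
    {a b : F} (hab : a ≠ 0 ∨ b ≠ 0) :
    #{x | x ≠ 0 ∧ a * x ^ d = b} = 0 ∨ #{x | x ≠ 0 ∧ a * x ^ d = b} = d := by
  obtain ⟨ζ, hζ⟩ := exists_isPrimitiveRoot_of_dvd_card_sub_one hd
  have hd0 : 0 < d := Nat.pos_of_dvd_of_pos hd (Nat.sub_pos_of_lt Fintype.one_lt_card)
  by_cases ha : a = 0
  · left
    simp [ha, eq_comm, hab.resolve_left (not_not.mpr ha)]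
  by_cases hb : b = 0
  · left
    simp [hb, ha, hd0.ne']
  have hroots : ({x | x ≠ 0 ∧ a * x ^ d = b} : Finset F) = (nthRoots d (b / a)).toFinset := by
    ext x
    simp only [mem_filter, mem_univ, true_and, Multiset.mem_toFinset, mem_nthRoots hd0,
      eq_div_iff ha, mul_comm a]
    refine ⟨And.right, fun h => ⟨?_, h⟩⟩
    rintro rfl
    simp [hd0.ne'] at h
    exact hb h.symm
  rw [hroots, Multiset.toFinset_card_of_nodup (hζ.nthRoots_nodup (div_ne_zero hb ha)),
    hζ.card_nthRoots]
  split_ifs <;> simp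

theorem exists_ringHom_eq_pow_of_dvd_card {q : ℕ} (hq : q ∣ Fintype.card F) :
    ∃ σ : F →+* F, ∀ z, σ z = z ^ q := by
  obtain ⟨p, hchar, n, hp, hcard⟩ := FiniteField.card' F
  obtain ⟨m, -, rfl⟩ := (Nat.dvd_prime_pow hp).mp (hcard ▸ hq)
  have : ExpChar F p := ExpChar.prime hp
  exact ⟨iterateFrobenius F p m, fun z => iterateFrobenius_def p m z⟩

theorem quadratic_resultant_eq_zero {R : Type*} [CommRing R] {A B C D E G y : R}
    (hf : A * y ^ 2 + B * y + C = 0) (hg : D * y ^ 2 + E * y + G = 0) :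
    (A * G - C * D) ^ 2 - (A * E - B * D) * (B * G - C * E) = 0 := by
  linear_combination ((A * E - B * D) * E + ((A * E - B * D) * y - (A * G - C * D)) * D) * hf
    - ((A * E - B * D) * B + ((A * E - B * D) * y - (A * G - C * D)) * A) * hg

section Hermitian

variable [DecidableEq F] {q : ℕ} {τ : F}

def codewordZeros (q : ℕ) (τ b₀ b₁ b₂ ε : F) : Finset F :=
  {x | x ≠ 0 ∧ τ * x ^ (q + 1) * (b₀ + b₁ * x + b₂ * τ * x ^ (q + 1)) + ε * x ^ 3 = 0}

omit [DecidableEq F] in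
theorem one_lt_of_card_eq_sq (hF : Fintype.card F = q ^ 2) : 1 < q := by
  have := hF ▸ Fintype.one_lt_card (α := F)
  by_contra! h
  interval_cases q <;> simp at this

omit [Fintype F] [DecidableEq F] in
theorem ne_zero_of_pow_add_self_eq_one (hq : q ≠ 0) (hτ : τ ^ q + τ = 1) : τ ≠ 0 := by
  rintro rfl
  simp [hq] at hτ

omit [Fintype F] [DecidableEq F] in
theorem one_sub_ne_zero_of_pow_add_self_eq_one (hτ : τ ^ q + τ = 1) : 1 - τ ≠ 0 := by
  intro h
  rw [← eq_of_sub_eq_zero h, one_pow, add_eq_left] at hτ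
  exact one_ne_zero hτ

/-- The second equation is the image of the first under `z ↦ z ^ q`. -/
theorem conj_eqs_of_mem_codewordZeros (hF : Fintype.card F = q ^ 2) (hτ : τ ^ q + τ = 1)
    {b₀ b₁ b₂ ε x : F} (hx : x ∈ codewordZeros q τ b₀ b₁ b₂ ε) :
    x ≠ 0 ∧ b₂ * τ ^ 2 * x * (x ^ q) ^ 2 + τ * (b₁ * x + b₀) * x ^ q + ε * x ^ 2 = 0 ∧
      ε ^ q * (x ^ q) ^ 2 + (1 - τ) * x * (b₂ ^ q * (1 - τ) * x + b₁ ^ q) * x ^ q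
        + (1 - τ) * b₀ ^ q * x = 0 := by
  obtain ⟨σ, hσ⟩ := exists_ringHom_eq_pow_of_dvd_card (hF ▸ Dvd.intro_left _ (sq q).symm)
  have hσσ : ∀ z : F, (z ^ q) ^ q = z := fun z => by
    rw [← pow_mul, ← sq, ← hF, FiniteField.pow_card]
  simp only [codewordZeros, mem_filter, mem_univ, true_and] at hx
  obtain ⟨hx0, hxeq⟩ := hx
  have h₁ : b₂ * τ ^ 2 * x * (x ^ q) ^ 2 + τ * (b₁ * x + b₀) * x ^ q + ε * x ^ 2 = 0 := by
    refine (mul_eq_zero.mp ?_).resolve_left hx0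
    rw [pow_succ] at hxeq
    linear_combination hxeq
  have h₂ := congrArg σ h₁
  simp only [map_add, map_mul, map_pow, map_zero] at h₂
  simp only [hσ, hσσ, eq_sub_of_add_eq hτ] at h₂
  exact ⟨hx0, h₁, by linear_combination h₂⟩

theorem card_codewordZeros_eq_zero_or_eq_sub_one (hF : Fintype.card F = q ^ 2)
    (hτ : τ ^ q + τ = 1) {b₁ ε : F} (h : b₁ ≠ 0 ∨ ε ≠ 0) :
    #(codewordZeros q τ 0 b₁ 0 ε) = 0 ∨ #(codewordZeros q τ 0 b₁ 0 ε) = q - 1 := by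
  have hq := one_lt_of_card_eq_sq hF
  have hτ0 := ne_zero_of_pow_add_self_eq_one (by omega) hτ
  have hset : codewordZeros q τ 0 b₁ 0 ε
      = ({x | x ≠ 0 ∧ (τ * b₁) * x ^ (q - 1) = -ε} : Finset F) := by
    refine filter_congr fun x _ => and_congr_right fun hx0 => ?_
    have hpow : x ^ (q + 1) * x = x ^ (q - 1) * x ^ 3 := by
      rw [← pow_succ, ← pow_add]
      congr 1
      omega
    have hfactor : τ * x ^ (q + 1) * (0 + b₁ * x + 0 * τ * x ^ (q + 1)) + ε * x ^ 3
        = x ^ 3 * (τ * b₁ * x ^ (q - 1) - -ε) := by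
      linear_combination τ * b₁ * hpow
    rw [hfactor, mul_eq_zero, sub_eq_zero, or_iff_right (pow_ne_zero 3 hx0)]
  rw [hset]
  exact card_filter_mul_pow_eq_zero_or_eq
    (by simpa [hF] using Dvd.intro_left _ (Nat.sq_sub_sq q 1).symm)
    (h.imp (mul_ne_zero hτ0) neg_ne_zero.mpr)

theorem card_codewordZeros_eq_zero_or_eq_add_one (hF : Fintype.card F = q ^ 2)
    (hτ : τ ^ q + τ = 1) {b₀ b₂ : F} (h : b₀ ≠ 0 ∨ b₂ ≠ 0) :
    #(codewordZeros q τ b₀ 0 b₂ 0) = 0 ∨ #(codewordZeros q τ b₀ 0 b₂ 0) = q + 1 := by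
  have hq := one_lt_of_card_eq_sq hF
  have hτ0 := ne_zero_of_pow_add_self_eq_one (by omega) hτ
  have hset : codewordZeros q τ b₀ 0 b₂ 0
      = ({x | x ≠ 0 ∧ (b₂ * τ) * x ^ (q + 1) = -b₀} : Finset F) := by
    refine filter_congr fun x _ => and_congr_right fun hx0 => ?_
    have hfactor : τ * x ^ (q + 1) * (b₀ + 0 * x + b₂ * τ * x ^ (q + 1)) + 0 * x ^ 3
        = τ * x ^ (q + 1) * (b₂ * τ * x ^ (q + 1) - -b₀) := by
      ring
    rw [hfactor, mul_eq_zero, sub_eq_zero, or_iff_right (mul_ne_zero hτ0 (pow_ne_zero _ hx0))]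
  rw [hset]
  exact card_filter_mul_pow_eq_zero_or_eq
    (by simpa [hF] using Dvd.intro _ (Nat.sq_sub_sq q 1).symm)
    (h.symm.imp (mul_ne_zero · hτ0) neg_ne_zero.mpr)

/-- The determinant of the two equations, linear in `y = x ^ q`, satisfied by a zero when
`ε = 0`. -/
noncomputable def codewordQuadratic (q : ℕ) (τ b₀ b₁ b₂ : F) : F[X] :=
  C (b₁ * b₂ ^ q * (1 - τ)) * X ^ 2
    + C (b₁ * b₁ ^ q + b₀ * b₂ ^ q * (1 - τ) - b₂ * τ * b₀ ^ q) * X + C (b₀ * b₁ ^ q)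

omit [Fintype F] [DecidableEq F] in
theorem codewordQuadratic_ne_zero (hτ : τ ^ q + τ = 1) {b₀ b₁ b₂ : F} (hb₁ : b₁ ≠ 0) :
    codewordQuadratic q τ b₀ b₁ b₂ ≠ 0 := by
  intro h
  have h₂ := congrArg (coeff · 2) h
  have h₁ := congrArg (coeff · 1) h
  simp only [codewordQuadratic, coeff_add, coeff_C_mul, coeff_X_pow, coeff_X, coeff_C] at h₁ h₂
  norm_num [one_sub_ne_zero_of_pow_add_self_eq_one hτ, hb₁] at h₁ h₂
  obtain ⟨rfl, hq⟩ := h₂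
  simp [hq, hb₁] at h₁

theorem eval_codewordQuadratic_eq_zero (hF : Fintype.card F = q ^ 2) (hτ : τ ^ q + τ = 1)
    {b₀ b₁ b₂ x : F} (hx : x ∈ codewordZeros q τ b₀ b₁ b₂ 0) :
    (codewordQuadratic q τ b₀ b₁ b₂).eval x = 0 := by
  have hq := one_lt_of_card_eq_sq hF
  have hτ0 := ne_zero_of_pow_add_self_eq_one (by omega) hτ
  have hτ1 := one_sub_ne_zero_of_pow_add_self_eq_one hτ
  obtain ⟨hx0, h₁, h₂⟩ := conj_eqs_of_mem_codewordZeros hF hτ hx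
  refine (mul_eq_zero.mp ?_).resolve_left
    (mul_ne_zero (mul_ne_zero (mul_ne_zero hτ0 hτ1) hx0) (pow_ne_zero q hx0))
  simp only [codewordQuadratic, eval_add, eval_mul, eval_pow, eval_C, eval_X]
  rw [zero_pow (by omega)] at h₂
  linear_combination
    (1 - τ) * x * (b₂ ^ q * (1 - τ) * x + b₁ ^ q) * h₁ - b₂ * τ ^ 2 * x * x ^ q * h₂

theorem card_codewordZeros_le_two (hF : Fintype.card F = q ^ 2) (hτ : τ ^ q + τ = 1)
    {b₀ b₁ b₂ : F} (hb₁ : b₁ ≠ 0) : #(codewordZeros q τ b₀ b₁ b₂ 0) ≤ 2 :=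
  (card_le_degree_of_subset_roots fun x hx => (mem_roots (codewordQuadratic_ne_zero hτ hb₁)).mpr
    (eval_codewordQuadratic_eq_zero hF hτ hx)).trans
    (by unfold codewordQuadratic; compute_degree!)

/-- `X * codewordSextic` is the resultant in `y` of the two quadratics of
`conj_eqs_of_mem_codewordZeros`. -/
noncomputable def codewordSextic (q : ℕ) (τ b₀ b₁ b₂ ε : F) : F[X] :=
  let u := C b₁ * X + C b₀
  let v := C (1 - τ) * (C (b₂ ^ q * (1 - τ)) * X + C (b₁ ^ q))
  C ((b₂ * τ ^ 2 * (1 - τ) * b₀ ^ q - ε * ε ^ q) ^ 2) * X ^ 3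
    - (C (b₂ * τ ^ 2) * X ^ 2 * v - C (τ * ε ^ q) * u)
      * (C (τ * (1 - τ) * b₀ ^ q) * u - C ε * X ^ 2 * v)

omit [Fintype F] [DecidableEq F] in
theorem natDegree_codewordSextic_le (b₀ b₁ b₂ ε : F) :
    (codewordSextic q τ b₀ b₁ b₂ ε).natDegree ≤ 6 := by
  simp only [codewordSextic]
  generalize b₀ ^ q = β₀, b₁ ^ q = β₁, b₂ ^ q = β₂, ε ^ q = η
  compute_degree!

omit [Fintype F] [DecidableEq F] in
theorem codewordSextic_ne_zero (hq : q ≠ 0) (hτ : τ ^ q + τ = 1) {b₀ b₁ b₂ ε : F} (hε : ε ≠ 0)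
    (h : b₀ ≠ 0 ∨ b₂ ≠ 0) : codewordSextic q τ b₀ b₁ b₂ ε ≠ 0 := by
  have hτ0 := ne_zero_of_pow_add_self_eq_one hq hτ
  have hτ1 := one_sub_ne_zero_of_pow_add_self_eq_one hτ
  intro h0
  rcases h with hb₀ | hb₂
  · have h₀ := congrArg (eval 0) h0
    simp [codewordSextic, hτ0, hτ1, hε, hb₀] at h₀
  · have h₆ := congrArg (coeff · (3 + 3)) h0
    have hβ₂ := pow_ne_zero q hb₂
    simp only [codewordSextic] at h₆
    generalize b₀ ^ q = β₀, b₁ ^ q = β₁, b₂ ^ q = β₂, ε ^ q = η at h₆ hβ₂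
    rw [coeff_sub, coeff_C_mul_X_pow, coeff_mul_add_eq_of_natDegree_le (by compute_degree!)
      (by compute_degree!)] at h₆
    simp only [mul_assoc, coeff_add, coeff_sub, coeff_C_mul, coeff_X_pow_mul', coeff_X, coeff_C,
      coeff_zero] at h₆
    norm_num [hb₂, hτ0, hτ1, hβ₂, hε] at h₆

theorem eval_codewordSextic_eq_zero (hF : Fintype.card F = q ^ 2) (hτ : τ ^ q + τ = 1)
    {b₀ b₁ b₂ ε x : F} (hx : x ∈ codewordZeros q τ b₀ b₁ b₂ ε) :
    (codewordSextic q τ b₀ b₁ b₂ ε).eval x = 0 := by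
  obtain ⟨hx0, h₁, h₂⟩ := conj_eqs_of_mem_codewordZeros hF hτ hx
  have hres := quadratic_resultant_eq_zero (A := b₂ * τ ^ 2 * x) (B := τ * (b₁ * x + b₀))
    (C := ε * x ^ 2) (D := ε ^ q) (E := (1 - τ) * x * (b₂ ^ q * (1 - τ) * x + b₁ ^ q))
    (G := (1 - τ) * b₀ ^ q * x) h₁ h₂
  refine (mul_eq_zero.mp ?_).resolve_left hx0
  simp only [codewordSextic, eval_sub, eval_mul, eval_add, eval_pow, eval_C, eval_X]
  linear_combination hres

theorem card_codewordZeros_le_six (hF : Fintype.card F = q ^ 2) (hτ : τ ^ q + τ = 1)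
    {b₀ b₁ b₂ ε : F} (hε : ε ≠ 0) (h : b₀ ≠ 0 ∨ b₂ ≠ 0) :
    #(codewordZeros q τ b₀ b₁ b₂ ε) ≤ 6 :=
  have hq := one_lt_of_card_eq_sq hF
  (card_le_degree_of_subset_roots fun _ hx =>
    (mem_roots (codewordSextic_ne_zero (by omega) hτ hε h)).mpr
      (eval_codewordSextic_eq_zero hF hτ hx)).trans (natDegree_codewordSextic_le b₀ b₁ b₂ ε)

theorem card_codewordZeros_le_six_or_eq (hF : Fintype.card F = q ^ 2) (hτ : τ ^ q + τ = 1)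
    {b₀ b₁ b₂ ε : F} (h : (b₀, b₁, b₂, ε) ≠ (0, 0, 0, 0)) :
    #(codewordZeros q τ b₀ b₁ b₂ ε) ≤ 6 ∨ #(codewordZeros q τ b₀ b₁ b₂ ε) = q - 1 ∨
      #(codewordZeros q τ b₀ b₁ b₂ ε) = q + 1 := by
  simp only [ne_eq, Prod.mk.injEq, not_and_or] at h
  by_cases hε : ε = 0
  · subst hε
    by_cases hb₁ : b₁ = 0
    · subst hb₁
      have : b₀ ≠ 0 ∨ b₂ ≠ 0 := by tauto
      rcases card_codewordZeros_eq_zero_or_eq_add_one hF hτ this with h' | h' <;> omega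
    · exact .inl ((card_codewordZeros_le_two hF hτ hb₁).trans (by norm_num))
  · by_cases hb : b₀ = 0 ∧ b₂ = 0
    · obtain ⟨rfl, rfl⟩ := hb
      rcases card_codewordZeros_eq_zero_or_eq_sub_one hF hτ (b₁ := b₁) (.inr hε) with h' | h' <;>
        omega
    · exact .inl (card_codewordZeros_le_six hF hτ hε (not_and_or.mp hb))

end Hermitian

end FiniteField

theorem sq_sub_one_sub_cases {q n : ℕ} (h : n ≤ 6 ∨ n = q - 1 ∨ n = q + 1) :
    q ^ 2 - 1 - n = q ^ 2 - q - 2 ∨ q ^ 2 - 1 - n = q ^ 2 - q ∨ q ^ 2 - 7 ≤ q ^ 2 - 1 - n := by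
  omega

theorem ncard_le_nine_of_forall_mem {q M : ℕ} {W : Set ℕ}
    (hW : ∀ w ∈ W, ∃ n, (n ≤ 6 ∨ n = q - 1 ∨ n = q + 1) ∧ w = M - n) : W.ncard ≤ 9 := by
  have hsub : W ⊆ (M - ·) '' ↑(insert (q - 1) (insert (q + 1) (range 7))) := by
    intro w hw
    obtain ⟨n, hn, rfl⟩ := hW w hw
    exact ⟨n, by simp only [coe_insert, coe_range, Set.mem_insert_iff, Set.mem_Iio]; omega, rfl⟩
  calc W.ncard ≤ _ := Set.ncard_le_ncard hsub ((finite_toSet _).image _)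
    _ ≤ _ := Set.ncard_image_le (finite_toSet _)
    _ ≤ 9 := by
      rw [Set.ncard_coe_finset]
      exact (card_insert_le _ _).trans (Nat.succ_le_succ ((card_insert_le _ _).trans (by simp)))

theorem stmt_17_general (q : ℕ)
    (F : Type*) [Field F] [Fintype F] [DecidableEq F] (hF : Fintype.card F = q ^ 2)
    (τ : F) (hτ : τ ^ q + τ = 1)
    (N : F → F → F → F → ℕ)
    (hN : ∀ b₀ b₁ b₂ ε : F, N b₀ b₁ b₂ ε =
      (Finset.univ.filter fun x : F => x ≠ 0 ∧
        τ * x ^ (q + 1) * (b₀ + b₁ * x + b₂ * τ * x ^ (q + 1)) + ε * x ^ 3 = 0).card) :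
    (∀ b₀ b₁ b₂ ε : F, (b₀, b₁, b₂, ε) ≠ (0, 0, 0, 0) →
      N b₀ b₁ b₂ ε ≤ 6 ∨ N b₀ b₁ b₂ ε = q - 1 ∨ N b₀ b₁ b₂ ε = q + 1) ∧
    (∀ b₀ b₁ b₂ ε : F, (b₀, b₁, b₂, ε) ≠ (0, 0, 0, 0) →
      q ^ 2 - 1 - N b₀ b₁ b₂ ε = q ^ 2 - q - 2 ∨
      q ^ 2 - 1 - N b₀ b₁ b₂ ε = q ^ 2 - q ∨
      q ^ 2 - 7 ≤ q ^ 2 - 1 - N b₀ b₁ b₂ ε) ∧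
    Set.ncard {w : ℕ | ∃ b₀ b₁ b₂ ε : F,
        (b₀, b₁, b₂, ε) ≠ (0, 0, 0, 0) ∧ w = q ^ 2 - 1 - N b₀ b₁ b₂ ε} ≤ 9 := by
  have hcount : ∀ b₀ b₁ b₂ ε : F, (b₀, b₁, b₂, ε) ≠ (0, 0, 0, 0) →
      N b₀ b₁ b₂ ε ≤ 6 ∨ N b₀ b₁ b₂ ε = q - 1 ∨ N b₀ b₁ b₂ ε = q + 1 := fun b₀ b₁ b₂ ε h =>
    hN b₀ b₁ b₂ ε ▸ card_codewordZeros_le_six_or_eq hF hτ h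
  refine ⟨hcount, fun b₀ b₁ b₂ ε h => sq_sub_one_sub_cases (hcount b₀ b₁ b₂ ε h),
    ncard_le_nine_of_forall_mem (q := q) (M := q ^ 2 - 1) ?_⟩
  rintro w ⟨b₀, b₁, b₂, ε, h, rfl⟩
  exact ⟨_, hcount b₀ b₁ b₂ ε h, rfl⟩

/-- Let `q ≥ 8` and `τ^q + τ = 1`. For every `(b₀, b₁, b₂, ε) ≠ (0,0,0,0)`,
the count `N(b₀,b₁,b₂,ε)` satisfies `N ≤ 6` or `N = q − 1` or `N = q + 1`. Consequently
every nonzero codeword of the `m = 3` code `C_𝓛(𝙳,𝙶)` has weight `q² − 1 − N` equal to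
`q² − q − 2`, equal to `q² − q`, or at least `q² − 7`; in particular the third minimum weight
is at least `q² − 7` and the number of pairwise different nonzero weights is at most nine. -/
theorem stmt_17 (q : ℕ) (hq : IsPrimePow q) (hq8 : 8 ≤ q)
    (F : Type*) [Field F] [Fintype F] [DecidableEq F] (hF : Fintype.card F = q ^ 2)
    (τ : F) (hτ : τ ^ q + τ = 1)
    (N : F → F → F → F → ℕ)
    (hN : ∀ b₀ b₁ b₂ ε : F, N b₀ b₁ b₂ ε =
      (Finset.univ.filter fun x : F => x ≠ 0 ∧
        τ * x ^ (q + 1) * (b₀ + b₁ * x + b₂ * τ * x ^ (q + 1)) + ε * x ^ 3 = 0).card) :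
    (∀ b₀ b₁ b₂ ε : F, (b₀, b₁, b₂, ε) ≠ (0, 0, 0, 0) →
      N b₀ b₁ b₂ ε ≤ 6 ∨ N b₀ b₁ b₂ ε = q - 1 ∨ N b₀ b₁ b₂ ε = q + 1) ∧
    (∀ b₀ b₁ b₂ ε : F, (b₀, b₁, b₂, ε) ≠ (0, 0, 0, 0) →
      q ^ 2 - 1 - N b₀ b₁ b₂ ε = q ^ 2 - q - 2 ∨
      q ^ 2 - 1 - N b₀ b₁ b₂ ε = q ^ 2 - q ∨
      q ^ 2 - 7 ≤ q ^ 2 - 1 - N b₀ b₁ b₂ ε) ∧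
    Set.ncard {w : ℕ | ∃ b₀ b₁ b₂ ε : F,
        (b₀, b₁, b₂, ε) ≠ (0, 0, 0, 0) ∧ w = q ^ 2 - 1 - N b₀ b₁ b₂ ε} ≤ 9 :=
  stmt_17_general q F hF τ hτ N hN
end
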